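/- arXiv:2311.18634 — 11 statements merged into one kernel-verified Lean document; each statement's English description precedes it below -/
import Mathlib

section
/- Let n ≥ 1 and let Ψ : ℝ^n → ℝ^n be a linear map with Ψ(L_n) ⊆ L_n, and suppose there exists an integer k ≥ 1 such that Ψ^k maps L_n \ {0} into the interior of L_n (i.e., Ψ is primitive). Then Ψ^n maps L_n \ {0} into the interior of L_n. -/
/-!
Let `B x y = x_t y_t - ⟪x_s, y_s⟫` be the Lorentz form and `Q x = B x x`, so that
`{Q ≥ 0} = L ∪ -L`, `Q > 0` on `int L` and `Q = 0` on `∂L`; a positive map `Ψ` preserves `{Q ≥ 0}`.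
If some power of `Ψ` is strictly positive, `Ψ` maps `int L` into `int L`: otherwise `Ψ` would
flatten all of `L` onto the boundary ray through `Ψ z`, and so would that power. Hence, if
`Ψ^{n+1} x` lies on `∂L`, so do `x, Ψ x, …, Ψ^{n+1} x`.

For `u, v, z ∈ ∂L` with images in `∂L`, applying `Q ≥ 0 ⇒ Q ∘ Ψ ≥ 0` to `a • u + b • v - z` for
well-chosen `a, b` shows that `B (Ψ u) (Ψ v) / B u v` is a single constant `μ`. By Cayley–Hamilton,
`x, …, Ψ^n x` span a subspace containing the whole orbit of `x`, and on it `Q ∘ Ψ = μ Q`. So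
`Q (Ψ^k x) = μ^k Q x = 0` for every `k`, whereas `Q > 0` on `int L`.
-/

open Metric Set

/-- The `(n+1)`-dimensional Lorentz cone
`L_{n+1} = {x ∈ ℝ^{n+1} : x_{n+1} ≥ sqrt (x_1^2 + ⋯ + x_n^2)}`. -/
def lorentzCone (n : ℕ) : Set (EuclideanSpace ℝ (Fin (n + 1))) :=
  {x | Real.sqrt (∑ i : Fin n, x (Fin.castSucc i) ^ 2) ≤ x (Fin.last n)}

open Filter Topology Module
open scoped RealInnerProductSpace

open Polynomial in
theorem Module.End.pow_apply_mem_span_image_pow_apply {K M : Type*} [Field K] [AddCommGroup M]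
    [Module K M] [FiniteDimensional K M] [Nontrivial M] (f : Module.End K M) (x : M) (k : ℕ) :
    (f ^ k) x ∈ Submodule.span K ((fun i => (f ^ i) x) '' Iio (finrank K M)) := by
  have hdeg : (X ^ k %ₘ f.charpoly).natDegree < finrank K M := by
    rw [← f.charpoly_natDegree]
    exact natDegree_modByMonic_lt _ f.charpoly_monic fun h =>
      finrank_pos.ne (by simpa [h] using f.charpoly_natDegree)
  rw [LinearMap.pow_eq_aeval_mod_charpoly, aeval_eq_sum_range' hdeg, LinearMap.sum_apply]
  exact Submodule.sum_mem _ fun i hi =>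
    Submodule.smul_mem _ _ (Submodule.subset_span ⟨i, Finset.mem_range.1 hi, rfl⟩)

theorem LinearMap.eq_of_mem_span₂ {R M N P : Type*} [CommSemiring R] [AddCommMonoid M]
    [AddCommMonoid N] [AddCommMonoid P] [Module R M] [Module R N] [Module R P]
    {B C : M →ₗ[R] N →ₗ[R] P} {s : Set M} {t : Set N}
    (h : ∀ x ∈ s, ∀ y ∈ t, B x y = C x y) {x : M} (hx : x ∈ Submodule.span R s)
    {y : N} (hy : y ∈ Submodule.span R t) : B x y = C x y := by
  have hxt : ∀ y ∈ t, B x y = C x y := fun y hy =>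
    LinearMap.eqOn_span (f := B.flip y) (g := C.flip y) (fun x hx => h x hx y hy) hx
  exact LinearMap.eqOn_span hxt hy

theorem exists_pos_sub_smul_mem_of_mem_interior {E : Type*} [AddCommGroup E] [Module ℝ E]
    [TopologicalSpace E] [IsTopologicalAddGroup E] [ContinuousSMul ℝ E] {s : Set E} {x : E}
    (hx : x ∈ interior s) (y : E) : ∃ t : ℝ, 0 < t ∧ x - t • y ∈ s := by
  have hcont : Tendsto (fun t : ℝ => x - t • y) (𝓝[>] 0) (𝓝 x) := by
    have : Continuous fun t : ℝ => x - t • y := by fun_prop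
    simpa using (this.tendsto 0).mono_left nhdsWithin_le_nhds
  have hpos : ∀ᶠ t in 𝓝[>] (0 : ℝ), 0 < t := self_mem_nhdsWithin
  exact (hpos.and (hcont.eventually (mem_interior_iff_mem_nhds.1 hx))).exists

theorem Module.End.mapsTo_pow {R M : Type*} [Semiring R] [AddCommMonoid M] [Module R M]
    {f : Module.End R M} {s : Set M} (h : MapsTo f s s) (k : ℕ) : MapsTo (f ^ k) s s := by
  rw [Module.End.coe_pow]
  exact h.iterate k

namespace LorentzCone

variable {n : ℕ}

def spatial : EuclideanSpace ℝ (Fin (n + 1)) →ₗ[ℝ] EuclideanSpace ℝ (Fin n) where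
  toFun x := WithLp.toLp 2 fun i => x i.castSucc
  map_add' _ _ := rfl
  map_smul' _ _ := rfl

@[simp] theorem spatial_apply (x : EuclideanSpace ℝ (Fin (n + 1))) (i : Fin n) :
    spatial x i = x i.castSucc := rfl

theorem continuous_spatial : Continuous (spatial (n := n)) :=
  spatial.continuous_of_finiteDimensional

theorem ext_spatial {x y : EuclideanSpace ℝ (Fin (n + 1))} (hs : spatial x = spatial y)
    (ht : x (Fin.last n) = y (Fin.last n)) : x = y := by
  ext i
  induction i using Fin.lastCases with
  | last => exact ht
  | cast i => exact congr($hs i)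

noncomputable def lorentzForm :
    EuclideanSpace ℝ (Fin (n + 1)) →ₗ[ℝ] EuclideanSpace ℝ (Fin (n + 1)) →ₗ[ℝ] ℝ :=
  (LinearMap.mul ℝ ℝ).compl₁₂ (EuclideanSpace.proj (𝕜 := ℝ) (Fin.last n)).toLinearMap
      (EuclideanSpace.proj (𝕜 := ℝ) (Fin.last n)).toLinearMap -
    (innerₗ _).compl₁₂ spatial spatial

theorem lorentzForm_apply (x y : EuclideanSpace ℝ (Fin (n + 1))) :
    lorentzForm x y = x (Fin.last n) * y (Fin.last n) - ⟪spatial x, spatial y⟫ := rfl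

theorem lorentzForm_comm (x y : EuclideanSpace ℝ (Fin (n + 1))) :
    lorentzForm x y = lorentzForm y x := by
  rw [lorentzForm_apply, lorentzForm_apply, mul_comm, real_inner_comm]

theorem lorentzForm_self (x : EuclideanSpace ℝ (Fin (n + 1))) :
    lorentzForm x x = x (Fin.last n) ^ 2 - ‖spatial x‖ ^ 2 := by
  rw [lorentzForm_apply, real_inner_self_eq_norm_sq, sq, sq]

theorem lorentzForm_self_smul_add_smul_sub {u v z : EuclideanSpace ℝ (Fin (n + 1))}
    (hu : lorentzForm u u = 0) (hv : lorentzForm v v = 0) (hz : lorentzForm z z = 0) (a b : ℝ) :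
    lorentzForm (a • u + b • v - z) (a • u + b • v - z) =
      2 * (a * b * lorentzForm u v - a * lorentzForm u z - b * lorentzForm v z) := by
  simp only [map_add, map_sub, map_smul, LinearMap.add_apply, LinearMap.sub_apply,
    LinearMap.smul_apply, smul_eq_mul, hu, hv, hz, lorentzForm_comm v u, lorentzForm_comm z u,
    lorentzForm_comm z v]
  ring

theorem mem_lorentzCone_iff {x : EuclideanSpace ℝ (Fin (n + 1))} :
    x ∈ lorentzCone n ↔ ‖spatial x‖ ≤ x (Fin.last n) := by
  simp [lorentzCone, EuclideanSpace.norm_eq]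

theorem isClosed_lorentzCone : IsClosed (lorentzCone n) := by
  rw [show lorentzCone n = {x | ‖spatial x‖ ≤ x (Fin.last n)} from
    Set.ext fun _ => mem_lorentzCone_iff]
  exact isClosed_le continuous_spatial.norm (EuclideanSpace.proj (Fin.last n)).continuous

theorem frontier_subset_lorentzCone : frontier (lorentzCone n) ⊆ lorentzCone n :=
  isClosed_lorentzCone.frontier_subset

theorem interior_lorentzCone :
    interior (lorentzCone n) = {x | ‖spatial x‖ < x (Fin.last n)} := by
  refine subset_antisymm (fun x hx => ?_) <|
    interior_maximal (fun x hx => mem_lorentzCone_iff.2 (le_of_lt hx))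
      (isOpen_lt continuous_spatial.norm (EuclideanSpace.proj (Fin.last n)).continuous)
  set e := EuclideanSpace.single (Fin.last n) (1 : ℝ)
  obtain ⟨t, ht, hxt⟩ := exists_pos_sub_smul_mem_of_mem_interior hx e
  have he : spatial e = 0 := by
    ext i
    simp [e, (Fin.castSucc_lt_last i).ne]
  rw [mem_lorentzCone_iff, map_sub, map_smul, he, smul_zero, sub_zero] at hxt
  simp only [e, PiLp.sub_apply, PiLp.smul_apply, PiLp.single_apply, if_true, smul_eq_mul,
    mul_one] at hxt
  exact hxt.trans_lt (sub_lt_self _ ht)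

theorem norm_spatial_eq_of_mem_frontier {x : EuclideanSpace ℝ (Fin (n + 1))}
    (hx : x ∈ frontier (lorentzCone n)) : ‖spatial x‖ = x (Fin.last n) := by
  rw [isClosed_lorentzCone.frontier_eq, interior_lorentzCone, Set.mem_sdiff,
    mem_lorentzCone_iff] at hx
  exact le_antisymm hx.1 (not_lt.1 hx.2)

theorem lorentzForm_self_eq_zero_of_mem_frontier {x : EuclideanSpace ℝ (Fin (n + 1))}
    (hx : x ∈ frontier (lorentzCone n)) : lorentzForm x x = 0 := by
  rw [lorentzForm_self, norm_spatial_eq_of_mem_frontier hx, sub_self]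

theorem lorentzForm_self_pos_of_mem_interior {x : EuclideanSpace ℝ (Fin (n + 1))}
    (hx : x ∈ interior (lorentzCone n)) : 0 < lorentzForm x x := by
  rw [interior_lorentzCone] at hx
  rw [lorentzForm_self, sub_pos]
  exact pow_lt_pow_left₀ hx (norm_nonneg _) two_ne_zero

theorem lorentzForm_nonneg {x y : EuclideanSpace ℝ (Fin (n + 1))} (hx : x ∈ lorentzCone n)
    (hy : y ∈ lorentzCone n) : 0 ≤ lorentzForm x y := by
  rw [mem_lorentzCone_iff] at hx hy
  rw [lorentzForm_apply, sub_nonneg]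
  calc ⟪spatial x, spatial y⟫ ≤ ‖spatial x‖ * ‖spatial y‖ := real_inner_le_norm _ _
    _ ≤ x (Fin.last n) * y (Fin.last n) :=
      mul_le_mul hx hy (norm_nonneg _) ((norm_nonneg _).trans hx)

theorem smul_mem_lorentzCone {c : ℝ} {x : EuclideanSpace ℝ (Fin (n + 1))} (hc : 0 ≤ c)
    (hx : x ∈ lorentzCone n) : c • x ∈ lorentzCone n := by
  rw [mem_lorentzCone_iff] at hx ⊢
  rw [map_smul, norm_smul, Real.norm_of_nonneg hc, PiLp.smul_apply, smul_eq_mul]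
  exact mul_le_mul_of_nonneg_left hx hc

theorem eq_zero_of_mem_lorentzCone_of_neg_mem {x : EuclideanSpace ℝ (Fin (n + 1))}
    (hx : x ∈ lorentzCone n) (hnx : -x ∈ lorentzCone n) : x = 0 := by
  rw [mem_lorentzCone_iff] at hx
  rw [mem_lorentzCone_iff, map_neg, norm_neg, PiLp.neg_apply] at hnx
  have ht : x (Fin.last n) = 0 := by linarith [norm_nonneg (spatial x)]
  exact ext_spatial (norm_eq_zero.1 (le_antisymm (ht ▸ hx) (norm_nonneg _))) ht

theorem mem_lorentzCone_or_neg_mem_of_lorentzForm_self_nonneg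
    {x : EuclideanSpace ℝ (Fin (n + 1))} (hx : 0 ≤ lorentzForm x x) :
    x ∈ lorentzCone n ∨ -x ∈ lorentzCone n := by
  rw [lorentzForm_self, sub_nonneg, sq_le_sq, abs_norm] at hx
  rw [mem_lorentzCone_iff, mem_lorentzCone_iff, map_neg, norm_neg, PiLp.neg_apply]
  rcases abs_cases (x (Fin.last n)) with ⟨h, -⟩ | ⟨h, -⟩
  · exact .inl (h ▸ hx)
  · exact .inr (h ▸ hx)

theorem exists_eq_smul_of_lorentzForm_eq_zero {v w : EuclideanSpace ℝ (Fin (n + 1))}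
    (hv : v ∈ lorentzCone n) (hw : w ∈ frontier (lorentzCone n)) (hw0 : w ≠ 0)
    (h : lorentzForm v w = 0) : ∃ t : ℝ, v = t • w := by
  have hwt := norm_spatial_eq_of_mem_frontier hw
  have hwpos : 0 < w (Fin.last n) := by
    refine (hwt ▸ norm_nonneg _).lt_of_ne fun h0 => hw0 (ext_spatial ?_ h0.symm)
    rw [map_zero, ← norm_eq_zero, hwt, h0]
  rw [mem_lorentzCone_iff] at hv
  rw [lorentzForm_apply, sub_eq_zero] at h
  -- `h` forces equality in the Cauchy–Schwarz inequality for the spatial parts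
  have hvt : ‖spatial v‖ = v (Fin.last n) := by
    have hcs := real_inner_le_norm (spatial v) (spatial w)
    rw [← h, hwt] at hcs
    exact le_antisymm hv (le_of_mul_le_mul_right hcs hwpos)
  have hpar : ‖spatial w‖ • spatial v = ‖spatial v‖ • spatial w :=
    inner_eq_norm_mul_iff_real.1 (by rw [← h, hvt, hwt])
  refine ⟨v (Fin.last n) / w (Fin.last n), ext_spatial ?_ ?_⟩
  · rw [map_smul, div_eq_inv_mul, mul_smul, ← hvt, ← hpar, hwt, smul_smul,
      inv_mul_cancel₀ hwpos.ne', one_smul]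
  · rw [PiLp.smul_apply, smul_eq_mul, div_mul_cancel₀ _ hwpos.ne']

theorem exists_eq_smul_of_sub_mem {v w : EuclideanSpace ℝ (Fin (n + 1))}
    (hw : w ∈ frontier (lorentzCone n)) (hv : v ∈ lorentzCone n)
    (hwv : w - v ∈ lorentzCone n) : ∃ t : ℝ, v = t • w := by
  rcases eq_or_ne w 0 with rfl | hw0
  · rw [zero_sub] at hwv
    exact ⟨0, by rw [smul_zero, eq_zero_of_mem_lorentzCone_of_neg_mem hv hwv]⟩
  have hwL := frontier_subset_lorentzCone hw
  have hB := lorentzForm_nonneg hwv hwL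
  rw [map_sub, LinearMap.sub_apply, lorentzForm_self_eq_zero_of_mem_frontier hw, zero_sub,
    neg_nonneg] at hB
  exact exists_eq_smul_of_lorentzForm_eq_zero hv hw hw0 (hB.antisymm (lorentzForm_nonneg hv hwL))

section Map

variable {Ψ : Module.End ℝ (EuclideanSpace ℝ (Fin (n + 1)))}

variable (Ψ) in
def frontierToFrontier : Set (EuclideanSpace ℝ (Fin (n + 1))) :=
  frontier (lorentzCone n) ∩ Ψ ⁻¹' frontier (lorentzCone n)

theorem lorentzForm_self_map_nonneg (hΨ : MapsTo Ψ (lorentzCone n) (lorentzCone n))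
    {x : EuclideanSpace ℝ (Fin (n + 1))} (hx : 0 ≤ lorentzForm x x) :
    0 ≤ lorentzForm (Ψ x) (Ψ x) := by
  rcases mem_lorentzCone_or_neg_mem_of_lorentzForm_self_nonneg hx with hx | hx
  · exact lorentzForm_nonneg (hΨ hx) (hΨ hx)
  · simpa using lorentzForm_nonneg (hΨ hx) (hΨ hx)

theorem mapsTo_interior_of_pow_mem_interior (hΨ : MapsTo Ψ (lorentzCone n) (lorentzCone n))
    {k : ℕ} (hk : 1 ≤ k)
    (hprim : ∀ x ∈ lorentzCone n, x ≠ 0 → (Ψ ^ k) x ∈ interior (lorentzCone n)) :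
    MapsTo Ψ (interior (lorentzCone n)) (interior (lorentzCone n)) := by
  intro z hz
  have hzL := interior_subset hz
  by_contra hΨz
  have hfront : Ψ z ∈ frontier (lorentzCone n) :=
    isClosed_lorentzCone.frontier_eq ▸ ⟨hΨ hzL, hΨz⟩
  -- `z - t • y ∈ L` for some `t > 0`, so `Ψ` maps every `y ∈ L` onto the boundary ray of `Ψ z`
  have hray : ∀ y ∈ lorentzCone n, ∃ c : ℝ, Ψ y = c • Ψ z := by
    intro y hy
    obtain ⟨t, ht, hzt⟩ := exists_pos_sub_smul_mem_of_mem_interior hz y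
    obtain ⟨c, hc⟩ := exists_eq_smul_of_sub_mem hfront (smul_mem_lorentzCone ht.le (hΨ hy))
      (by simpa using hΨ hzt)
    exact ⟨t⁻¹ * c, by rw [mul_smul, ← hc, inv_smul_smul₀ ht.ne']⟩
  obtain ⟨k, rfl⟩ := Nat.exists_eq_add_of_le' hk
  obtain ⟨c, hc⟩ := hray _ (Module.End.mapsTo_pow hΨ k hzL)
  have hz0 : z ≠ 0 := by
    rintro rfl
    simpa using lorentzForm_self_pos_of_mem_interior hz
  have hpos := lorentzForm_self_pos_of_mem_interior (hprim z hzL hz0)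
  rw [pow_succ', Module.End.mul_apply, hc] at hpos
  simp [lorentzForm_self_eq_zero_of_mem_frontier hfront] at hpos

theorem lorentzForm_map_mul_le (hΨ : MapsTo Ψ (lorentzCone n) (lorentzCone n))
    {u v z : EuclideanSpace ℝ (Fin (n + 1))} (hu : u ∈ frontierToFrontier Ψ)
    (hv : v ∈ frontierToFrontier Ψ) (hz : z ∈ frontierToFrontier Ψ) :
    lorentzForm (Ψ u) (Ψ z) * lorentzForm u v ≤ lorentzForm (Ψ u) (Ψ v) * lorentzForm u z := by
  have hL := frontier_subset_lorentzCone (n := n)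
  set β := lorentzForm u v
  set γ := lorentzForm u z
  set δ := lorentzForm v z
  set β' := lorentzForm (Ψ u) (Ψ v)
  set γ' := lorentzForm (Ψ u) (Ψ z)
  set δ' := lorentzForm (Ψ v) (Ψ z)
  have hβ : 0 ≤ β := lorentzForm_nonneg (hL hu.1) (hL hv.1)
  have hγ : 0 ≤ γ := lorentzForm_nonneg (hL hu.1) (hL hz.1)
  have hδ : 0 ≤ δ := lorentzForm_nonneg (hL hv.1) (hL hz.1)
  have hβ' : 0 ≤ β' := lorentzForm_nonneg (hL hu.2) (hL hv.2)
  have hγ' : 0 ≤ γ' := lorentzForm_nonneg (hL hu.2) (hL hz.2)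
  have hδ' : 0 ≤ δ' := lorentzForm_nonneg (hL hv.2) (hL hz.2)
  by_contra! hlt
  have hβpos : 0 < β := by
    refine hβ.lt_of_ne fun h0 => ?_
    rw [← h0, mul_zero] at hlt
    exact (mul_nonneg hβ' hγ).not_gt hlt
  -- the mediant `b` of `γ / β` and `γ' / β'` satisfies `b * β > γ` and `b * β' < γ'`
  set b := (γ + γ') / (β + β')
  have hb : 0 ≤ b := by positivity
  have hbβ : 0 < b * β - γ := by
    rw [div_mul_eq_mul_div, sub_pos, lt_div_iff₀ (by positivity)]
    linarith
  have hbβ' : b * β' - γ' < 0 := by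
    rw [div_mul_eq_mul_div, sub_neg, div_lt_iff₀ (by positivity)]
    linarith
  set a := (b * δ + 1) / (b * β - γ)
  have ha : 0 < a := by positivity
  have hab : a * (b * β - γ) = b * δ + 1 := div_mul_cancel₀ _ hbβ.ne'
  have hQ : ∀ x ∈ frontier (lorentzCone n), lorentzForm x x = 0 := fun _ =>
    lorentzForm_self_eq_zero_of_mem_frontier
  have hw := lorentzForm_self_smul_add_smul_sub (hQ _ hu.1) (hQ _ hv.1) (hQ _ hz.1) a b
  have hΨw := lorentzForm_self_smul_add_smul_sub (hQ _ hu.2) (hQ _ hv.2) (hQ _ hz.2) a b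
  have hnonneg := lorentzForm_self_map_nonneg hΨ (x := a • u + b • v - z) (by rw [hw]; linarith)
  rw [map_sub, map_add, map_smul, map_smul, hΨw] at hnonneg
  linarith [mul_nonneg hb hδ', mul_neg_of_pos_of_neg ha hbβ']

theorem lorentzForm_map_mul_eq (hΨ : MapsTo Ψ (lorentzCone n) (lorentzCone n))
    {u v z : EuclideanSpace ℝ (Fin (n + 1))} (hu : u ∈ frontierToFrontier Ψ)
    (hv : v ∈ frontierToFrontier Ψ) (hz : z ∈ frontierToFrontier Ψ) :
    lorentzForm (Ψ u) (Ψ z) * lorentzForm u v = lorentzForm (Ψ u) (Ψ v) * lorentzForm u z :=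
  (lorentzForm_map_mul_le hΨ hu hv hz).antisymm (lorentzForm_map_mul_le hΨ hu hz hv)

theorem exists_forall_lorentzForm_map_eq_mul (hΨ : MapsTo Ψ (lorentzCone n) (lorentzCone n))
    {u : EuclideanSpace ℝ (Fin (n + 1))} (hu : u ∈ frontierToFrontier Ψ) (hu0 : u ≠ 0) :
    ∃ μ : ℝ, ∀ z ∈ frontierToFrontier Ψ, lorentzForm (Ψ u) (Ψ z) = μ * lorentzForm u z := by
  by_cases h : ∃ v ∈ frontierToFrontier Ψ, lorentzForm u v ≠ 0
  · obtain ⟨v, hv, huv⟩ := h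
    refine ⟨lorentzForm (Ψ u) (Ψ v) / lorentzForm u v, fun z hz => ?_⟩
    rw [div_mul_eq_mul_div, eq_div_iff huv]
    exact lorentzForm_map_mul_eq hΨ hu hv hz
  · push Not at h
    refine ⟨0, fun z hz => ?_⟩
    obtain ⟨t, rfl⟩ := exists_eq_smul_of_lorentzForm_eq_zero
      (frontier_subset_lorentzCone hz.1) hu.1 hu0 (lorentzForm_comm u z ▸ h z hz)
    simp [lorentzForm_self_eq_zero_of_mem_frontier hu.2]

theorem lorentzForm_map_eq_mul_of_forall (hΨ : MapsTo Ψ (lorentzCone n) (lorentzCone n))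
    {u : EuclideanSpace ℝ (Fin (n + 1))} (hu : u ∈ frontierToFrontier Ψ) (hu0 : u ≠ 0) {μ : ℝ}
    (hμ : ∀ z ∈ frontierToFrontier Ψ, lorentzForm (Ψ u) (Ψ z) = μ * lorentzForm u z)
    {v z : EuclideanSpace ℝ (Fin (n + 1))} (hv : v ∈ frontierToFrontier Ψ)
    (hz : z ∈ frontierToFrontier Ψ) :
    lorentzForm (Ψ v) (Ψ z) = μ * lorentzForm v z := by
  by_cases hvu : lorentzForm v u = 0
  · obtain ⟨t, rfl⟩ :=
      exists_eq_smul_of_lorentzForm_eq_zero (frontier_subset_lorentzCone hv.1) hu.1 hu0 hvu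
    simp only [map_smul, LinearMap.smul_apply, hμ z hz, smul_eq_mul]
    ring
  · apply mul_right_cancel₀ hvu
    rw [lorentzForm_map_mul_eq hΨ hv hu hz, lorentzForm_comm (Ψ v), hμ v hv, lorentzForm_comm u]
    ring

theorem lorentzForm_self_pow_apply_eq_zero (hΨ : MapsTo Ψ (lorentzCone n) (lorentzCone n))
    {x : EuclideanSpace ℝ (Fin (n + 1))} (hx0 : x ≠ 0)
    (horbit : ∀ i < n + 1, (Ψ ^ i) x ∈ frontierToFrontier Ψ) (m : ℕ) :
    lorentzForm ((Ψ ^ m) x) ((Ψ ^ m) x) = 0 := by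
  have hx : x ∈ frontierToFrontier Ψ := by simpa using horbit 0 n.succ_pos
  obtain ⟨μ, hμ⟩ := exists_forall_lorentzForm_map_eq_mul hΨ hx hx0
  set K := Submodule.span ℝ ((fun i => (Ψ ^ i) x) '' Iio (n + 1))
  have hK : ∀ v ∈ K, ∀ w ∈ K, lorentzForm (Ψ v) (Ψ w) = μ * lorentzForm v w := by
    intro v hv w hw
    refine LinearMap.eq_of_mem_span₂ (B := lorentzForm.compl₁₂ Ψ Ψ) (C := μ • lorentzForm)
      ?_ hv hw
    rintro _ ⟨i, hi, rfl⟩ _ ⟨j, hj, rfl⟩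
    exact lorentzForm_map_eq_mul_of_forall hΨ hx hx0 hμ (horbit i hi) (horbit j hj)
  have hmem : ∀ m, (Ψ ^ m) x ∈ K := by
    simpa [finrank_euclideanSpace_fin] using Module.End.pow_apply_mem_span_image_pow_apply Ψ x
  induction m with
  | zero => simpa using lorentzForm_self_eq_zero_of_mem_frontier hx.1
  | succ m ih => rw [pow_succ', Module.End.mul_apply, hK _ (hmem m) _ (hmem m), ih, mul_zero]

end Map

end LorentzCone

open LorentzCone in
/-- Any primitive map of the `(n+1)`-dimensional Lorentz cone (`n + 1 ≥ 1`) has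
primitivity index at most `n + 1`. -/
theorem lorentzCone_primitivity_index_le
    (n : ℕ) (Ψ : Module.End ℝ (EuclideanSpace ℝ (Fin (n + 1))))
    (hpos : ∀ x ∈ lorentzCone n, Ψ x ∈ lorentzCone n)
    (hprim : ∃ k : ℕ, 1 ≤ k ∧
      ∀ x ∈ lorentzCone n, x ≠ 0 → (Ψ ^ k) x ∈ interior (lorentzCone n)) :
    ∀ x ∈ lorentzCone n, x ≠ 0 → (Ψ ^ (n + 1)) x ∈ interior (lorentzCone n) := by
  obtain ⟨k, hk, hprim⟩ := hprim
  have hΨ : MapsTo Ψ (lorentzCone n) (lorentzCone n) := hpos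
  have hint := mapsTo_interior_of_pow_mem_interior hΨ hk hprim
  intro x hx hx0
  by_contra hlast
  have hfront : ∀ i ≤ n + 1, (Ψ ^ i) x ∈ frontier (lorentzCone n) := by
    refine fun i hi => isClosed_lorentzCone.frontier_eq ▸
      ⟨Module.End.mapsTo_pow hΨ i hx, fun hxi => hlast ?_⟩
    have := Module.End.mapsTo_pow hint (n + 1 - i) hxi
    rwa [← Module.End.mul_apply, ← pow_add, Nat.sub_add_cancel hi] at this
  have horbit : ∀ i < n + 1, (Ψ ^ i) x ∈ frontierToFrontier Ψ := fun i hi =>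
    ⟨hfront i hi.le, by
      rw [mem_preimage, ← Module.End.mul_apply, ← pow_succ']
      exact hfront (i + 1) hi⟩
  exact (lorentzForm_self_pos_of_mem_interior (hprim x hx hx0)).ne'
    (lorentzForm_self_pow_apply_eq_zero hΨ hx0 horbit k)
end

section
/- For every integer n ≥ 2 there exists a linear map Ψ : ℝ^n → ℝ^n with Ψ(L_n) ⊆ L_n such that Ψ^n maps L_n \ {0} into the interior of L_n but Ψ^{n-1} does not map L_n \ {0} into the interior of L_n (i.e., Ψ is primitive with primitivity index exactly n). -/
/-!
Let `Q(x) = t² - ∑ xᵢ²` be the Lorentz form and, with `r = 1/√2`, `s = r^(n+2)` and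
`c² + s² = 1/2`, let `Ψ(x₀, …, xₙ, t) = (-(s xₙ + c t), r x₀, …, r xₙ₋₁, t)`. Completing the square
gives `Q(Ψx) = Q(x)/2 + (c xₙ - s t)²`, so `Ψ` preserves the cone, and `Ψᵏx` lies on its boundary
only if `Q` and the defect `c xₙ - s t` vanish at `Ψʲx` for every `j < k`.
For `k = n + 2` this is impossible for `x ≠ 0`: the shift carries the new coordinate
`-(s xₙ + c t)` of `Ψx` to position `n` in `n` more steps, so the defect cannot vanish both at `x`
and at `Ψⁿ⁺¹x`. For `k = n + 1` the isotropic vector `(r², r³, …, rⁿ⁺², c)` is a witness: its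
`n`-th coordinate after `j ≤ n` steps is `rʲ · rⁿ⁻ʲ⁺² = s`, so its defect stays zero.
-/

open Metric Set

noncomputable section

section LorentzForm

variable {m : ℕ}

def lorentzForm (x : EuclideanSpace ℝ (Fin (m + 1))) : ℝ :=
  x (Fin.last m) ^ 2 - ∑ i : Fin m, x (Fin.castSucc i) ^ 2

theorem mem_lorentzCone_iff {x : EuclideanSpace ℝ (Fin (m + 1))} :
    x ∈ lorentzCone m ↔ 0 ≤ lorentzForm x ∧ 0 ≤ x (Fin.last m) := by
  rw [lorentzCone, mem_ofPred_eq, Real.sqrt_le_iff, lorentzForm, sub_nonneg, and_comm]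

theorem mem_interior_lorentzCone_iff {x : EuclideanSpace ℝ (Fin (m + 1))} :
    x ∈ interior (lorentzCone m) ↔ 0 < lorentzForm x ∧ 0 < x (Fin.last m) := by
  refine ⟨fun hx => ?_, fun hx => ?_⟩
  · -- moving `x` down the time axis keeps it in the cone for a while
    set e := EuclideanSpace.single (Fin.last m) (1 : ℝ)
    have hpath : Continuous fun ε : ℝ => x - ε • e := by fun_prop
    obtain ⟨ε, hεx, hε⟩ := ((hpath.tendsto' 0 x (by simp)).eventually
      (mem_interior_iff_mem_nhds.1 hx) |>.filter_mono nhdsWithin_le_nhds |>.and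
      (self_mem_nhdsWithin (s := Ioi 0))).exists
    replace hεx : x - ε • e ∈ lorentzCone m := hεx
    rw [mem_lorentzCone_iff, lorentzForm] at hεx
    simp only [PiLp.sub_apply, PiLp.smul_apply, PiLp.single_eq_same, smul_eq_mul, mul_one,
      ne_eq, Fin.castSucc_ne_last, not_false_eq_true, PiLp.single_eq_of_ne, mul_zero, sub_zero,
      sub_nonneg, e] at hεx
    obtain ⟨hspace, hεt⟩ := hεx
    rw [lorentzForm]
    constructor <;> nlinarith
  · have hopen : IsOpen {y : EuclideanSpace ℝ (Fin (m + 1)) |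
        0 < lorentzForm y ∧ 0 < y (Fin.last m)} := by
      have hQ : Continuous fun y : EuclideanSpace ℝ (Fin (m + 1)) => lorentzForm y := by
        unfold lorentzForm; fun_prop
      exact (isOpen_lt continuous_const hQ).inter (isOpen_lt continuous_const
        (by fun_prop : Continuous fun y : EuclideanSpace ℝ (Fin (m + 1)) => y (Fin.last m)))
    exact interior_maximal (fun y hy => mem_lorentzCone_iff.2 ⟨hy.1.le, hy.2.le⟩) hopen hx

theorem last_pos_of_mem_lorentzCone {x : EuclideanSpace ℝ (Fin (m + 1))}
    (hx : x ∈ lorentzCone m) (hx0 : x ≠ 0) : 0 < x (Fin.last m) := by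
  obtain ⟨hQ, ht⟩ := mem_lorentzCone_iff.1 hx
  have hnorm : ‖x‖ ^ 2 = x (Fin.last m) ^ 2 + (x (Fin.last m) ^ 2 - lorentzForm x) := by
    rw [EuclideanSpace.real_norm_sq_eq, Fin.sum_univ_castSucc, lorentzForm]; ring
  refine ht.lt_of_ne fun h => hx0 (norm_eq_zero.1 ?_)
  nlinarith [norm_nonneg x]

end LorentzForm

namespace LorentzShift

variable (n : ℕ)

def r : ℝ := Real.sqrt (1 / 2)

def s : ℝ := r ^ (n + 2)

def c : ℝ := Real.sqrt (1 / 2 - s n ^ 2)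

theorem r_pos : 0 < r := Real.sqrt_pos.2 (by norm_num)

theorem r_sq : r ^ 2 = 1 / 2 := Real.sq_sqrt (by norm_num)

theorem s_pos : 0 < s n := pow_pos r_pos _

theorem s_sq : s n ^ 2 = (1 / 2) ^ (n + 2) := by
  rw [s, ← pow_mul, mul_comm, pow_mul, r_sq]

theorem s_sq_lt_half : s n ^ 2 < 1 / 2 := by
  rw [s_sq]
  exact pow_lt_self_of_lt_one₀ (by norm_num) (by norm_num) (by omega)

theorem c_pos : 0 < c n := Real.sqrt_pos.2 (by linarith [s_sq_lt_half n])

theorem c_sq_add_s_sq : c n ^ 2 + s n ^ 2 = 1 / 2 := by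
  rw [c, Real.sq_sqrt (by linarith [s_sq_lt_half n])]; ring

def psiFun (x : EuclideanSpace ℝ (Fin (n + 2))) : EuclideanSpace ℝ (Fin (n + 2)) :=
  WithLp.toLp 2 <| Fin.snoc (α := fun _ => ℝ)
    (Fin.cons (α := fun _ => ℝ) (-(s n * x (Fin.castSucc (Fin.last n)) + c n * x (Fin.last _)))
      fun k => r * x (Fin.castSucc (Fin.castSucc k)))
    (x (Fin.last _))

def psi : Module.End ℝ (EuclideanSpace ℝ (Fin (n + 2))) where
  toFun := psiFun n
  map_add' x y := by
    ext i
    induction i using Fin.lastCases with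
    | last => simp [psiFun]
    | cast i => induction i using Fin.cases <;> simp [psiFun, -Fin.castSucc_succ] <;> ring
  map_smul' a x := by
    ext i
    induction i using Fin.lastCases with
    | last => simp [psiFun]
    | cast i => induction i using Fin.cases <;> simp [psiFun, -Fin.castSucc_succ] <;> ring

variable {n}

@[simp] theorem psi_apply_last (x : EuclideanSpace ℝ (Fin (n + 2))) :
    psi n x (Fin.last _) = x (Fin.last _) := by
  simp [psi, psiFun]

theorem psi_apply_zero (x : EuclideanSpace ℝ (Fin (n + 2))) :
    psi n x 0 = -(s n * x (Fin.castSucc (Fin.last n)) + c n * x (Fin.last _)) := by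
  change psiFun n x (Fin.castSucc 0) = _
  simp only [psiFun, PiLp.toLp_apply, Fin.snoc_castSucc, Fin.cons_zero]

theorem psi_apply_mk_succ (x : EuclideanSpace ℝ (Fin (n + 2))) {i : ℕ} (hi : i < n) :
    psi n x ⟨i + 1, by omega⟩ = r * x ⟨i, by omega⟩ := by
  change psiFun n x (Fin.castSucc (Fin.succ ⟨i, hi⟩)) = _
  simp only [psiFun, PiLp.toLp_apply, Fin.snoc_castSucc, Fin.cons_succ]
  rfl

@[simp] theorem psi_pow_apply_last (k : ℕ) (x : EuclideanSpace ℝ (Fin (n + 2))) :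
    (psi n ^ k) x (Fin.last _) = x (Fin.last _) := by
  induction k with
  | zero => rfl
  | succ k ih => rw [pow_succ', Module.End.mul_apply, psi_apply_last, ih]

theorem psi_pow_apply_mk_add (y : EuclideanSpace ℝ (Fin (n + 2))) (i : ℕ) :
    ∀ j (h : i + j ≤ n), (psi n ^ j) y ⟨i + j, by omega⟩ = r ^ j * y ⟨i, by omega⟩
  | 0, _ => by simp
  | j + 1, h => by
    rw [pow_succ', Module.End.mul_apply, pow_succ', mul_assoc,
      ← psi_pow_apply_mk_add y i j (by omega), ← psi_apply_mk_succ _ (by omega)]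
    rfl

variable (n) in
def defect (x : EuclideanSpace ℝ (Fin (n + 2))) : ℝ :=
  c n * x (Fin.castSucc (Fin.last n)) - s n * x (Fin.last _)

theorem lorentzForm_psi (x : EuclideanSpace ℝ (Fin (n + 2))) :
    lorentzForm (psi n x) = lorentzForm x / 2 + defect n x ^ 2 := by
  have hshift : ∑ k : Fin n, psi n x k.succ.castSucc ^ 2
      = 1 / 2 * ∑ k : Fin n, x k.castSucc.castSucc ^ 2 := by
    rw [Finset.mul_sum]
    refine Finset.sum_congr rfl fun k _ => ?_
    rw [show psi n x k.succ.castSucc = r * x k.castSucc.castSucc from psi_apply_mk_succ x k.isLt,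
      mul_pow, r_sq]
  rw [lorentzForm, lorentzForm, Fin.sum_univ_succ, Fin.sum_univ_castSucc (n := n), psi_apply_last,
    Fin.castSucc_zero, psi_apply_zero, hshift, defect]
  linear_combination -(x (Fin.last _) ^ 2 + x (Fin.castSucc (Fin.last n)) ^ 2) * c_sq_add_s_sq n

theorem psi_mem {x : EuclideanSpace ℝ (Fin (n + 2))} (hx : x ∈ lorentzCone (n + 1)) :
    psi n x ∈ lorentzCone (n + 1) := by
  obtain ⟨hQ, ht⟩ := mem_lorentzCone_iff.1 hx
  refine mem_lorentzCone_iff.2 ⟨?_, by rwa [psi_apply_last]⟩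
  rw [lorentzForm_psi]
  positivity

theorem psi_pow_mem {x : EuclideanSpace ℝ (Fin (n + 2))} (hx : x ∈ lorentzCone (n + 1)) (k : ℕ) :
    (psi n ^ k) x ∈ lorentzCone (n + 1) := by
  induction k with
  | zero => exact hx
  | succ k ih => rw [pow_succ', Module.End.mul_apply]; exact psi_mem ih

theorem lorentzForm_eq_zero_of_lorentzForm_psi_eq_zero {x : EuclideanSpace ℝ (Fin (n + 2))}
    (hx : x ∈ lorentzCone (n + 1)) (h : lorentzForm (psi n x) = 0) :
    lorentzForm x = 0 ∧ defect n x = 0 := by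
  have hQ := (mem_lorentzCone_iff.1 hx).1
  rw [lorentzForm_psi] at h
  obtain ⟨hQ0, hd⟩ := (add_eq_zero_iff_of_nonneg (by positivity) (sq_nonneg _)).1 h
  exact ⟨by linarith, pow_eq_zero_iff two_ne_zero |>.1 hd⟩

theorem lorentzForm_psi_pow_eq_zero_of_le {x : EuclideanSpace ℝ (Fin (n + 2))}
    (hx : x ∈ lorentzCone (n + 1)) {j k : ℕ} (hjk : j ≤ k)
    (h : lorentzForm ((psi n ^ k) x) = 0) : lorentzForm ((psi n ^ j) x) = 0 := by
  induction k with
  | zero => rwa [Nat.le_zero.1 hjk]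
  | succ k ih =>
    rcases hjk.eq_or_lt with rfl | hlt
    · exact h
    rw [pow_succ', Module.End.mul_apply] at h
    exact ih (by omega) (lorentzForm_eq_zero_of_lorentzForm_psi_eq_zero (psi_pow_mem hx k) h).1

theorem psi_pow_mem_interior {x : EuclideanSpace ℝ (Fin (n + 2))} (hx : x ∈ lorentzCone (n + 1))
    (hx0 : x ≠ 0) : (psi n ^ (n + 2)) x ∈ interior (lorentzCone (n + 1)) := by
  have ht := last_pos_of_mem_lorentzCone hx hx0
  refine mem_interior_lorentzCone_iff.2 ⟨(mem_lorentzCone_iff.1 (psi_pow_mem hx _)).1.lt_of_ne'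
    fun h => ?_, by rwa [psi_pow_apply_last]⟩
  have h0 : defect n x = 0 := (lorentzForm_eq_zero_of_lorentzForm_psi_eq_zero hx
    (by simpa using lorentzForm_psi_pow_eq_zero_of_le hx (j := 1) (by omega) h)).2
  have h1 : defect n ((psi n ^ (n + 1)) x) = 0 :=
    (lorentzForm_eq_zero_of_lorentzForm_psi_eq_zero (psi_pow_mem hx _)
      (by rwa [← Module.End.mul_apply, ← pow_succ'])).2
  have hshift : (psi n ^ (n + 1)) x (Fin.castSucc (Fin.last n)) = r ^ n * psi n x 0 := by
    rw [pow_succ, Module.End.mul_apply]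
    have h := psi_pow_apply_mk_add (psi n x) 0 n (by omega)
    simp only [zero_add, Fin.zero_eta] at h
    exact h
  -- `c xₙ = s t` from `h0`, while `h1` says `-c rⁿ (s xₙ + c t) = s t`: the signs clash
  rw [defect, psi_pow_apply_last, hshift, psi_apply_zero] at h1
  rw [defect] at h0
  have hs := s_pos n
  have hc := c_pos n
  have hrn := pow_pos r_pos n
  have hxn : 0 < x (Fin.castSucc (Fin.last n)) := by nlinarith
  nlinarith [mul_pos hrn (add_pos (mul_pos hs hxn) (mul_pos hc ht))]

variable (n) in
def witness : EuclideanSpace ℝ (Fin (n + 2)) :=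
  WithLp.toLp 2 fun i => if (i : ℕ) = n + 1 then c n else r ^ ((i : ℕ) + 2)

theorem witness_apply_last : witness n (Fin.last _) = c n := by
  simp [witness]

theorem witness_apply_mk {i : ℕ} (hi : i ≤ n) : witness n ⟨i, by omega⟩ = r ^ (i + 2) := by
  simp [witness, show i ≠ n + 1 by omega]

theorem lorentzForm_witness : lorentzForm (witness n) = 0 := by
  have hsum : ∑ i : Fin (n + 1), witness n (Fin.castSucc i) ^ 2 = 1 / 2 - s n ^ 2 := by
    simp_rw [show ∀ i : Fin (n + 1), witness n (Fin.castSucc i) = r ^ ((i : ℕ) + 2) from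
      fun i => witness_apply_mk (by omega), ← pow_mul, mul_comm _ 2, pow_mul, r_sq, s_sq]
    rw [Fin.sum_univ_eq_sum_range (fun i => (1 / 2 : ℝ) ^ (i + 2))]
    simp_rw [pow_add, ← Finset.sum_mul, geom_sum_eq (by norm_num : (1 / 2 : ℝ) ≠ 1)]
    ring
  rw [lorentzForm, witness_apply_last, hsum]
  linear_combination c_sq_add_s_sq n

theorem witness_mem : witness n ∈ lorentzCone (n + 1) :=
  mem_lorentzCone_iff.2 ⟨lorentzForm_witness.ge, witness_apply_last.symm ▸ (c_pos n).le⟩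

theorem witness_ne_zero : witness n ≠ 0 := fun h =>
  (c_pos n).ne' (by rw [← witness_apply_last, h]; rfl)

theorem defect_psi_pow_witness {j : ℕ} (hj : j ≤ n) : defect n ((psi n ^ j) (witness n)) = 0 := by
  have hcoord : (psi n ^ j) (witness n) (Fin.castSucc (Fin.last n)) = s n := by
    have h := psi_pow_apply_mk_add (witness n) (n - j) j (by omega)
    simp only [Nat.sub_add_cancel hj, witness_apply_mk (Nat.sub_le n j), ← pow_add,
      show j + (n - j + 2) = n + 2 by omega] at h
    exact h
  rw [defect, psi_pow_apply_last, witness_apply_last, hcoord]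
  ring

theorem lorentzForm_psi_pow_witness {j : ℕ} (hj : j ≤ n + 1) :
    lorentzForm ((psi n ^ j) (witness n)) = 0 := by
  induction j with
  | zero => exact lorentzForm_witness
  | succ j ih =>
    rw [pow_succ', Module.End.mul_apply, lorentzForm_psi, ih (by omega),
      defect_psi_pow_witness (by omega)]
    ring

theorem psi_pow_witness_not_mem_interior :
    (psi n ^ (n + 1)) (witness n) ∉ interior (lorentzCone (n + 1)) := fun h =>
  (mem_interior_lorentzCone_iff.1 h).1.ne' (lorentzForm_psi_pow_witness le_rfl)

end LorentzShift

end

/-- For every dimension `n + 2 ≥ 2` there is a primitive map of the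
`(n+2)`-dimensional Lorentz cone with primitivity index exactly `n + 2`:
`Ψ^(n+2)` is strictly positive but `Ψ^(n+1)` is not. -/
theorem exists_lorentzCone_primitive_index_eq_dim (n : ℕ) :
    ∃ Ψ : Module.End ℝ (EuclideanSpace ℝ (Fin (n + 2))),
      (∀ x ∈ lorentzCone (n + 1), Ψ x ∈ lorentzCone (n + 1)) ∧
      (∀ x ∈ lorentzCone (n + 1), x ≠ 0 →
        (Ψ ^ (n + 2)) x ∈ interior (lorentzCone (n + 1))) ∧
      ¬ (∀ x ∈ lorentzCone (n + 1), x ≠ 0 →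
        (Ψ ^ (n + 1)) x ∈ interior (lorentzCone (n + 1))) :=
  ⟨LorentzShift.psi n, fun _ => LorentzShift.psi_mem, fun _ => LorentzShift.psi_pow_mem_interior,
    fun h => LorentzShift.psi_pow_witness_not_mem_interior
      (h _ LorentzShift.witness_mem LorentzShift.witness_ne_zero)⟩
end

section
/- Let n ≥ 1 and let Φ : ℝ^n → ℝ^n be an affine map with Φ(B_n) ⊆ B_n, and suppose there exists an integer k ≥ 1 such that Φ^k(B_n) ⊆ int(B_n) (i.e., Φ is B_n-primitive). Then Φ^{n+1}(B_n) ⊆ int(B_n). -/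
open Metric Set Function

open RealInnerProductSpace

section AuxiliaryLemmas

variable {E : Type*} [NormedAddCommGroup E] [InnerProductSpace ℝ E]

/-- Distinct vectors of norm at most one, one of them a unit vector, have inner
product strictly less than `1`. -/
private lemma aux_inner_lt_one {a b : E} (ha : ‖a‖ = 1) (hb : ‖b‖ = 1) (hab : a ≠ b) :
    ⟪a, b⟫ < 1 := by
  have h1 : ⟪a, b⟫ ≤ 1 := by
    have h := real_inner_le_norm a b
    rw [ha, hb] at h; linarith
  rcases lt_or_eq_of_le h1 with h | h
  · exact h
  · exfalso
    apply hab
    have hba : ⟪b, a⟫ = 1 := by rw [real_inner_comm]; exact h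
    have hz : ⟪a - b, a - b⟫ = 0 := by
      simp only [inner_sub_left, inner_sub_right]
      rw [real_inner_self_eq_norm_mul_norm, real_inner_self_eq_norm_mul_norm, ha, hb, h, hba]
      ring
    exact sub_eq_zero.mp ((inner_self_eq_zero (𝕜 := ℝ)).mp hz)

variable [FiniteDimensional ℝ E]

/-- Key lemma: if an affine map sends the closed unit ball into itself and some iterate maps
the ball strictly inside, then for any `y` in the ball whose image has norm one, `y` itself
has norm one, and the affine functional `z ↦ 1 - ⟪Φ z, Φ y⟫` is a positive multiple of
`z ↦ 1 - ⟪z, y⟫`. -/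
private lemma aux_key (Φ : E →ᵃ[ℝ] E)
    (hpos : ∀ z ∈ closedBall (0 : E) 1, Φ z ∈ closedBall (0 : E) 1)
    (k : ℕ) (hk1 : 1 ≤ k)
    (hk : ∀ z ∈ closedBall (0 : E) 1, ‖(⇑Φ)^[k] z‖ < 1)
    (y : E) (hy : ‖y‖ ≤ 1) (hΦy : ‖Φ y‖ = 1) :
    ‖y‖ = 1 ∧ ∃ t : ℝ, 0 < t ∧ ∀ z : E, 1 - ⟪Φ z, Φ y⟫ = t * (1 - ⟪z, y⟫) := by
  have hdec : ∀ z : E, Φ z = Φ.linear z + Φ 0 := by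
    intro z
    conv_lhs => rw [Φ.decomp]
    simp
  set w : E := (LinearMap.adjoint Φ.linear) (Φ y) with hwdef
  set c : ℝ := 1 - ⟪Φ 0, Φ y⟫ with hcdef
  have hf : ∀ z : E, 1 - ⟪Φ z, Φ y⟫ = c - ⟪z, w⟫ := by
    intro z
    rw [hdec z, inner_add_left, hwdef, LinearMap.adjoint_inner_right, hcdef]
    ring
  have hf0 : ∀ z ∈ closedBall (0 : E) 1, 0 ≤ c - ⟪z, w⟫ := by
    intro z hz
    rw [← hf]
    have h2 : ⟪Φ z, Φ y⟫ ≤ ‖Φ z‖ * ‖Φ y‖ := real_inner_le_norm _ _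
    have h3 : ‖Φ z‖ ≤ 1 := mem_closedBall_zero_iff.mp (hpos z hz)
    rw [hΦy] at h2
    nlinarith
  have hfy : c - ⟪y, w⟫ = 0 := by
    rw [← hf]
    have : ⟪Φ y, Φ y⟫ = 1 := by
      rw [real_inner_self_eq_norm_mul_norm, hΦy]; ring
    rw [this]; ring
  by_cases hw0 : w = 0
  · exfalso
    have hc0 : c = 0 := by
      rw [hw0] at hfy; simpa using hfy
    obtain ⟨k', rfl⟩ : ∃ k', k = k' + 1 := ⟨k - 1, by omega⟩
    have h1 : (1 : ℝ) - ⟪Φ ((⇑Φ)^[k'] 0), Φ y⟫ = 0 := by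
      rw [hf, hw0, hc0]; simp
    have h2 : Φ ((⇑Φ)^[k'] (0 : E)) = (⇑Φ)^[k' + 1] 0 :=
      (Function.iterate_succ_apply' Φ k' 0).symm
    have h3 : ‖(⇑Φ)^[k' + 1] (0 : E)‖ < 1 := hk 0 (by simp)
    have h4 : ⟪(⇑Φ)^[k' + 1] (0 : E), Φ y⟫ ≤ ‖(⇑Φ)^[k' + 1] (0 : E)‖ * ‖Φ y‖ :=
      real_inner_le_norm _ _
    rw [hΦy] at h4
    rw [h2] at h1
    nlinarith
  · have hwpos : 0 < ‖w‖ := norm_pos_iff.mpr hw0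
    have hz0 : (‖w‖⁻¹ • w) ∈ closedBall (0 : E) 1 := by
      rw [mem_closedBall_zero_iff, norm_smul, norm_inv, norm_norm]
      rw [inv_mul_cancel₀ hwpos.ne']
    have h5 : 0 ≤ c - ⟪‖w‖⁻¹ • w, w⟫ := hf0 _ hz0
    have h6 : ⟪‖w‖⁻¹ • w, w⟫ = ‖w‖ := by
      rw [real_inner_smul_left, real_inner_self_eq_norm_mul_norm]
      field_simp
    have h7 : ‖w‖ ≤ c := by rw [h6] at h5; linarith
    have h8 : ⟪y, w⟫ = c := by linarith
    have h9 : ⟪y, w⟫ ≤ ‖y‖ * ‖w‖ := real_inner_le_norm _ _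
    have hy1 : ‖y‖ = 1 := by nlinarith
    have hcw : c = ‖w‖ := by nlinarith
    have hyw : ⟪y, w⟫ = ‖w‖ := by rw [h8, hcw]
    have hwy : w = ‖w‖ • y := by
      have e1 : ⟪w, w⟫ = ‖w‖ * ‖w‖ := real_inner_self_eq_norm_mul_norm _
      have e2 : ⟪y, y⟫ = 1 := by
        rw [real_inner_self_eq_norm_mul_norm, hy1]; ring
      have e3 : ⟪w, y⟫ = ‖w‖ := by rw [real_inner_comm]; exact hyw
      have hz : ⟪w - ‖w‖ • y, w - ‖w‖ • y⟫ = 0 := by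
        simp only [inner_sub_left, inner_sub_right, real_inner_smul_left, real_inner_smul_right]
        rw [e1, e2, e3, hyw]
        ring
      exact sub_eq_zero.mp ((inner_self_eq_zero (𝕜 := ℝ)).mp hz)
    have hzw : ∀ z : E, ⟪z, w⟫ = ‖w‖ * ⟪z, y⟫ := by
      intro z
      conv_lhs => rw [hwy]
      exact real_inner_smul_right _ _ _
    refine ⟨hy1, ‖w‖, hwpos, fun z => ?_⟩
    rw [hf z, hzw z, hcw]
    ring

end AuxiliaryLemmas

/-- If an affine self-map of `ℝ^n` (`n ≥ 1`) maps the closed unit ball `B_n` into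
itself and some iterate maps `B_n` into the interior of `B_n`, then already the
`(n+1)`-st iterate maps `B_n` into the interior of `B_n`. -/
theorem affine_primitivity_index_le
    (n : ℕ) (hn : 1 ≤ n)
    (Φ : EuclideanSpace ℝ (Fin n) →ᵃ[ℝ] EuclideanSpace ℝ (Fin n))
    (hpos : ∀ x ∈ closedBall (0 : EuclideanSpace ℝ (Fin n)) 1, Φ x ∈ closedBall 0 1)
    (hprim : ∃ k : ℕ, 1 ≤ k ∧
      ∀ x ∈ closedBall (0 : EuclideanSpace ℝ (Fin n)) 1,
        (⇑Φ)^[k] x ∈ interior (closedBall (0 : EuclideanSpace ℝ (Fin n)) 1)) :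
    ∀ x ∈ closedBall (0 : EuclideanSpace ℝ (Fin n)) 1,
      (⇑Φ)^[n + 1] x ∈ interior (closedBall (0 : EuclideanSpace ℝ (Fin n)) 1) := by
  obtain ⟨k, hk1, hkprim⟩ := hprim
  have hint : interior (closedBall (0 : EuclideanSpace ℝ (Fin n)) 1) = ball 0 1 :=
    interior_closedBall 0 one_ne_zero
  have hk' : ∀ z ∈ closedBall (0 : EuclideanSpace ℝ (Fin n)) 1, ‖(⇑Φ)^[k] z‖ < 1 := by
    intro z hz
    have := hkprim z hz
    rw [hint, mem_ball_zero_iff] at this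
    exact this
  have hiter : ∀ m, ∀ z ∈ closedBall (0 : EuclideanSpace ℝ (Fin n)) 1,
      (⇑Φ)^[m] z ∈ closedBall (0 : EuclideanSpace ℝ (Fin n)) 1 := by
    intro m
    induction m with
    | zero => intro z hz; simpa using hz
    | succ m ih =>
      intro z hz
      rw [Function.iterate_succ_apply']
      exact hpos _ (ih z hz)
  intro x0 hx0
  rw [hint, mem_ball_zero_iff]
  by_contra hge
  push_neg at hge
  set x : ℕ → EuclideanSpace ℝ (Fin n) := fun m => (⇑Φ)^[m] x0 with hxdef
  have hxsucc : ∀ m, x (m + 1) = Φ (x m) := fun m => Function.iterate_succ_apply' Φ m x0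
  have hxB : ∀ m, ‖x m‖ ≤ 1 := fun m => mem_closedBall_zero_iff.mp (hiter m x0 hx0)
  have hxmem : ∀ m, x m ∈ closedBall (0 : EuclideanSpace ℝ (Fin n)) 1 :=
    fun m => mem_closedBall_zero_iff.mpr (hxB m)
  have htop : ‖x (n + 1)‖ = 1 := le_antisymm (hxB _) hge
  -- All points x 0, …, x (n+1) lie on the unit sphere (downward induction).
  have hsph : ∀ j, j ≤ n + 1 → ‖x (n + 1 - j)‖ = 1 := by
    intro j
    induction j with
    | zero => intro _; simpa using htop
    | succ j ih =>
      intro hj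
      have hj' : j ≤ n + 1 := by omega
      have hs : n + 1 - j = (n + 1 - (j + 1)) + 1 := by omega
      have h1 : ‖Φ (x (n + 1 - (j + 1)))‖ = 1 := by
        rw [← hxsucc, ← hs]; exact ih hj'
      exact (aux_key Φ hpos k hk1 hk' _ (hxB _) h1).1
  have hunit : ∀ s, s ≤ n + 1 → ‖x s‖ = 1 := by
    intro s hs
    have := hsph (n + 1 - s) (by omega)
    rwa [show n + 1 - (n + 1 - s) = s by omega] at this
  -- Case 1: two of the boundary points coincide → periodicity → contradiction.
  by_cases hdup : ∃ i j, i < j ∧ j ≤ n + 1 ∧ x i = x j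
  · obtain ⟨i, j, hij, hjn, hxij⟩ := hdup
    have hfix : (⇑Φ)^[j - i] (x i) = x i := by
      show (⇑Φ)^[j - i] ((⇑Φ)^[i] x0) = x i
      rw [← Function.iterate_add_apply, show j - i + i = j by omega]
      exact hxij.symm
    have hper : (⇑Φ)^[(j - i) * k] (x i) = x i := by
      rw [Function.iterate_mul]
      exact Function.iterate_fixed hfix k
    have hkk : k ≤ (j - i) * k := Nat.le_mul_of_pos_left k (by omega)
    have hkm : k + ((j - i) * k - k) = (j - i) * k := by omega
    have hxi : (⇑Φ)^[k] ((⇑Φ)^[(j - i) * k - k] (x i)) = x i := by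
      rw [← Function.iterate_add_apply, hkm]
      exact hper
    have hin : (⇑Φ)^[(j - i) * k - k] (x i) ∈ closedBall (0 : EuclideanSpace ℝ (Fin n)) 1 :=
      hiter _ _ (hxmem i)
    have hlt : ‖x i‖ < 1 := by rw [← hxi]; exact hk' _ hin
    have := hunit i (by omega)
    linarith
  · push_neg at hdup
    -- Case 2: all the boundary points are distinct.
    have hlam : ∀ s, s ≤ n → ∃ t : ℝ, 0 < t ∧
        ∀ z, 1 - ⟪Φ z, x (s + 1)⟫ = t * (1 - ⟪z, x s⟫) := by
      intro s hs
      have h1 : ‖Φ (x s)‖ = 1 := by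
        rw [← hxsucc]; exact hunit (s + 1) (by omega)
      obtain ⟨-, t, ht, hid⟩ := aux_key Φ hpos k hk1 hk' (x s) (hxB s) h1
      refine ⟨t, ht, fun z => ?_⟩
      have := hid z
      rwa [← hxsucc] at this
    obtain ⟨t, ht0, hid0⟩ := hlam 0 (by omega)
    -- all the factors are equal to t
    have hidj : ∀ j, j ≤ n → ∀ z, 1 - ⟪Φ z, x (j + 1)⟫ = t * (1 - ⟪z, x j⟫) := by
      intro j hj z
      rcases Nat.eq_zero_or_pos j with rfl | hjpos
      · exact hid0 z
      obtain ⟨tj, htj, hidj⟩ := hlam j hj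
      have heps : ⟪x 0, x j⟫ < 1 :=
        aux_inner_lt_one (hunit 0 (by omega)) (hunit j (by omega))
          (hdup 0 j hjpos (by omega))
      have e1 := hidj (x 0)
      have e2 := hid0 (x j)
      rw [← hxsucc 0] at e1
      rw [← hxsucc j] at e2
      have hsym : ⟪x 1, x (j + 1)⟫ = ⟪x (j + 1), x 1⟫ := real_inner_comm _ _
      have hsym2 : ⟪x 0, x j⟫ = ⟪x j, x 0⟫ := real_inner_comm _ _
      have htjt : tj = t := by
        have h3 : tj * (1 - ⟪x 0, x j⟫) = t * (1 - ⟪x 0, x j⟫) := by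
          rw [hsym2]; rw [hsym2] at e1
          linarith [e1, e2, hsym]
        have h4 : (1 : ℝ) - ⟪x 0, x j⟫ ≠ 0 := by linarith
        exact mul_right_cancel₀ h4 h3
      rw [← htjt]
      exact hidj z
    -- Lift to the Lorentz space ℝ × E.
    let M : (ℝ × EuclideanSpace ℝ (Fin n)) →ₗ[ℝ] (ℝ × EuclideanSpace ℝ (Fin n)) :=
      LinearMap.prod (LinearMap.fst ℝ ℝ (EuclideanSpace ℝ (Fin n)))
        (((LinearMap.fst ℝ ℝ (EuclideanSpace ℝ (Fin n))).smulRight (Φ 0)) +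
          Φ.linear.comp (LinearMap.snd ℝ ℝ (EuclideanSpace ℝ (Fin n))))
    have hM : ∀ u : ℝ × EuclideanSpace ℝ (Fin n), M u = (u.1, u.1 • (Φ 0) + Φ.linear u.2) :=
      fun u => rfl
    have hdec : ∀ z : EuclideanSpace ℝ (Fin n), Φ z = Φ.linear z + Φ 0 := by
      intro z
      conv_lhs => rw [Φ.decomp]
      simp
    set v : ℕ → ℝ × EuclideanSpace ℝ (Fin n) := fun m => ((1 : ℝ), x m) with hvdef
    have hMv : ∀ m, M (v m) = v (m + 1) := by
      intro m
      have h2 : (1 : ℝ) • Φ 0 + Φ.linear (x m) = x (m + 1) := by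
        rw [one_smul, hxsucc m, hdec (x m), add_comm]
      show ((1 : ℝ), (1 : ℝ) • Φ 0 + Φ.linear (x m)) = ((1 : ℝ), x (m + 1))
      rw [h2]
    let Bf : (ℝ × EuclideanSpace ℝ (Fin n)) →ₗ[ℝ] (ℝ × EuclideanSpace ℝ (Fin n)) →ₗ[ℝ] ℝ :=
      LinearMap.mk₂ ℝ (fun u w => u.1 * w.1 - ⟪u.2, w.2⟫)
        (by intro u u' w; simp only [Prod.fst_add, Prod.snd_add, inner_add_left]; ring)
        (by intro a u w; simp only [Prod.smul_fst, Prod.smul_snd, real_inner_smul_left,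
              smul_eq_mul]; ring)
        (by intro u w w'; simp only [Prod.fst_add, Prod.snd_add, inner_add_right]; ring)
        (by intro a u w; simp only [Prod.smul_fst, Prod.smul_snd, real_inner_smul_right,
              smul_eq_mul]; ring)
    have hBf : ∀ u w : ℝ × EuclideanSpace ℝ (Fin n), Bf u w = u.1 * w.1 - ⟪u.2, w.2⟫ :=
      fun u w => rfl
    have hBvv : ∀ a b : ℕ, Bf (v a) (v b) = 1 - ⟪x a, x b⟫ := by
      intro a b
      rw [hBf]
      simp [hvdef]
    -- Existence of r ≤ n+1 with v r in the span of the previous vectors.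
    set S : ℕ → Submodule ℝ (ℝ × EuclideanSpace ℝ (Fin n)) :=
      fun r => Submodule.span ℝ (v '' Iio r) with hSdef
    have hSmono : ∀ r, S r ≤ S (r + 1) := by
      intro r
      apply Submodule.span_mono
      apply Set.image_mono
      intro a ha
      exact lt_trans ha (Nat.lt_succ_self r)
    have hgen : ∀ r i, i < r → v i ∈ S r := by
      intro r i hi
      exact Submodule.subset_span ⟨i, hi, rfl⟩
    have hex : ∃ r, r ≤ n + 1 ∧ v r ∈ S r := by
      by_contra hno
      push_neg at hno
      have hrank : ∀ r, r ≤ n + 2 → r ≤ Module.finrank ℝ (S r) := by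
        intro r
        induction r with
        | zero => intro _; exact Nat.zero_le _
        | succ r ih =>
          intro hr
          have h1 : S r < S (r + 1) := by
            refine lt_of_le_of_ne (hSmono r) fun heq => ?_
            have : v r ∈ S r := by
              rw [heq]; exact hgen (r + 1) r (Nat.lt_succ_self r)
            exact hno r (by omega) this
          have h2 := Submodule.finrank_lt_finrank_of_lt h1
          have h3 := ih (by omega)
          omega
      have h3 := hrank (n + 2) le_rfl
      have h4 : Module.finrank ℝ (S (n + 2)) ≤
          Module.finrank ℝ (ℝ × EuclideanSpace ℝ (Fin n)) :=
        Submodule.finrank_le _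
      have h5 : Module.finrank ℝ (ℝ × EuclideanSpace ℝ (Fin n)) = 1 + n := by
        rw [Module.finrank_prod, finrank_euclideanSpace_fin, Module.finrank_self]
      omega
    obtain ⟨r, hrn, hrmem⟩ := hex
    have hr0 : 0 < r := by
      rcases Nat.eq_zero_or_pos r with rfl | h
      · exfalso
        have h0 : v 0 ∈ S 0 := hrmem
        have hempty : (v '' Iio 0) = ∅ := by
          have : (Iio 0 : Set ℕ) = ∅ := by ext a; simp
          rw [this, Set.image_empty]
        rw [hSdef] at h0
        simp only [hempty, Submodule.span_empty, Submodule.mem_bot] at h0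
        have : ((1 : ℝ), x 0).1 = ((0 : ℝ × EuclideanSpace ℝ (Fin n))).1 := by rw [← h0]
        simpa using this
      · exact h
    have hMS : ∀ u ∈ S r, M u ∈ S r := by
      intro u hu
      have hle : (S r).map M ≤ S r := by
        rw [hSdef]
        rw [Submodule.map_span]
        apply Submodule.span_le.mpr
        rintro _ ⟨_, ⟨i, hi, rfl⟩, rfl⟩
        have hi' : i < r := hi
        rw [hMv i]
        rcases Nat.lt_or_ge (i + 1) r with h | h
        · exact hgen r _ h
        · have : i + 1 = r := by omega
          rw [this]
          exact hrmem
      exact hle (Submodule.mem_map_of_mem hu)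
    have hvS : ∀ m, v m ∈ S r := by
      intro m
      induction m with
      | zero => exact hgen r 0 hr0
      | succ m ih =>
        rw [← hMv m]
        exact hMS _ ih
    -- The quadratic identity on the invariant subspace.
    let D : (ℝ × EuclideanSpace ℝ (Fin n)) →ₗ[ℝ] (ℝ × EuclideanSpace ℝ (Fin n)) →ₗ[ℝ] ℝ :=
      LinearMap.mk₂ ℝ (fun u w => Bf (M u) (M w) - t * Bf u w)
        (by intro u u' w
            simp only [map_add, LinearMap.add_apply]
            ring)
        (by intro a u w
            simp only [map_smul, LinearMap.smul_apply, smul_eq_mul]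
            ring)
        (by intro u w w'
            simp only [map_add, LinearMap.add_apply]
            ring)
        (by intro a u w
            simp only [map_smul, LinearMap.smul_apply, smul_eq_mul]
            ring)
    have hD : ∀ u w : ℝ × EuclideanSpace ℝ (Fin n),
        D u w = Bf (M u) (M w) - t * Bf u w := fun _ _ => rfl
    have hDgen : ∀ i, i < r → ∀ j, j < r → D (v i) (v j) = 0 := by
      intro i hi j hj
      have h1 := hidj j (by omega) (x i)
      rw [← hxsucc i] at h1
      simp only [hD, hMv, hBvv]
      linarith
    have hDV : ∀ u ∈ S r, ∀ w ∈ S r, D u w = 0 := by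
      have step1 : ∀ i, i < r → S r ≤ LinearMap.ker (D (v i)) := by
        intro i hi
        rw [hSdef]
        apply Submodule.span_le.mpr
        rintro _ ⟨j, hj, rfl⟩
        exact LinearMap.mem_ker.mpr (hDgen i hi j hj)
      intro u hu w hw
      have step2 : S r ≤ LinearMap.ker (D.flip w) := by
        rw [hSdef]
        apply Submodule.span_le.mpr
        rintro _ ⟨i, hi, rfl⟩
        refine LinearMap.mem_ker.mpr ?_
        rw [LinearMap.flip_apply]
        exact LinearMap.mem_ker.mp (step1 i hi hw)
      have := LinearMap.mem_ker.mp (step2 hu)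
      rwa [LinearMap.flip_apply] at this
    -- J (v m) = 0 for all m, by induction.
    have hJ : ∀ m, Bf (v m) (v m) = 0 := by
      intro m
      induction m with
      | zero =>
        rw [hBvv]
        have h1 : ⟪x 0, x 0⟫ = ‖x 0‖ * ‖x 0‖ := real_inner_self_eq_norm_mul_norm _
        rw [h1, hunit 0 (by omega)]
        ring
      | succ m ih =>
        have h1 := hDV (v m) (hvS m) (v m) (hvS m)
        rw [hD, hMv] at h1
        rw [ih] at h1
        linarith
    -- Contradiction: ‖x k‖ = 1 but x k is in the open ball.
    have h1 := hJ k
    rw [hBvv] at h1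
    have h2 : ‖x k‖ < 1 := hk' x0 hx0
    have h3 : ⟪x k, x k⟫ = ‖x k‖ * ‖x k‖ := real_inner_self_eq_norm_mul_norm _
    nlinarith [norm_nonneg (x k), h1, h2, h3]
end

section
/- For every integer n ≥ 1 there exists an affine map Φ : ℝ^n → ℝ^n with Φ(B_n) ⊆ B_n such that Φ^{n+1}(B_n) ⊆ int(B_n) but Φ^n(B_n) is not contained in int(B_n) (i.e., Φ is B_n-primitive with affine primitivity index exactly n+1). -/
/-!
Let `β = √(1/2)` and write `x ∈ ℝ^(N+1)` in homogeneous coordinates `h = (1, x₀, …, x_N)`.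
The map `Φ = dampedShift N` shifts `h` one place to the right with weight `β`, except that the
last coordinate becomes `(h_N - h_{N+1}) / 2`; hence `‖Φ x‖² ≤ (1 + ‖x‖²) / 2` and `Φ` maps the
unit ball into itself. After `N` steps the first `N` coordinates are frozen at `β, β², …, β^N`,
so on that slice `‖y‖² - 1 = t² - β^(2N)` for the last coordinate `t`, on which `Φ` acts as
`t ↦ (β^N - t) / 2`. This sends `[-β^N, β^N]` into `[0, β^N]`, and only its second iterate into
the open interval, so `Φ^(N+2)` is the first strictly positive iterate: the unit vector
`(-β, β², …, ±β^N, ∓β^N)` stays on the sphere for `N + 1` steps.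
-/

open Metric Set Function

namespace DampedShift

open Finset

variable {n : ℕ}

/-- `homog n x = (1, x 0, …, x (n - 1), 0, 0, …)`. -/
noncomputable def homog (n : ℕ) : EuclideanSpace ℝ (Fin n) →ᵃ[ℝ] ℕ → ℝ :=
  AffineMap.const ℝ (EuclideanSpace ℝ (Fin n)) (Pi.single 0 1 : ℕ → ℝ) +
    (ExtendByZero.linearMap ℝ (fun i : Fin n => (i : ℕ) + 1) ∘ₗ
      (WithLp.linearEquiv 2 ℝ (Fin n → ℝ)).toLinearMap).toAffineMap

lemma homog_apply (x : EuclideanSpace ℝ (Fin n)) (p : ℕ) :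
    homog n x p = (Pi.single 0 1 : ℕ → ℝ) p + extend (fun i : Fin n => (i : ℕ) + 1) x 0 p := rfl

lemma homog_zero (x : EuclideanSpace ℝ (Fin n)) : homog n x 0 = 1 := by
  simp [homog_apply, extend_apply']

lemma homog_succ (x : EuclideanSpace ℝ (Fin n)) {k : ℕ} (hk : k < n) :
    homog n x (k + 1) = x ⟨k, hk⟩ := by
  have hinj : Injective fun i : Fin n => (i : ℕ) + 1 := fun i j h => Fin.ext (by simpa using h)
  simpa [homog_apply] using hinj.extend_apply x 0 ⟨k, hk⟩

lemma ext_homog {x y : EuclideanSpace ℝ (Fin n)}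
    (h : ∀ k < n, homog n x (k + 1) = homog n y (k + 1)) : x = y := by
  ext i
  rw [← homog_succ x i.isLt, ← homog_succ y i.isLt, h i i.isLt]

lemma norm_sq_add_one (x : EuclideanSpace ℝ (Fin n)) :
    ‖x‖ ^ 2 + 1 = ∑ p ∈ range (n + 1), homog n x p ^ 2 := by
  rw [sum_range_succ', homog_zero, EuclideanSpace.norm_sq_eq,
    ← Fin.sum_univ_eq_sum_range (fun p => homog n x (p + 1) ^ 2)]
  simp [homog_succ]

local notation "β" => √(1 / 2 : ℝ)

lemma beta_sq : β ^ 2 = 1 / 2 := Real.sq_sqrt (by norm_num)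

lemma beta_pow_sq (p : ℕ) : (β ^ p) ^ 2 = (1 / 2) ^ p := by
  rw [← pow_mul, mul_comm, pow_mul, beta_sq]

variable {N : ℕ}

noncomputable def dampedShiftOutput (N : ℕ) : (ℕ → ℝ) →ₗ[ℝ] EuclideanSpace ℝ (Fin (N + 1)) where
  toFun y := WithLp.toLp 2 fun i => if (i : ℕ) = N then (y N - y (N + 1)) / 2 else β * y i
  map_add' y z := by
    ext i
    simp only [Pi.add_apply, PiLp.add_apply]
    split_ifs <;> ring
  map_smul' c y := by
    ext i
    simp only [Pi.smul_apply, PiLp.smul_apply, smul_eq_mul, RingHom.id_apply]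
    split_ifs <;> ring

noncomputable def dampedShift (N : ℕ) :
    EuclideanSpace ℝ (Fin (N + 1)) →ᵃ[ℝ] EuclideanSpace ℝ (Fin (N + 1)) :=
  (dampedShiftOutput N).toAffineMap.comp (homog (N + 1))

lemma homog_dampedShift_of_lt (x : EuclideanSpace ℝ (Fin (N + 1))) {p : ℕ} (hp : p < N) :
    homog (N + 1) (dampedShift N x) (p + 1) = β * homog (N + 1) x p := by
  rw [homog_succ _ (by omega)]
  exact if_neg hp.ne

lemma homog_dampedShift_last (x : EuclideanSpace ℝ (Fin (N + 1))) :
    homog (N + 1) (dampedShift N x) (N + 1) =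
      (homog (N + 1) x N - homog (N + 1) x (N + 1)) / 2 := by
  rw [homog_succ _ (by omega)]
  exact if_pos rfl

lemma norm_sq_eq_of_sq_homog_eq (y : EuclideanSpace ℝ (Fin (N + 1)))
    (hy : ∀ p ≤ N, homog (N + 1) y p ^ 2 = (1 / 2) ^ p) :
    ‖y‖ ^ 2 = 1 - (1 / 2) ^ N + homog (N + 1) y (N + 1) ^ 2 := by
  have hgeom : ∑ p ∈ range (N + 1), homog (N + 1) y p ^ 2 = 2 - (1 / 2) ^ N := by
    rw [sum_congr rfl fun p hp => hy p (Nat.lt_succ_iff.mp (mem_range.mp hp)),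
      geom_sum_eq (by norm_num), pow_succ]
    ring
  linarith [norm_sq_add_one y, sum_range_succ (fun p => homog (N + 1) y p ^ 2) (N + 1)]

lemma norm_dampedShift_sq_le (x : EuclideanSpace ℝ (Fin (N + 1))) :
    ‖dampedShift N x‖ ^ 2 ≤ (1 + ‖x‖ ^ 2) / 2 := by
  have hx := norm_sq_add_one x
  have hΦx := norm_sq_add_one (dampedShift N x)
  rw [sum_range_succ, sum_range_succ] at hx
  rw [sum_range_succ', sum_range_succ, homog_zero, homog_dampedShift_last,
    sum_congr rfl fun p hp => by rw [homog_dampedShift_of_lt x (mem_range.mp hp), mul_pow, beta_sq],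
    ← mul_sum] at hΦx
  nlinarith [sq_nonneg (homog (N + 1) x N + homog (N + 1) x (N + 1))]

lemma norm_dampedShift_le_one {x : EuclideanSpace ℝ (Fin (N + 1))} (hx : ‖x‖ ≤ 1) :
    ‖dampedShift N x‖ ≤ 1 := by
  rw [← pow_le_one_iff_of_nonneg (norm_nonneg _) two_ne_zero] at hx ⊢
  linarith [norm_dampedShift_sq_le x]

lemma norm_iterate_dampedShift_le_one {x : EuclideanSpace ℝ (Fin (N + 1))} (hx : ‖x‖ ≤ 1)
    (k : ℕ) : ‖(dampedShift N)^[k] x‖ ≤ 1 := by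
  induction k with
  | zero => exact hx
  | succ k ih => rw [iterate_succ_apply']; exact norm_dampedShift_le_one ih

lemma homog_iterate_dampedShift (x : EuclideanSpace ℝ (Fin (N + 1))) {k p : ℕ}
    (hpk : p ≤ k) (hpN : p ≤ N) : homog (N + 1) ((dampedShift N)^[k] x) p = β ^ p := by
  induction k generalizing p with
  | zero => rw [Nat.le_zero.mp hpk, homog_zero, pow_zero]
  | succ k ih =>
    rcases p with _ | p
    · rw [homog_zero, pow_zero]
    · rw [iterate_succ_apply', homog_dampedShift_of_lt _ (by omega), ih (by omega) (by omega),
        pow_succ']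

lemma norm_iterate_dampedShift_lt_one {x : EuclideanSpace ℝ (Fin (N + 1))} (hx : ‖x‖ ≤ 1) :
    ‖(dampedShift N)^[N + 2] x‖ < 1 := by
  have frozen : ∀ k ≥ N, ∀ p ≤ N, homog (N + 1) ((dampedShift N)^[k] x) p ^ 2 = (1 / 2) ^ p :=
    fun k hk p hp => by rw [homog_iterate_dampedShift x (by omega) hp, beta_pow_sq]
  set t := homog (N + 1) ((dampedShift N)^[N] x) (N + 1)
  have ht : t ^ 2 ≤ (β ^ N) ^ 2 := by
    have := norm_sq_eq_of_sq_homog_eq _ (frozen N le_rfl)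
    have := norm_iterate_dampedShift_le_one hx N
    rw [beta_pow_sq]
    nlinarith [norm_nonneg ((dampedShift N)^[N] x)]
  have hlast : homog (N + 1) ((dampedShift N)^[N + 2] x) (N + 1) = (β ^ N + t) / 4 := by
    rw [iterate_succ_apply', homog_dampedShift_last, homog_iterate_dampedShift x (by omega) le_rfl,
      iterate_succ_apply', homog_dampedShift_last, homog_iterate_dampedShift x le_rfl le_rfl]
    ring
  obtain ⟨ht_lo, ht_hi⟩ := abs_le_of_sq_le_sq' ht (by positivity)
  rw [← pow_lt_one_iff_of_nonneg (norm_nonneg _) two_ne_zero,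
    norm_sq_eq_of_sq_homog_eq _ (frozen _ (by omega)), hlast, ← beta_pow_sq]
  nlinarith [pow_pos (show 0 < β by positivity) N]

noncomputable def boundaryOrbit (N j : ℕ) : EuclideanSpace ℝ (Fin (N + 1)) :=
  WithLp.toLp 2 fun i => (-1) ^ ((i : ℕ) + 1 - j) * β ^ min ((i : ℕ) + 1) N

lemma homog_boundaryOrbit (j : ℕ) {p : ℕ} (hp : p ≤ N + 1) :
    homog (N + 1) (boundaryOrbit N j) p = (-1) ^ (p - j) * β ^ min p N := by
  rcases p with _ | p
  · simp [homog_zero]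
  · exact homog_succ _ (by omega)

lemma dampedShift_boundaryOrbit {j : ℕ} (hj : j ≤ N) :
    dampedShift N (boundaryOrbit N j) = boundaryOrbit N (j + 1) := by
  refine ext_homog fun p hp => ?_
  rw [homog_boundaryOrbit _ (by omega)]
  rcases (Nat.lt_succ_iff.mp hp).lt_or_eq with hpN | hpN
  · rw [homog_dampedShift_of_lt _ hpN, homog_boundaryOrbit _ (by omega), min_eq_left hpN.le,
      min_eq_left hpN, Nat.add_sub_add_right, pow_succ]
    ring
  · subst p
    rw [homog_dampedShift_last, homog_boundaryOrbit j (p := N) (by omega),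
      homog_boundaryOrbit j le_rfl, min_self, min_eq_right (by omega), Nat.add_sub_add_right,
      show N + 1 - j = N - j + 1 by omega, pow_succ]
    ring

lemma iterate_dampedShift_boundaryOrbit {j : ℕ} (hj : j ≤ N + 1) :
    (dampedShift N)^[j] (boundaryOrbit N 0) = boundaryOrbit N j := by
  induction j with
  | zero => rfl
  | succ j ih => rw [iterate_succ_apply', ih (by omega), dampedShift_boundaryOrbit (by omega)]

lemma norm_boundaryOrbit (j : ℕ) : ‖boundaryOrbit N j‖ = 1 := by
  have hsq : ∀ p ≤ N + 1, homog (N + 1) (boundaryOrbit N j) p ^ 2 = (1 / 2) ^ min p N :=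
    fun p hp => by
      rw [homog_boundaryOrbit j hp, mul_pow, beta_pow_sq, ← pow_mul, mul_comm (p - j), pow_mul,
        neg_one_sq, one_pow, one_mul]
  have h := norm_sq_eq_of_sq_homog_eq (boundaryOrbit N j) fun p hp => by
    rw [hsq p (by omega), min_eq_left hp]
  rw [hsq _ le_rfl, min_eq_right (by omega)] at h
  rw [← pow_eq_one_iff_of_nonneg (norm_nonneg _) two_ne_zero, h]
  ring

end DampedShift

/-- For every `n ≥ 1` there is an affine self-map of `ℝ^n` mapping the closed unit
ball `B_n` into itself whose `(n+1)`-st iterate maps `B_n` into the interior of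
`B_n`, but whose `n`-th iterate does not. -/
theorem exists_affine_primitive_index_eq (n : ℕ) (hn : 1 ≤ n) :
    ∃ Φ : EuclideanSpace ℝ (Fin n) →ᵃ[ℝ] EuclideanSpace ℝ (Fin n),
      (∀ x ∈ closedBall (0 : EuclideanSpace ℝ (Fin n)) 1, Φ x ∈ closedBall 0 1) ∧
      (∀ x ∈ closedBall (0 : EuclideanSpace ℝ (Fin n)) 1,
        (⇑Φ)^[n + 1] x ∈ interior (closedBall (0 : EuclideanSpace ℝ (Fin n)) 1)) ∧
      ¬ (∀ x ∈ closedBall (0 : EuclideanSpace ℝ (Fin n)) 1,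
        (⇑Φ)^[n] x ∈ interior (closedBall (0 : EuclideanSpace ℝ (Fin n)) 1)) := by
  open DampedShift in
  obtain ⟨N, rfl⟩ : ∃ N, n = N + 1 := ⟨n - 1, by omega⟩
  refine ⟨dampedShift N, fun x hx => ?_, fun x hx => ?_, fun h => ?_⟩
  · simpa using norm_dampedShift_le_one (by simpa using hx)
  · rw [interior_closedBall _ one_ne_zero, mem_ball_zero_iff]
    exact norm_iterate_dampedShift_lt_one (by simpa using hx)
  · have hΦ := h (boundaryOrbit N 0) (by simp [norm_boundaryOrbit])
    rw [iterate_dampedShift_boundaryOrbit le_rfl, interior_closedBall _ one_ne_zero,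
      mem_ball_zero_iff, norm_boundaryOrbit] at hΦ
    exact lt_irrefl _ hΦ
end

section
/- Let C ⊂ V be a proper cone in a finite-dimensional real vector space V. Then the supremum, over all C-primitive linear maps Ψ : V → V, of the primitivity index γ(C, Ψ) is equal to the supremum, over all soles K of C and all K-primitive affine self-maps Φ of the affine hyperplane containing K, of the affine primitivity index γ_aff(K, Φ) (both suprema taken in ℕ ∪ {∞}). -/
/-!
The two index sets coincide. If `Ψ` is `C`-primitive, its dual map is primitive on the proper cone
`C*`; maximising `λ` subject to `λ x ≤ Ψ x` over a compact sole of `C*` (Collatz–Wielandt) yields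
`f ∈ int C*` and `λ > 0` with `f ∘ Ψ = λ f`, so `λ⁻¹ Ψ` maps the sole `{f = 1}` into itself.
Conversely, an affine self-map `Φ` of the hyperplane `{f = α}` is the restriction of the linear map
`x ↦ Φ.linear x + (f x / α) • Φ 0`. In both cases the linear and the affine map agree on the sole;
since every ray of `C` meets the sole and the relative interior of the sole is `int C ∩ {f = α}`,
their `k`-th iterates are strictly positive for the same `k`, so the two indices are equal.
-/

open Metric Set Function

noncomputable section

variable {V : Type*} [NormedAddCommGroup V] [NormedSpace ℝ V]

/-- A proper cone: a convex cone which is closed, salient and generating. -/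
def IsProperCone (C : Set V) : Prop :=
  (∀ x ∈ C, ∀ y ∈ C, ∀ s t : ℝ, 0 ≤ s → 0 ≤ t → s • x + t • y ∈ C) ∧
  IsClosed C ∧ (C ∩ (-C) = {0}) ∧ (∀ v : V, ∃ x ∈ C, ∃ y ∈ C, v = x - y)

/-- The dual cone, seen inside the space of continuous linear functionals. -/
def dualConeSet (C : Set V) : Set (V →L[ℝ] ℝ) := {f | ∀ x ∈ C, 0 ≤ f x}

/-- The primitivity index `γ(C, Ψ)` of a linear map, as an element of `ℕ∞`
(it equals `⊤` when no iterate is strictly positive). -/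
def conePrimIndex (C : Set V) (Ψ : Module.End ℝ V) : ℕ∞ :=
  sInf ((↑) '' {k : ℕ | 1 ≤ k ∧ ∀ x ∈ C, x ≠ 0 → (Ψ ^ k) x ∈ interior C})

/-- The affine primitivity index `γ_aff(K, Φ)` of an affine map, as an element of
`ℕ∞`; the interior of `K` is taken inside the affine subspace it spans. -/
def affPrimIndex (K : Set V) (Φ : V →ᵃ[ℝ] V) : ℕ∞ :=
  sInf ((↑) '' {k : ℕ | 1 ≤ k ∧ ∀ x ∈ K, (⇑Φ)^[k] x ∈ intrinsicInterior ℝ K})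

open Pointwise Filter Topology

section ConvexCone

variable {W : Type*} [NormedAddCommGroup W] [NormedSpace ℝ W] {D : Set W}

def IsConvexCone (D : Set W) : Prop :=
  ∀ x ∈ D, ∀ y ∈ D, ∀ s t : ℝ, 0 ≤ s → 0 ≤ t → s • x + t • y ∈ D

lemma IsConvexCone.smul_mem (hD : IsConvexCone D) {x : W} (hx : x ∈ D) {t : ℝ} (ht : 0 ≤ t) :
    t • x ∈ D := by
  simpa using hD x hx x hx t 0 ht le_rfl

lemma IsConvexCone.add_mem (hD : IsConvexCone D) {x y : W} (hx : x ∈ D) (hy : y ∈ D) :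
    x + y ∈ D := by
  simpa using hD x hx y hy 1 1 zero_le_one zero_le_one

lemma IsConvexCone.convex (hD : IsConvexCone D) : Convex ℝ D :=
  fun x hx y hy s t hs ht _ => hD x hx y hy s t hs ht

lemma IsConvexCone.smul_mem_interior (hD : IsConvexCone D) {t : ℝ} (ht : 0 < t) {x : W}
    (hx : x ∈ interior D) : t • x ∈ interior D := by
  refine interior_mono ?_ (?_ : t • x ∈ interior (t • D))
  · rintro _ ⟨y, hy, rfl⟩
    exact hD.smul_mem hy ht.le
  rw [interior_smul₀ ht.ne']
  exact smul_mem_smul_set hx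

lemma exists_pos_sub_smul_mem_of_mem_interior_s4 {a : W} (ha : a ∈ interior D) (b : W) :
    ∃ ε : ℝ, 0 < ε ∧ a - ε • b ∈ D := by
  have hlim : Tendsto (fun ε : ℝ => a - ε • b) (𝓝[>] 0) (𝓝 a) := by
    have : Tendsto (fun ε : ℝ => a - ε • b) (𝓝 0) (𝓝 (a - (0 : ℝ) • b)) :=
      tendsto_const_nhds.sub (tendsto_id.smul_const b)
    simpa using this.mono_left nhdsWithin_le_nhds
  obtain ⟨ε, hεD, hε⟩ :=
    ((hlim.eventually (mem_interior_iff_mem_nhds.mp ha)).and self_mem_nhdsWithin).exists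
  exact ⟨ε, hε, hεD⟩

lemma nonneg_of_pos_of_ne_zero {g : W →L[ℝ] ℝ} (hg : ∀ x ∈ D, x ≠ 0 → 0 < g x) :
    ∀ x ∈ D, 0 ≤ g x := fun x hx =>
  (eq_or_ne x 0).elim (fun h => by simp [h]) fun h => (hg x hx h).le

lemma pos_of_nonneg_of_mem_interior {g : W →L[ℝ] ℝ} (hg : ∀ x ∈ D, 0 ≤ g x) (hg0 : g ≠ 0)
    {y : W} (hy : y ∈ interior D) : 0 < g y := by
  refine (hg y (interior_subset hy)).lt_of_ne fun hgy => hg0 ?_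
  have hmin : IsLocalMin g y :=
    mem_of_superset (mem_interior_iff_mem_nhds.mp hy) fun z hz => hgy ▸ hg z hz
  exact hmin.hasFDerivAt_eq_zero g.hasFDerivAt

lemma exists_pos_mul_norm_le [FiniteDimensional ℝ W] (hD : IsConvexCone D) (hcl : IsClosed D)
    {g : W →L[ℝ] ℝ} (hg : ∀ x ∈ D, x ≠ 0 → 0 < g x) : ∃ m > 0, ∀ x ∈ D, m * ‖x‖ ≤ g x := by
  have hS : IsCompact (D ∩ sphere 0 1) := (isCompact_sphere 0 1).inter_left hcl
  obtain ⟨m, hm, hmS⟩ := hS.exists_forall_le' g.continuous.continuousOn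
    fun x hx => hg x hx.1 (ne_zero_of_mem_unit_sphere ⟨x, hx.2⟩)
  refine ⟨m, hm, fun x hx => ?_⟩
  rcases eq_or_ne x 0 with rfl | hx0
  · simp
  have hxn : 0 < ‖x‖ := norm_pos_iff.mpr hx0
  have := hmS (‖x‖⁻¹ • x) ⟨hD.smul_mem hx (by positivity), by simp [norm_smul, hxn.ne']⟩
  rw [map_smul, smul_eq_mul, le_inv_mul_iff₀ hxn] at this
  linarith

lemma isCompact_sole [FiniteDimensional ℝ W] (hD : IsConvexCone D) (hcl : IsClosed D)
    {g : W →L[ℝ] ℝ} (hg : ∀ x ∈ D, x ≠ 0 → 0 < g x) (α : ℝ) :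
    IsCompact (D ∩ {x | g x = α}) := by
  obtain ⟨m, hm, hmg⟩ := exists_pos_mul_norm_le hD hcl hg
  refine isCompact_of_isClosed_isBounded
    (hcl.inter (isClosed_eq g.continuous continuous_const)) ?_
  refine isBounded_iff_forall_norm_le.mpr ⟨α / m, fun x ⟨hx, hgx⟩ => ?_⟩
  rw [le_div_iff₀ hm, mul_comm, ← hgx]
  exact hmg x hx

variable {g : W →L[ℝ] ℝ} {Ψ : Module.End ℝ W}

def collatzWielandtSet (D : Set W) (g : W →L[ℝ] ℝ) (Ψ : Module.End ℝ W) : Set (ℝ × W) :=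
  {p | p.2 ∈ D ∧ g p.2 = 1 ∧ 0 ≤ p.1 ∧ Ψ p.2 - p.1 • p.2 ∈ D}

lemma isCompact_collatzWielandtSet [FiniteDimensional ℝ W] (hD : IsConvexCone D)
    (hcl : IsClosed D) (hg : ∀ x ∈ D, x ≠ 0 → 0 < g x) (Ψ : Module.End ℝ W) :
    IsCompact (collatzWielandtSet D g Ψ) := by
  have hS := isCompact_sole hD hcl hg 1
  have hΨc : Continuous Ψ := LinearMap.continuous_of_finiteDimensional Ψ
  obtain ⟨B, hB⟩ := (hS.image (g.continuous.comp hΨc)).bddAbove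
  have hclosed : IsClosed (collatzWielandtSet D g Ψ) :=
    (hcl.preimage continuous_snd).inter <|
      (isClosed_eq (g.continuous.comp continuous_snd) continuous_const).inter <|
      (isClosed_le continuous_const continuous_fst).inter <|
      hcl.preimage ((hΨc.comp continuous_snd).sub (continuous_fst.smul continuous_snd))
  refine ((isCompact_Icc (a := 0) (b := B)).prod hS).of_isClosed_subset hclosed ?_
  rintro ⟨l, x⟩ ⟨hx, hgx, hl, hlx⟩
  refine ⟨⟨hl, ?_⟩, hx, hgx⟩
  have hle : 0 ≤ g (Ψ x - l • x) := nonneg_of_pos_of_ne_zero hg _ hlx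
  rw [map_sub, map_smul, hgx, smul_eq_mul, mul_one, sub_nonneg] at hle
  exact hle.trans (hB ⟨x, ⟨hx, hgx⟩, rfl⟩)

/-- If `(λ, u)` maximizes `λ`, then `Ψ u - λ u` is zero: otherwise a strictly positive power of
`Ψ` pushes it into the interior of `D`, and then `(Ψ ^ k) u` admits a strictly larger `λ`. -/
lemma apply_eq_smul_of_isMaxOn (hD : IsConvexCone D) (hg : ∀ x ∈ D, x ≠ 0 → 0 < g x) {k : ℕ}
    (hstrict : ∀ x ∈ D, x ≠ 0 → (Ψ ^ k) x ∈ interior D) {l : ℝ} {u : W}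
    (hmem : (l, u) ∈ collatzWielandtSet D g Ψ)
    (hmax : IsMaxOn Prod.fst (collatzWielandtSet D g Ψ) (l, u)) : Ψ u = l • u := by
  obtain ⟨hu, hgu, hl, hlu⟩ := hmem
  by_contra hne
  have hg0 : g ≠ 0 := fun h => by simp [h] at hgu
  set z := (Ψ ^ k) u
  have hz : z ∈ interior D := hstrict u hu fun h => by simp [h] at hgu
  have hgz : 0 < g z := pos_of_nonneg_of_mem_interior (nonneg_of_pos_of_ne_zero hg) hg0 hz
  have hlz : Ψ z - l • z ∈ interior D := by
    have hcomm : (Ψ ^ k) (Ψ u) = Ψ z := by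
      rw [← Module.End.mul_apply, ← pow_succ, pow_succ', Module.End.mul_apply]
    simpa [hcomm] using hstrict _ hlu (sub_ne_zero.mpr hne)
  obtain ⟨ε, hε, hεz⟩ := exists_pos_sub_smul_mem_of_mem_interior_s4 hlz z
  have hbetter : (l + ε, (g z)⁻¹ • z) ∈ collatzWielandtSet D g Ψ := by
    refine ⟨hD.smul_mem (interior_subset hz) (by positivity), ?_, by positivity, ?_⟩
    · simp [hgz.ne']
    · convert hD.smul_mem hεz (inv_pos.mpr hgz).le using 1
      rw [map_smul]
      module
  have : l + ε ≤ l := hmax hbetter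
  linarith

theorem exists_eigenvector_mem_interior [FiniteDimensional ℝ W] (hD : IsConvexCone D)
    (hcl : IsClosed D) (hg : ∀ x ∈ D, x ≠ 0 → 0 < g x) {x : W} (hx : x ∈ D) (hx0 : x ≠ 0)
    (hΨ : ∀ y ∈ D, Ψ y ∈ D) {k : ℕ} (hk : k ≠ 0)
    (hstrict : ∀ y ∈ D, y ≠ 0 → (Ψ ^ k) y ∈ interior D) :
    ∃ u ∈ interior D, ∃ l : ℝ, 0 < l ∧ Ψ u = l • u := by
  have hgx := hg x hx hx0
  have hne : (collatzWielandtSet D g Ψ).Nonempty :=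
    ⟨(0, (g x)⁻¹ • x), hD.smul_mem hx (by positivity), by simp [hgx.ne'], le_rfl,
      by simpa using hΨ _ (hD.smul_mem hx (inv_pos.mpr hgx).le)⟩
  obtain ⟨⟨l, u⟩, hmem, hmax⟩ :=
    (isCompact_collatzWielandtSet hD hcl hg Ψ).exists_isMaxOn hne continuous_fst.continuousOn
  have heig := apply_eq_smul_of_isMaxOn hD hg hstrict hmem hmax
  obtain ⟨hu, hgu, hl, -⟩ := hmem
  have hg0 : g ≠ 0 := fun h => by simp [h] at hgu
  have hpow : ∀ n : ℕ, (Ψ ^ n) u = l ^ n • u := fun n => by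
    induction n with
    | zero => simp
    | succ n ih => rw [pow_succ, Module.End.mul_apply, heig, map_smul, ih, smul_smul, ← pow_succ']
  have hint : (Ψ ^ k) u ∈ interior D := hstrict u hu fun h => by simp [h] at hgu
  have hlk : 0 < l ^ k := by
    simpa [hpow, hgu] using
      pos_of_nonneg_of_mem_interior (nonneg_of_pos_of_ne_zero hg) hg0 hint
  refine ⟨u, ?_, l, hl.lt_of_ne ?_, heig⟩
  · simpa [hpow, smul_smul, hlk.ne'] using hD.smul_mem_interior (inv_pos.mpr hlk) hint
  rintro rfl
  simp [zero_pow hk] at hlk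

end ConvexCone

section DualCone

variable {C : Set V}

lemma isClosed_dualConeSet (C : Set V) : IsClosed (dualConeSet C) := by
  simp only [dualConeSet, ofPred_forall]
  exact isClosed_biInter fun x _ => isClosed_le continuous_const (continuous_eval_const x)

lemma isConvexCone_dualConeSet (C : Set V) : IsConvexCone (dualConeSet C) :=
  fun f hf g hg s t hs ht x hx => by
    simpa using add_nonneg (mul_nonneg hs (hf x hx)) (mul_nonneg ht (hg x hx))

lemma pos_of_mem_interior_dualConeSet {f : V →L[ℝ] ℝ} (hf : f ∈ interior (dualConeSet C))
    {x : V} (hx : x ∈ C) (hx0 : x ≠ 0) : 0 < f x := by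
  obtain ⟨g, hg⟩ := SeparatingDual.exists_eq_one (R := ℝ) hx0
  obtain ⟨ε, hε, hεf⟩ := exists_pos_sub_smul_mem_of_mem_interior_s4 hf g
  have := hεf x hx
  simp only [sub_apply, smul_apply, hg, smul_eq_mul, mul_one, sub_nonneg] at this
  linarith

lemma mem_interior_dualConeSet [FiniteDimensional ℝ V] (hC : IsConvexCone C) (hcl : IsClosed C)
    {f : V →L[ℝ] ℝ} (hf : ∀ x ∈ C, x ≠ 0 → 0 < f x) : f ∈ interior (dualConeSet C) := by
  obtain ⟨m, hm, hmf⟩ := exists_pos_mul_norm_le hC hcl hf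
  refine mem_interior.mpr ⟨ball f m, fun g hg x hx => ?_, isOpen_ball, mem_ball_self hm⟩
  have hfg : ‖f - g‖ < m := by rwa [mem_ball, dist_comm, dist_eq_norm] at hg
  have hdiff := (f - g).le_opNorm x
  rw [sub_apply, Real.norm_eq_abs] at hdiff
  nlinarith [le_abs_self (f x - g x), hmf x hx, norm_nonneg x]

lemma exists_ne_zero_mem_dualConeSet [Nontrivial V] (hC : IsConvexCone C) (hcl : IsClosed C)
    (hsal : C ∩ -C = {0}) : ∃ f ∈ dualConeSet C, f ≠ 0 := by
  obtain ⟨v, hv⟩ : ∃ v, v ∉ C := by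
    obtain ⟨u, hu⟩ := exists_ne (0 : V)
    by_contra! h
    exact hu (hsal.subset ⟨h u, h (-u)⟩)
  let K : ProperCone ℝ V :=
    { carrier := C
      add_mem' := hC.add_mem
      zero_mem' := (hsal.symm.subset rfl).1
      smul_mem' := fun c _ hx => hC.smul_mem hx c.2
      isClosed' := hcl }
  obtain ⟨f, hf, hfv⟩ := K.hyperplane_separation_point (x₀ := v) hv
  exact ⟨f, hf, fun h => by simp [h] at hfv⟩

lemma interior_nonempty_of_generating [FiniteDimensional ℝ V] (hC : IsConvexCone C)
    (hgen : ∀ v : V, ∃ x ∈ C, ∃ y ∈ C, v = x - y) : (interior C).Nonempty := by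
  obtain ⟨x, hx, -⟩ := hgen 0
  rw [hC.convex.interior_nonempty_iff_affineSpan_eq_top,
    ← AffineSubspace.direction_eq_top_iff_of_nonempty ⟨x, subset_affineSpan ℝ C hx⟩,
    direction_affineSpan, Submodule.eq_top_iff']
  intro v
  obtain ⟨a, ha, b, hb, rfl⟩ := hgen v
  exact vsub_mem_vectorSpan ℝ ha hb

theorem exists_eigenvector_mem_interior_dualConeSet [FiniteDimensional ℝ V]
    (hC : IsProperCone C) {Ψ : Module.End ℝ V} (hΨ : ∀ x ∈ C, Ψ x ∈ C) {k : ℕ} (hk : k ≠ 0)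
    (hstrict : ∀ x ∈ C, x ≠ 0 → (Ψ ^ k) x ∈ interior C) :
    ∃ f ∈ interior (dualConeSet C), ∃ l : ℝ, 0 < l ∧ ∀ x, f (Ψ x) = l * f x := by
  obtain ⟨hcone, hcl, hsal, hgen⟩ := hC
  rcases subsingleton_or_nontrivial V with hV | hV
  · have : dualConeSet C = univ :=
      eq_univ_of_forall fun f x _ => by simp [Subsingleton.elim x 0]
    exact ⟨0, by simp [this], 1, one_pos, by simp⟩
  obtain ⟨x₀, hx₀⟩ := interior_nonempty_of_generating hcone hgen
  obtain ⟨f₀, hf₀, hf₀0⟩ := exists_ne_zero_mem_dualConeSet hcone hcl hsal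
  let Ψd : Module.End ℝ (V →L[ℝ] ℝ) :=
    (ContinuousLinearMap.precomp (σ := RingHom.id ℝ) (τ := RingHom.id ℝ) ℝ
      (LinearMap.toContinuousLinearMap Ψ)).toLinearMap
  have hΨd : ∀ (n : ℕ) (f : V →L[ℝ] ℝ) (x : V), (Ψd ^ n) f x = f ((Ψ ^ n) x) := fun n => by
    induction n with
    | zero => simp
    | succ n ih =>
      intro f x
      rw [pow_succ, Module.End.mul_apply, ih, pow_succ', Module.End.mul_apply]
      rfl
  obtain ⟨f, hf, l, hl, hfl⟩ := exists_eigenvector_mem_interior (isConvexCone_dualConeSet C)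
    (isClosed_dualConeSet C) (g := ContinuousLinearMap.apply ℝ ℝ x₀)
    (fun f hf hf0 => pos_of_nonneg_of_mem_interior hf hf0 hx₀) hf₀ hf₀0 (Ψ := Ψd)
    (fun f hf x hx => hf _ (hΨ x hx)) hk
    (fun f hf hf0 => mem_interior_dualConeSet hcone hcl fun x hx hx0 => by
      rw [hΨd]; exact pos_of_nonneg_of_mem_interior hf hf0 (hstrict x hx hx0))
  exact ⟨f, hf, l, hl, fun x => congrArg (· x) hfl⟩

end DualCone

lemma mem_intrinsicInterior_iff_mem_nhdsWithin {𝕜 E P : Type*} [Ring 𝕜] [AddCommGroup E]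
    [Module 𝕜 E] [TopologicalSpace P] [AddTorsor E P] {s : Set P} {x : P} :
    x ∈ intrinsicInterior 𝕜 s ↔ x ∈ affineSpan 𝕜 s ∧ s ∈ 𝓝[affineSpan 𝕜 s] x := by
  rw [mem_intrinsicInterior]
  constructor
  · rintro ⟨y, hy, rfl⟩
    exact ⟨y.2, preimage_coe_mem_nhds_subtype.mp (mem_interior_iff_mem_nhds.mp hy)⟩
  · rintro ⟨hx, hs⟩
    exact ⟨⟨x, hx⟩, mem_interior_iff_mem_nhds.mpr (preimage_coe_mem_nhds_subtype.mpr hs), rfl⟩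

section Sole

variable {C : Set V} {f : V →L[ℝ] ℝ} {α : ℝ}

lemma smul_mem_sole (hC : IsConvexCone C) {x : V} (hx : x ∈ C) (hfx : 0 < f x) (hα : 0 ≤ α) :
    (α / f x) • x ∈ C ∩ {y | f y = α} :=
  ⟨hC.smul_mem hx (by positivity), by simp [hfx.ne']⟩

lemma coe_affineSpan_sole (hC : IsConvexCone C) (hgen : ∀ v : V, ∃ x ∈ C, ∃ y ∈ C, v = x - y)
    (hf : ∀ x ∈ C, 0 ≤ f x) (hα : 0 < α) (hK : (C ∩ {y | f y = α}).Nonempty) :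
    (affineSpan ℝ (C ∩ {y | f y = α}) : Set V) = {y | f y = α} := by
  obtain ⟨x₁, hx₁, hfx₁ : f x₁ = α⟩ := hK
  refine Subset.antisymm ?_ fun y (hy : f y = α) => ?_
  · have : affineSpan ℝ (C ∩ {y | f y = α}) ≤
        (affineSpan ℝ {α}).comap (f : V →ₗ[ℝ] ℝ).toAffineMap :=
      affineSpan_le.mpr fun y hy => by simpa using hy.2
    exact fun y hy => by simpa using this hy
  obtain ⟨a, ha, b, hb, hab⟩ := hgen (y - x₁)
  have hfab : f a = f b := by
    have := congrArg f hab
    simp only [map_sub, hy, hfx₁, sub_self] at this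
    linarith
  have hpos : 0 < f (a + x₁) := by simp only [map_add, hfx₁]; linarith [hf a ha]
  set s := α / f (a + x₁)
  have ha' := smul_mem_sole hC (hC.add_mem ha hx₁) hpos hα.le
  have hb' : s • (b + x₁) ∈ C ∩ {y | f y = α} := by
    simpa [s, hfab] using smul_mem_sole hC (hC.add_mem hb hx₁) (by simpa [hfab] using hpos) hα.le
  have hy : y = s⁻¹ • (s • (a + x₁) -ᵥ s • (b + x₁)) +ᵥ x₁ := by
    rw [vsub_eq_sub, ← smul_sub, smul_smul, inv_mul_cancel₀ (by positivity), one_smul,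
      add_sub_add_right_eq_sub, ← hab, vadd_eq_add, sub_add_cancel]
  rw [hy]
  refine AffineSubspace.vadd_mem_of_mem_direction ?_ (subset_affineSpan ℝ _ ⟨hx₁, hfx₁⟩)
  rw [direction_affineSpan]
  exact Submodule.smul_mem _ _ (vsub_mem_vectorSpan ℝ ha' hb')

theorem intrinsicInterior_sole (hC : IsConvexCone C)
    (hgen : ∀ v : V, ∃ x ∈ C, ∃ y ∈ C, v = x - y) (hf : ∀ x ∈ C, x ≠ 0 → 0 < f x)
    (hα : 0 < α) :
    intrinsicInterior ℝ (C ∩ {y | f y = α}) = interior C ∩ {y | f y = α} := by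
  rcases (C ∩ {y | f y = α}).eq_empty_or_nonempty with hK | hK
  · rw [hK, intrinsicInterior_empty]
    exact (subset_empty_iff.mp (hK ▸ inter_subset_inter_left _ interior_subset)).symm
  ext y
  rw [mem_intrinsicInterior_iff_mem_nhdsWithin, ← SetLike.mem_coe,
    coe_affineSpan_sole hC hgen (nonneg_of_pos_of_ne_zero hf) hα hK]
  constructor
  · rintro ⟨hy : f y = α, hKy⟩
    refine ⟨?_, hy⟩
    have hfy : f y ≠ 0 := hy ▸ hα.ne'
    -- `w ↦ (α / f w) • w` retracts a neighbourhood of `y` onto the hyperplane `f = α`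
    have hρ : Tendsto (fun w => (α / f w) • w) (𝓝 y) (𝓝[{y | f y = α}] y) := by
      refine tendsto_nhdsWithin_iff.mpr ⟨?_, ?_⟩
      · have : ContinuousAt (fun w => (α / f w) • w) y :=
          (continuousAt_const.div f.continuous.continuousAt hfy).smul continuousAt_id
        simpa [hy, hα.ne'] using this.tendsto
      · filter_upwards [f.continuous.continuousAt.eventually_ne hfy] with w hw
        simp [hw]
    have hpos : ∀ᶠ w in 𝓝 y, 0 < f w :=
      f.continuous.continuousAt.eventually (lt_mem_nhds (hy ▸ hα))
    rw [mem_interior_iff_mem_nhds]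
    filter_upwards [hρ hKy, hpos] with w hw hfw
    simpa [smul_smul, hα.ne', hfw.ne'] using hC.smul_mem hw.1 (by positivity : 0 ≤ f w / α)
  · rintro ⟨hy, hyα⟩
    exact ⟨hyα, mem_nhdsWithin.mpr
      ⟨interior C, isOpen_interior, hy, fun z hz => ⟨interior_subset hz.1, hz.2⟩⟩⟩

end Sole

lemma Set.EqOn.iterate {β : Type*} {φ ψ : β → β} {s : Set β} (hψ : MapsTo ψ s s)
    (h : EqOn φ ψ s) (n : ℕ) : EqOn φ^[n] ψ^[n] s := by
  induction n with
  | zero => exact fun _ _ => rfl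
  | succ n ih =>
    intro x hx
    rw [Function.iterate_succ_apply', Function.iterate_succ_apply', ih hx,
      h (hψ.iterate n hx)]

section PrimitivityIndex

variable {C : Set V} {f : V →L[ℝ] ℝ} {α : ℝ} {Ψ : Module.End ℝ V} {Φ : V →ᵃ[ℝ] V}

lemma smul_pow_apply_mem_interior_iff (hC : IsConvexCone C) {c : ℝ} (hc : 0 < c) (k : ℕ)
    (x : V) : ((c • Ψ) ^ k) x ∈ interior C ↔ (Ψ ^ k) x ∈ interior C := by
  have hck := pow_pos hc k
  rw [smul_pow, LinearMap.smul_apply]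
  refine ⟨fun h => ?_, hC.smul_mem_interior hck⟩
  simpa [smul_smul, hck.ne'] using hC.smul_mem_interior (inv_pos.mpr hck) h

lemma conePrimIndex_smul (hC : IsConvexCone C) {c : ℝ} (hc : 0 < c) (Ψ : Module.End ℝ V) :
    conePrimIndex C (c • Ψ) = conePrimIndex C Ψ := by
  simp only [conePrimIndex, smul_pow_apply_mem_interior_iff hC hc]

theorem pow_mem_interior_iff_iterate_mem_intrinsicInterior (hC : IsConvexCone C)
    (hgen : ∀ v : V, ∃ x ∈ C, ∃ y ∈ C, v = x - y) (hf : ∀ x ∈ C, x ≠ 0 → 0 < f x)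
    (hα : 0 < α) (hΨ : ∀ x, f x = α → f (Ψ x) = α) (hΦ : ∀ x, f x = α → Φ x = Ψ x) (k : ℕ) :
    (∀ x ∈ C, x ≠ 0 → (Ψ ^ k) x ∈ interior C) ↔
      ∀ x ∈ C ∩ {y | f y = α}, (⇑Φ)^[k] x ∈ intrinsicInterior ℝ (C ∩ {y | f y = α}) := by
  have hiter : EqOn (⇑Φ)^[k] ⇑(Ψ ^ k) {y | f y = α} := by
    rw [Module.End.coe_pow]
    exact EqOn.iterate hΨ hΦ k
  have hH : MapsTo ⇑(Ψ ^ k) {y | f y = α} {y | f y = α} := by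
    rw [Module.End.coe_pow]
    exact MapsTo.iterate hΨ k
  rw [intrinsicInterior_sole hC hgen hf hα]
  constructor
  · rintro h x ⟨hx, hfx⟩
    rw [hiter hfx]
    refine ⟨h x hx ?_, hH hfx⟩
    rintro rfl
    simp [hα.ne] at hfx
  · intro h x hx hx0
    have hfx := hf x hx hx0
    have hxK := smul_mem_sole hC hx hfx hα.le
    have := (h _ hxK).1
    rw [hiter hxK.2, map_smul] at this
    simpa [smul_smul, hα.ne', hfx.ne'] using hC.smul_mem_interior (div_pos hfx hα) this

theorem conePrimIndex_eq_affPrimIndex (hC : IsConvexCone C)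
    (hgen : ∀ v : V, ∃ x ∈ C, ∃ y ∈ C, v = x - y) (hf : ∀ x ∈ C, x ≠ 0 → 0 < f x)
    (hα : 0 < α) (hΨ : ∀ x, f x = α → f (Ψ x) = α) (hΦ : ∀ x, f x = α → Φ x = Ψ x) :
    conePrimIndex C Ψ = affPrimIndex (C ∩ {y | f y = α}) Φ := by
  simp only [conePrimIndex, affPrimIndex,
    pow_mem_interior_iff_iterate_mem_intrinsicInterior hC hgen hf hα hΨ hΦ]

end PrimitivityIndex

section Homogenization

variable {C : Set V} {f : V →L[ℝ] ℝ} {α : ℝ} {Φ : V →ᵃ[ℝ] V}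

def homogenization (f : V →L[ℝ] ℝ) (α : ℝ) (Φ : V →ᵃ[ℝ] V) : Module.End ℝ V :=
  Φ.linear + α⁻¹ • (f : V →ₗ[ℝ] ℝ).smulRight (Φ 0)

lemma homogenization_apply_of_eq (hα : α ≠ 0) {x : V} (hx : f x = α) :
    homogenization f α Φ x = Φ x := by
  simpa [homogenization, smul_smul, hx, hα] using (Φ.map_vadd 0 x).symm

lemma homogenization_mem (hC : IsConvexCone C) (h0 : (0 : V) ∈ C)
    (hf : ∀ x ∈ C, x ≠ 0 → 0 < f x) (hα : 0 < α)
    (hΦ : ∀ x ∈ C ∩ {y | f y = α}, Φ x ∈ C ∩ {y | f y = α}) {x : V} (hx : x ∈ C) :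
    homogenization f α Φ x ∈ C := by
  rcases eq_or_ne x 0 with rfl | hx0
  · simpa using h0
  have hfx := hf x hx hx0
  have hxK := smul_mem_sole hC hx hfx hα.le
  have := hC.smul_mem (hΦ _ hxK).1 (div_pos hfx hα).le
  rwa [← homogenization_apply_of_eq hα.ne' hxK.2, ← map_smul, smul_smul,
    div_mul_div_cancel₀ hα.ne', div_self hfx.ne', one_smul] at this

end Homogenization

section PrimitiveIndexSets

variable {C : Set V}

def conePrimIndexSet (C : Set V) : Set ℕ∞ :=
  {N | ∃ Ψ : Module.End ℝ V, (∀ x ∈ C, Ψ x ∈ C) ∧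
    (∃ k : ℕ, 1 ≤ k ∧ ∀ x ∈ C, x ≠ 0 → (Ψ ^ k) x ∈ interior C) ∧ N = conePrimIndex C Ψ}

def solePrimIndexSet (C : Set V) : Set ℕ∞ :=
  {N | ∃ f ∈ interior (dualConeSet C), ∃ α : ℝ, 0 < α ∧ ∃ Φ : V →ᵃ[ℝ] V,
    (∀ x : V, f x = α → f (Φ x) = α) ∧
    (∀ x ∈ C ∩ {y | f y = α}, Φ x ∈ C ∩ {y | f y = α}) ∧
    (∃ k : ℕ, 1 ≤ k ∧ ∀ x ∈ C ∩ {y | f y = α},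
      (⇑Φ)^[k] x ∈ intrinsicInterior ℝ (C ∩ {y | f y = α})) ∧
    N = affPrimIndex (C ∩ {y | f y = α}) Φ}

lemma conePrimIndexSet_subset [FiniteDimensional ℝ V] (hC : IsProperCone C) :
    conePrimIndexSet C ⊆ solePrimIndexSet C := by
  rintro _ ⟨Ψ, hΨ, ⟨k, hk, hstrict⟩, rfl⟩
  obtain ⟨f, hf, l, hl, hfl⟩ :=
    exists_eigenvector_mem_interior_dualConeSet hC hΨ (by omega) hstrict
  obtain ⟨hcone : IsConvexCone C, -, -, hgen⟩ := hC
  have hfpos : ∀ x ∈ C, x ≠ 0 → 0 < f x := fun _ => pos_of_mem_interior_dualConeSet hf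
  set Ψ' := l⁻¹ • Ψ
  have hΨ' : ∀ x, f x = 1 → f (Ψ' x) = 1 := fun x hx => by simp [Ψ', hfl, hx, hl.ne']
  have hiff := pow_mem_interior_iff_iterate_mem_intrinsicInterior hcone hgen hfpos one_pos
    hΨ' (Φ := Ψ'.toAffineMap) fun _ _ => rfl
  refine ⟨f, hf, 1, one_pos, Ψ'.toAffineMap, hΨ',
    fun x hx => ⟨hcone.smul_mem (hΨ x hx.1) (inv_nonneg.mpr hl.le), hΨ' x hx.2⟩,
    ⟨k, hk, (hiff k).mp fun x hx hx0 => ?_⟩, ?_⟩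
  · exact (smul_pow_apply_mem_interior_iff hcone (inv_pos.mpr hl) k x).mpr (hstrict x hx hx0)
  · rw [← conePrimIndex_eq_affPrimIndex hcone hgen hfpos one_pos hΨ' fun _ _ => rfl,
      conePrimIndex_smul hcone (inv_pos.mpr hl)]

lemma solePrimIndexSet_subset (hC : IsProperCone C) : solePrimIndexSet C ⊆ conePrimIndexSet C := by
  rintro _ ⟨f, hf, α, hα, Φ, hH, hK, ⟨k, hk, hstrict⟩, rfl⟩
  obtain ⟨hcone : IsConvexCone C, -, hsal, hgen⟩ := hC
  have hfpos : ∀ x ∈ C, x ≠ 0 → 0 < f x := fun _ => pos_of_mem_interior_dualConeSet hf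
  have hΦ : ∀ x, f x = α → Φ x = homogenization f α Φ x :=
    fun x hx => (homogenization_apply_of_eq hα.ne' hx).symm
  have hΨ : ∀ x, f x = α → f (homogenization f α Φ x) = α :=
    fun x hx => hΦ x hx ▸ hH x hx
  have h0 : (0 : V) ∈ C := (hsal.symm.subset rfl).1
  refine ⟨homogenization f α Φ, fun x => homogenization_mem hcone h0 hfpos hα hK,
    ⟨k, hk, (pow_mem_interior_iff_iterate_mem_intrinsicInterior hcone hgen hfpos hα hΨ hΦ
      k).mpr hstrict⟩, (conePrimIndex_eq_affPrimIndex hcone hgen hfpos hα hΨ hΦ).symm⟩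

end PrimitiveIndexSets

/-- The maximal exponent of a proper cone `C` is the supremum of the affine
maximal exponents of its soles `K = C ∩ {f = α}`, where `f ∈ int C*`, `α > 0`,
and the affine maps considered are self-maps of the hyperplane `{f = α}`
preserving `K`. -/
theorem maximal_exponent_eq_sup_over_soles
    [FiniteDimensional ℝ V] (C : Set V) (hC : IsProperCone C) :
    sSup {N : ℕ∞ | ∃ Ψ : Module.End ℝ V, (∀ x ∈ C, Ψ x ∈ C) ∧
        (∃ k : ℕ, 1 ≤ k ∧ ∀ x ∈ C, x ≠ 0 → (Ψ ^ k) x ∈ interior C) ∧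
        N = conePrimIndex C Ψ} =
    sSup {N : ℕ∞ | ∃ f ∈ interior (dualConeSet C), ∃ α : ℝ, 0 < α ∧
        ∃ Φ : V →ᵃ[ℝ] V,
          (∀ x : V, f x = α → f (Φ x) = α) ∧
          (∀ x ∈ C ∩ {y | f y = α}, Φ x ∈ C ∩ {y | f y = α}) ∧
          (∃ k : ℕ, 1 ≤ k ∧ ∀ x ∈ C ∩ {y | f y = α},
            (⇑Φ)^[k] x ∈ intrinsicInterior ℝ (C ∩ {y | f y = α})) ∧
          N = affPrimIndex (C ∩ {y | f y = α}) Φ} :=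
  congrArg sSup ((conePrimIndexSet_subset hC).antisymm (solePrimIndexSet_subset hC))
end
end

section
/- Let n ≥ 1 and let f : ℝ^n → ℝ^n be an affine map such that the ellipsoid E = f(B_n) satisfies E ⊆ B_n. Then E ∩ S^{n-1} is a subsphere of S^{n-1}, i.e., there exists an affine subspace W of ℝ^n such that E ∩ S^{n-1} = W ∩ S^{n-1}. -/
open Metric Set
open scoped RealInnerProductSpace

private lemma aux_le_zero {a b c : ℝ} (h : ∀ ε : ℝ, ε ≠ 0 → c ≤ b * ε + a * ε ^ 2) :
    c ≤ 0 := by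
  by_contra hc
  push_neg at hc
  set ε : ℝ := min 1 (c / (2 * (|a| + 1))) with hεdef
  have hεpos : 0 < ε := lt_min one_pos (by positivity)
  have h1 := h ε hεpos.ne'
  have h2 := h (-ε) (neg_ne_zero.mpr hεpos.ne')
  have hε1 : ε ≤ 1 := min_le_left _ _
  have hε2 : ε * (2 * (|a| + 1)) ≤ c := by
    rw [← le_div_iff₀ (by positivity)]
    exact min_le_right _ _
  have ha : a ≤ |a| := le_abs_self a
  nlinarith [abs_nonneg a, hεpos, mul_pos hεpos hεpos]

private lemma aux_eq_zero {a b : ℝ} (ha : 0 ≤ a) (h : ∀ t : ℝ, 0 ≤ a * t ^ 2 + b * t) :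
    b = 0 := by
  have hpos : (0:ℝ) < 2 * (a + 1) := by linarith
  have h1 := h (-(b / (2 * (a + 1))))
  have h2 : b / (2 * (a + 1)) * (2 * (a + 1)) = b := div_mul_cancel₀ b hpos.ne'
  have h3 : b * (b / (2 * (a + 1))) = 2 * (a + 1) * (b / (2 * (a + 1))) ^ 2 := by
    field_simp
  have hs2 : (b / (2 * (a + 1))) ^ 2 ≤ 0 := by
    nlinarith [sq_nonneg (b / (2 * (a + 1)))]
  have hs : b / (2 * (a + 1)) = 0 :=
    sq_eq_zero_iff.mp (le_antisymm hs2 (sq_nonneg _))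
  rcases div_eq_zero_iff.mp hs with h' | h'
  · exact h'
  · linarith

private lemma norm_eq_one_of_sq {E : Type*} [NormedAddCommGroup E] {x : E}
    (h : ‖x‖ ^ 2 = 1) : ‖x‖ = 1 := by
  have h1 : ‖x‖ = Real.sqrt (‖x‖ ^ 2) := (Real.sqrt_sq (norm_nonneg _)).symm
  rw [h1, h, Real.sqrt_one]

private lemma eq_zero_of_norm_sq {E : Type*} [NormedAddCommGroup E] {x : E}
    (h : ‖x‖ ^ 2 = 0) : x = 0 :=
  norm_eq_zero.mp (sq_eq_zero_iff.mp h)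

/-- If `f` maps the closed unit ball into itself and some interior point of the ball
is mapped to the unit sphere, then the linear part of `f` vanishes. -/
private lemma linear_zero_of_interior {n : ℕ}
    (f : EuclideanSpace ℝ (Fin n) →ᵃ[ℝ] EuclideanSpace ℝ (Fin n))
    (hE : f '' closedBall (0 : EuclideanSpace ℝ (Fin n)) 1 ⊆ closedBall 0 1)
    {u : EuclideanSpace ℝ (Fin n)} (hu : ‖u‖ < 1) (hfu : ‖f u‖ = 1) :
    ∀ w, f.linear w = 0 := by
  have hMap : ∀ y z : EuclideanSpace ℝ (Fin n), f y = f.linear (y - z) + f z := by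
    intro y z
    simpa [vadd_eq_add, sub_add_cancel] using f.map_vadd z (y - z)
  intro w
  rcases eq_or_ne w 0 with rfl | hw
  · exact f.linear.map_zero
  have hwn : (0:ℝ) < ‖w‖ := norm_pos_iff.mpr hw
  obtain ⟨δ, hδdef⟩ : ∃ δ : ℝ, δ = 1 - ‖u‖ := ⟨_, rfl⟩
  have hδ : 0 < δ := by rw [hδdef]; linarith
  obtain ⟨v, hvdef⟩ : ∃ v : EuclideanSpace ℝ (Fin n), v = (δ / ‖w‖) • w := ⟨_, rfl⟩
  have hnv : ‖v‖ = δ := by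
    rw [hvdef, norm_smul, Real.norm_eq_abs, abs_div, abs_of_pos hδ, abs_of_pos hwn,
      div_mul_cancel₀ _ hwn.ne']
  have h1 : ‖f (u + v)‖ ≤ 1 := by
    have hm : u + v ∈ closedBall (0 : EuclideanSpace ℝ (Fin n)) 1 := by
      rw [mem_closedBall_zero_iff]
      calc ‖u + v‖ ≤ ‖u‖ + ‖v‖ := norm_add_le _ _
        _ = 1 := by rw [hnv, hδdef]; ring
    simpa [mem_closedBall_zero_iff] using hE ⟨u + v, hm, rfl⟩
  have h2 : ‖f (u - v)‖ ≤ 1 := by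
    have hm : u - v ∈ closedBall (0 : EuclideanSpace ℝ (Fin n)) 1 := by
      rw [mem_closedBall_zero_iff]
      calc ‖u - v‖ ≤ ‖u‖ + ‖v‖ := norm_sub_le _ _
        _ = 1 := by rw [hnv, hδdef]; ring
    simpa [mem_closedBall_zero_iff] using hE ⟨u - v, hm, rfl⟩
  have e1 : f (u + v) = f u + f.linear v := by
    rw [hMap (u + v) u, show u + v - u = v by abel, add_comm]
  have e2 : f (u - v) = f u - f.linear v := by
    rw [hMap (u - v) u, show u - v - u = -v by abel, map_neg, neg_add_eq_sub]
  have hpar := parallelogram_law_with_norm ℝ (f u) (f.linear v)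
  rw [e1] at h1
  rw [e2] at h2
  have hTv : f.linear v = 0 := by
    have hn1 : (0:ℝ) ≤ ‖f u + f.linear v‖ := norm_nonneg _
    have hn2 : (0:ℝ) ≤ ‖f u - f.linear v‖ := norm_nonneg _
    have hle : ‖f.linear v‖ * ‖f.linear v‖ ≤ 0 := by nlinarith
    have : ‖f.linear v‖ = 0 := by nlinarith [norm_nonneg (f.linear v)]
    exact norm_eq_zero.mp this
  have hsm : (δ / ‖w‖) • f.linear w = 0 := by
    rw [← f.linear.map_smul, ← hvdef]
    exact hTv
  rcases smul_eq_zero.mp hsm with h | h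
  · exact absurd h (div_ne_zero hδ.ne' hwn.ne')
  · exact h

set_option maxHeartbeats 2000000 in
/-- If an ellipsoid `E = f(B_n)` (the image of the closed unit ball under an
affine map) is contained in the closed unit ball, then its intersection with the
unit sphere is a subsphere: it is the intersection of the sphere with an affine
subspace. -/
theorem ellipsoid_inter_sphere_subsphere
    (n : ℕ) (hn : 1 ≤ n)
    (f : EuclideanSpace ℝ (Fin n) →ᵃ[ℝ] EuclideanSpace ℝ (Fin n))
    (hE : f '' closedBall (0 : EuclideanSpace ℝ (Fin n)) 1 ⊆ closedBall 0 1) :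
    ∃ W : AffineSubspace ℝ (EuclideanSpace ℝ (Fin n)),
      (f '' closedBall (0 : EuclideanSpace ℝ (Fin n)) 1) ∩ sphere 0 1 =
        (W : Set (EuclideanSpace ℝ (Fin n))) ∩ sphere 0 1 := by
  have hMap : ∀ y z : EuclideanSpace ℝ (Fin n), f y = f.linear (y - z) + f z := by
    intro y z
    simpa [vadd_eq_add, sub_add_cancel] using f.map_vadd z (y - z)
  have hball : ∀ x : EuclideanSpace ℝ (Fin n), ‖x‖ ≤ 1 → ‖f x‖ ≤ 1 := by
    intro x hx
    simpa [mem_closedBall_zero_iff] using hE ⟨x, mem_closedBall_zero_iff.mpr hx, rfl⟩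
  -- a unit vector (n ≥ 1)
  obtain ⟨e₀, he₀n⟩ : ∃ e₀ : EuclideanSpace ℝ (Fin n), ‖e₀‖ = 1 := by
    refine ⟨EuclideanSpace.single (⟨0, hn⟩ : Fin n) (1:ℝ), ?_⟩
    rw [EuclideanSpace.norm_single]
    norm_num
  by_cases hK : ∃ u : EuclideanSpace ℝ (Fin n), ‖u‖ = 1 ∧ ‖f u‖ = 1
  · obtain ⟨u₀, hu₀, hfu₀⟩ := hK
    obtain ⟨g, hg⟩ : ∃ g : EuclideanSpace ℝ (Fin n),
        g = -(LinearMap.adjoint f.linear) (f u₀) := ⟨_, rfl⟩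
    -- basic identity on the sphere
    have hId : ∀ y : EuclideanSpace ℝ (Fin n), ‖y‖ = 1 →
        1 - ‖f y‖ ^ 2 = 2 * ⟪g, y - u₀⟫ - ‖f.linear (y - u₀)‖ ^ 2 := by
      intro y hy
      have hfy : f y = f.linear (y - u₀) + f u₀ := hMap y u₀
      have hip : ⟪f.linear (y - u₀), f u₀⟫ = -⟪g, y - u₀⟫ := by
        rw [hg, inner_neg_left, neg_neg, LinearMap.adjoint_inner_left, real_inner_comm]
      rw [hfy, norm_add_sq_real, hip, hfu₀]
      ring
    have hq : ∀ y : EuclideanSpace ℝ (Fin n), ‖y‖ = 1 →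
        0 ≤ 2 * ⟪g, y - u₀⟫ - ‖f.linear (y - u₀)‖ ^ 2 := by
      intro y hy
      rw [← hId y hy]
      have := hball y hy.le
      nlinarith [norm_nonneg (f y)]
    -- first-order condition: g is a nonpositive multiple of u₀
    have hmin : ∀ y : EuclideanSpace ℝ (Fin n), ‖y‖ = 1 → ⟪g, u₀⟫ ≤ ⟪g, y⟫ := by
      intro y hy
      have := hq y hy
      rw [inner_sub_right] at this
      nlinarith [sq_nonneg ‖f.linear (y - u₀)‖]
    have halpha : g = (-‖g‖) • u₀ := by
      rcases eq_or_ne g 0 with h0 | h0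
      · simp [h0]
      · have hng : 0 < ‖g‖ := norm_pos_iff.mpr h0
        have hy1 : ‖-(‖g‖⁻¹ • g)‖ = 1 := by
          rw [norm_neg, norm_smul, Real.norm_eq_abs, abs_of_pos (inv_pos.mpr hng),
            inv_mul_cancel₀ hng.ne']
        have h1 := hmin _ hy1
        have h2 : ⟪g, -(‖g‖⁻¹ • g)⟫ = -‖g‖ := by
          rw [inner_neg_right, real_inner_smul_right, real_inner_self_eq_norm_sq]
          field_simp
        rw [h2] at h1
        have h3 : -(‖g‖ * ‖u₀‖) ≤ ⟪g, u₀⟫ := neg_le_of_abs_le (abs_real_inner_le_norm g u₀)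
        rw [hu₀, mul_one] at h3
        have h4 : ⟪g, u₀⟫ = -‖g‖ := le_antisymm h1 h3
        have h5 : ⟪-g, u₀⟫ = ‖-g‖ * ‖u₀‖ := by
          rw [inner_neg_left, h4, neg_neg, hu₀, mul_one]
          exact (norm_neg g).symm
        have h6 := inner_eq_norm_mul_iff_real.mp h5
        rw [hu₀, one_smul] at h6
        -- h6 : -g = ‖-g‖ • u₀
        have h7 : -g = ‖g‖ • u₀ := by rw [h6]; congr 1; exact norm_neg g
        rw [neg_smul, ← h7, neg_neg]
    have hgi : ∀ z : EuclideanSpace ℝ (Fin n), ⟪g, z⟫ = -‖g‖ * ⟪u₀, z⟫ := by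
      intro z
      conv_lhs => rw [halpha]
      rw [real_inner_smul_left]
    -- refined identity
    have hId2 : ∀ y : EuclideanSpace ℝ (Fin n), ‖y‖ = 1 →
        1 - ‖f y‖ ^ 2 = ‖g‖ * ‖y - u₀‖ ^ 2 - ‖f.linear (y - u₀)‖ ^ 2 := by
      intro y hy
      have h1 := hId y hy
      have h2 : 2 * ⟪g, y - u₀⟫ = ‖g‖ * ‖y - u₀‖ ^ 2 := by
        rw [hgi (y - u₀), inner_sub_right, real_inner_self_eq_norm_sq, hu₀]
        have h3 : ‖y - u₀‖ ^ 2 = 2 - 2 * ⟪u₀, y⟫ := by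
          rw [norm_sub_sq_real, real_inner_comm y u₀, hy, hu₀]; ring
        rw [h3]; ring
      rw [h1, h2]
    -- global bound ‖T v‖² ≤ ‖g‖ ‖v‖²
    have hq2 : ∀ y : EuclideanSpace ℝ (Fin n), ‖y‖ = 1 →
        ‖f.linear (y - u₀)‖ ^ 2 ≤ ‖g‖ * ‖y - u₀‖ ^ 2 := by
      intro y hy
      have h1 := hq y hy
      have h2 := hId y hy
      have h3 := hId2 y hy
      linarith
    have hBneg : ∀ v : EuclideanSpace ℝ (Fin n), ⟪u₀, v⟫ < 0 →
        ‖f.linear v‖ ^ 2 ≤ ‖g‖ * ‖v‖ ^ 2 := by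
      intro v hv
      have hv0 : v ≠ 0 := by rintro rfl; simp at hv
      have hnv : (0:ℝ) < ‖v‖ ^ 2 := pow_pos (norm_pos_iff.mpr hv0) 2
      obtain ⟨t, htdef⟩ : ∃ t : ℝ, t = -2 * ⟪u₀, v⟫ / ‖v‖ ^ 2 := ⟨_, rfl⟩
      have ht : 0 < t := by rw [htdef]; apply div_pos (by linarith) hnv
      have htv : t * ‖v‖ ^ 2 = -2 * ⟪u₀, v⟫ := by
        rw [htdef, div_mul_cancel₀ _ hnv.ne']
      have hty : ‖u₀ + t • v‖ = 1 := by
        apply norm_eq_one_of_sq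
        rw [norm_add_sq_real, real_inner_smul_right, norm_smul, Real.norm_eq_abs,
          abs_of_pos ht, hu₀, mul_pow]
        nlinarith [htv]
      have h1 := hq2 (u₀ + t • v) hty
      have h2 : u₀ + t • v - u₀ = t • v := by abel
      rw [h2, map_smul, norm_smul, norm_smul, Real.norm_eq_abs, abs_of_pos ht,
        mul_pow, mul_pow] at h1
      have ht2 : (0:ℝ) < t ^ 2 := pow_pos ht 2
      have h3 : t ^ 2 * ‖f.linear v‖ ^ 2 ≤ t ^ 2 * (‖g‖ * ‖v‖ ^ 2) := by
        calc t ^ 2 * ‖f.linear v‖ ^ 2 ≤ ‖g‖ * (t ^ 2 * ‖v‖ ^ 2) := h1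
          _ = t ^ 2 * (‖g‖ * ‖v‖ ^ 2) := by ring
      exact le_of_mul_le_mul_left h3 ht2
    have hBne : ∀ v : EuclideanSpace ℝ (Fin n), ⟪u₀, v⟫ ≠ 0 →
        ‖f.linear v‖ ^ 2 ≤ ‖g‖ * ‖v‖ ^ 2 := by
      intro v hv
      rcases lt_or_gt_of_ne hv with h | h
      · exact hBneg v h
      · have := hBneg (-v) (by rw [inner_neg_right]; linarith)
        simpa using this
    have hB : ∀ v : EuclideanSpace ℝ (Fin n), ‖f.linear v‖ ^ 2 ≤ ‖g‖ * ‖v‖ ^ 2 := by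
      intro v
      rcases eq_or_ne ⟪u₀, v⟫ 0 with h0 | h0
      · -- limit argument
        have key : ∀ ε : ℝ, ε ≠ 0 →
            ‖f.linear v‖ ^ 2 - ‖g‖ * ‖v‖ ^ 2 ≤
              (-2 * ⟪f.linear v, f.linear u₀⟫) * ε + (‖g‖ - ‖f.linear u₀‖ ^ 2) * ε ^ 2 := by
          intro ε hε
          have hiu : ⟪u₀, v + ε • u₀⟫ = ε := by
            rw [inner_add_right, real_inner_smul_right, real_inner_self_eq_norm_sq, hu₀, h0]
            ring
          have h1 := hBne (v + ε • u₀) (by rw [hiu]; exact hε)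
          have h2 : ‖f.linear (v + ε • u₀)‖ ^ 2 =
              ‖f.linear v‖ ^ 2 + 2 * ε * ⟪f.linear v, f.linear u₀⟫ + ε ^ 2 * ‖f.linear u₀‖ ^ 2 := by
            rw [map_add, map_smul, norm_add_sq_real, real_inner_smul_right, norm_smul,
              Real.norm_eq_abs, mul_pow, sq_abs]
            ring
          have h3 : ‖v + ε • u₀‖ ^ 2 = ‖v‖ ^ 2 + ε ^ 2 := by
            rw [norm_add_sq_real, real_inner_smul_right, norm_smul, Real.norm_eq_abs,
              mul_pow, sq_abs, hu₀, real_inner_comm u₀ v, h0]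
            ring
          rw [h2, h3] at h1
          nlinarith [h1]
        have := aux_le_zero key
        linarith
      · exact hBne v h0
    have hgnn : (0:ℝ) ≤ ‖g‖ := norm_nonneg g
    -- the symmetric positive operator P
    obtain ⟨P, hPdef⟩ : ∃ P : EuclideanSpace ℝ (Fin n) →ₗ[ℝ] EuclideanSpace ℝ (Fin n),
        P = ‖g‖ • LinearMap.id - (LinearMap.adjoint f.linear).comp f.linear := ⟨_, rfl⟩
    have hPapp : ∀ v : EuclideanSpace ℝ (Fin n),
        P v = ‖g‖ • v - (LinearMap.adjoint f.linear) (f.linear v) := by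
      intro v
      rw [hPdef]
      simp [LinearMap.sub_apply, LinearMap.smul_apply, LinearMap.comp_apply]
    have hPinner : ∀ v : EuclideanSpace ℝ (Fin n), ⟪P v, v⟫ = ‖g‖ * ‖v‖ ^ 2 - ‖f.linear v‖ ^ 2 := by
      intro v
      rw [hPapp, inner_sub_left, real_inner_smul_left, real_inner_self_eq_norm_sq,
        LinearMap.adjoint_inner_left, real_inner_self_eq_norm_sq]
    have hPsym : ∀ v w : EuclideanSpace ℝ (Fin n), ⟪P v, w⟫ = ⟪v, P w⟫ := by
      intro v w
      rw [hPapp, hPapp, inner_sub_left, inner_sub_right, real_inner_smul_left,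
        real_inner_smul_right, LinearMap.adjoint_inner_left, LinearMap.adjoint_inner_right]
    have hPpos : ∀ v : EuclideanSpace ℝ (Fin n), 0 ≤ ⟪P v, v⟫ := by
      intro v; rw [hPinner]; linarith [hB v]
    have hPzero : ∀ v : EuclideanSpace ℝ (Fin n), ⟪P v, v⟫ = 0 → P v = 0 := by
      intro v hv
      have hall : ∀ w : EuclideanSpace ℝ (Fin n), ⟪P v, w⟫ = 0 := by
        intro w
        have hb : 2 * ⟪P v, w⟫ = 0 := by
          apply aux_eq_zero (hPpos w)
          intro t
          have h1 := hPpos (v + t • w)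
          have hsymvw : ⟪P w, v⟫ = ⟪P v, w⟫ := (hPsym w v).trans (real_inner_comm (P v) w)
          have e : P (v + t • w) = P v + t • P w := by rw [map_add, map_smul]
          have h2 : ⟪P (v + t • w), v + t • w⟫ = ⟪P w, w⟫ * t ^ 2 + 2 * ⟪P v, w⟫ * t := by
            rw [e]
            simp only [inner_add_left, inner_add_right, real_inner_smul_left,
              real_inner_smul_right]
            rw [hv, hsymvw]
            ring
          rw [h2] at h1
          exact h1
        linarith
      exact inner_self_eq_zero.mp (hall (P v))
    -- the affine subspace
    refine ⟨(AffineSubspace.mk' u₀ (LinearMap.ker P)).map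
      (f : EuclideanSpace ℝ (Fin n) →ᵃ[ℝ] EuclideanSpace ℝ (Fin n)), ?_⟩
    ext x
    simp only [Set.mem_inter_iff, mem_sphere_zero_iff_norm, SetLike.mem_coe]
    constructor
    · rintro ⟨⟨u, huB, rfl⟩, hxS⟩
      rw [mem_closedBall_zero_iff] at huB
      refine ⟨?_, hxS⟩
      rcases eq_or_lt_of_le huB with h1 | h1
      · -- ‖u‖ = 1
        have hzero : ⟪P (u - u₀), u - u₀⟫ = 0 := by
          rw [hPinner]
          have h2 := hId2 u h1
          rw [hxS] at h2
          nlinarith [h2]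
        have hker : u - u₀ ∈ LinearMap.ker P := LinearMap.mem_ker.mpr (hPzero _ hzero)
        exact AffineSubspace.mem_map.mpr ⟨u,
          AffineSubspace.mem_mk'.mpr (by rwa [vsub_eq_sub]), rfl⟩
      · -- interior: the linear part vanishes
        have hT0 := linear_zero_of_interior f hE h1 hxS
        have heq : f u = f u₀ := by rw [hMap u u₀, hT0, zero_add]
        exact AffineSubspace.mem_map.mpr ⟨u₀,
          AffineSubspace.mem_mk'.mpr (by simp), heq.symm⟩
    · rintro ⟨hxW, hxS⟩
      obtain ⟨l, hl, rfl⟩ := AffineSubspace.mem_map.mp hxW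
      have hker : P (l - u₀) = 0 := by
        have := AffineSubspace.mem_mk'.mp hl
        rwa [vsub_eq_sub, LinearMap.mem_ker] at this
      have hTTv : (LinearMap.adjoint f.linear) (f.linear (l - u₀)) = ‖g‖ • (l - u₀) := by
        have h1 := hPapp (l - u₀)
        rw [hker] at h1
        have h2 := sub_eq_zero.mp h1.symm
        exact h2.symm
      have hTv2 : ‖f.linear (l - u₀)‖ ^ 2 = ‖g‖ * ‖l - u₀‖ ^ 2 := by
        have h1 : ⟪P (l - u₀), l - u₀⟫ = 0 := by rw [hker]; simp
        rw [hPinner] at h1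
        linarith
      have hfl : f l = f.linear (l - u₀) + f u₀ := hMap l u₀
      have hiTv : ⟪f.linear (l - u₀), f u₀⟫ = ‖g‖ * ⟪u₀, l - u₀⟫ := by
        have h1 : ⟪f.linear (l - u₀), f u₀⟫ = ⟪(LinearMap.adjoint f.linear) (f u₀), l - u₀⟫ := by
          rw [LinearMap.adjoint_inner_left, real_inner_comm]
        have h2 : (LinearMap.adjoint f.linear) (f u₀) = ‖g‖ • u₀ := by
          have h3 : -g = ‖g‖ • u₀ := by
            conv_lhs => rw [halpha]
            rw [neg_smul, neg_neg]
          rw [← h3, hg, neg_neg]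
        rw [h1, h2, real_inner_smul_left]
      have hnorm : ‖f l‖ ^ 2 = 1 + ‖g‖ * (‖l - u₀‖ ^ 2 + 2 * ⟪u₀, l - u₀⟫) := by
        rw [hfl, norm_add_sq_real, hiTv, hfu₀, hTv2]
        ring
      rw [hxS, one_pow] at hnorm
      have hgv : ‖g‖ * (‖l - u₀‖ ^ 2 + 2 * ⟪u₀, l - u₀⟫) = 0 := by linarith
      rcases mul_eq_zero.mp hgv with hg0 | hv0
      · -- ‖g‖ = 0 : the linear part kills l - u₀
        have hTv : f.linear (l - u₀) = 0 := by
          apply eq_zero_of_norm_sq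
          rw [hTv2, hg0, zero_mul]
        have heq : f l = f u₀ := by rw [hfl, hTv, zero_add]
        rw [heq]
        exact ⟨⟨u₀, mem_closedBall_zero_iff.mpr hu₀.le, rfl⟩, by rw [← heq]; exact hxS⟩
      · -- ‖l‖ = 1
        have hl1 : ‖l‖ = 1 := by
          apply norm_eq_one_of_sq
          have hld : l = l - u₀ + u₀ := by abel
          rw [hld, norm_add_sq_real, hu₀, real_inner_comm u₀ (l - u₀)]
          nlinarith [hv0]
        exact ⟨⟨l, mem_closedBall_zero_iff.mpr hl1.le, rfl⟩, hxS⟩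
  · -- no contact point: the intersection is empty
    refine ⟨⊥, ?_⟩
    rw [AffineSubspace.bot_coe, Set.empty_inter]
    ext x
    simp only [Set.mem_inter_iff, Set.mem_empty_iff_false, iff_false, not_and,
      mem_sphere_zero_iff_norm]
    rintro ⟨u, huB, rfl⟩ hxS
    rw [mem_closedBall_zero_iff] at huB
    rcases eq_or_lt_of_le huB with h1 | h1
    · exact hK ⟨u, h1, hxS⟩
    · have hT0 := linear_zero_of_interior f hE h1 hxS
      have heq : f e₀ = f u := by rw [hMap e₀ u, hT0, zero_add]
      exact hK ⟨e₀, he₀n, by rw [heq]; exact hxS⟩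
end

section
/- Let n ≥ 1 and let Φ : ℝ^n → ℝ^n be a nonconstant affine map with Φ(B_n) ⊆ B_n. For k ≥ 0 set A_k = S^{n-1} ∩ Φ^k(S^{n-1}). Then: (i) A_{k+1} ⊆ A_k for every k ≥ 0; and (ii) if A_{k+1} = A_k for some k ≥ 0, then A_l = A_k for every l ≥ k. -/
open Metric Set Function

/-- For a nonconstant affine self-map `Φ` of `ℝ^n` (`n ≥ 1`) mapping the closed
unit ball into itself, the sets `A_k = S^{n-1} ∩ Φ^k(S^{n-1})` form a decreasing
sequence, and if `A_{k+1} = A_k` for some `k` then `A_l = A_k` for all `l ≥ k`. -/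
theorem sphere_intersection_sequence
    (n : ℕ) (hn : 1 ≤ n)
    (Φ : EuclideanSpace ℝ (Fin n) →ᵃ[ℝ] EuclideanSpace ℝ (Fin n))
    (hnc : ∃ x y : EuclideanSpace ℝ (Fin n), Φ x ≠ Φ y)
    (hpos : ∀ x ∈ closedBall (0 : EuclideanSpace ℝ (Fin n)) 1, Φ x ∈ closedBall 0 1)
    (A : ℕ → Set (EuclideanSpace ℝ (Fin n)))
    (hA : ∀ k, A k = sphere (0 : EuclideanSpace ℝ (Fin n)) 1 ∩
      (⇑Φ)^[k] '' sphere (0 : EuclideanSpace ℝ (Fin n)) 1) :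
    (∀ k : ℕ, A (k + 1) ⊆ A k) ∧
    (∀ k : ℕ, A (k + 1) = A k → ∀ l : ℕ, k ≤ l → A l = A k) := by
  obtain ⟨x₀, y₀, hxy⟩ := hnc
  -- the linear part of Φ is nonzero on v := x₀ - y₀
  set v : EuclideanSpace ℝ (Fin n) := x₀ - y₀ with hv_def
  have hLv : Φ.linear v ≠ 0 := by
    intro h
    apply hxy
    have := Φ.linearMap_vsub x₀ y₀
    rw [vsub_eq_sub, vsub_eq_sub] at this
    have h2 : Φ x₀ - Φ y₀ = 0 := by rw [← this]; exact h
    exact sub_eq_zero.mp h2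
  have hv : v ≠ 0 := by
    intro h; apply hLv; rw [h]; simp
  have hvn : (0:ℝ) < ‖v‖ := norm_pos_iff.mpr hv
  -- norm form of hpos
  have hpos' : ∀ z : EuclideanSpace ℝ (Fin n), ‖z‖ ≤ 1 → ‖Φ z‖ ≤ 1 := by
    intro z hz
    have := hpos z (by simpa [mem_closedBall, dist_zero_right] using hz)
    simpa [mem_closedBall, dist_zero_right] using this
  -- key: Φ maps the open ball into the open ball
  have key : ∀ z : EuclideanSpace ℝ (Fin n), ‖z‖ < 1 → ‖Φ z‖ < 1 := by
    intro z hz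
    rcases lt_or_eq_of_le (hpos' z hz.le) with h | h
    · exact h
    exfalso
    set c : ℝ := (1 - ‖z‖) / ‖v‖ with hc_def
    have hc : 0 < c := div_pos (by linarith) hvn
    set w : EuclideanSpace ℝ (Fin n) := c • v with hw_def
    have hw : ‖w‖ = 1 - ‖z‖ := by
      rw [hw_def, norm_smul, Real.norm_eq_abs, abs_of_pos hc, hc_def,
        div_mul_cancel₀ _ (ne_of_gt hvn)]
    have hLw : Φ.linear w ≠ 0 := by
      rw [hw_def, map_smul]
      exact smul_ne_zero (ne_of_gt hc) hLv
    have hmap : ∀ u : EuclideanSpace ℝ (Fin n), Φ (u + z) = Φ.linear u + Φ z := by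
      intro u
      have := Φ.map_vadd z u
      simpa [vadd_eq_add] using this
    have h1 : ‖Φ.linear w + Φ z‖ ≤ 1 := by
      rw [← hmap w]
      apply hpos'
      calc ‖w + z‖ ≤ ‖w‖ + ‖z‖ := norm_add_le _ _
        _ = 1 := by rw [hw]; ring
    have h2 : ‖Φ.linear (-w) + Φ z‖ ≤ 1 := by
      rw [← hmap (-w)]
      apply hpos'
      calc ‖-w + z‖ ≤ ‖-w‖ + ‖z‖ := norm_add_le _ _
        _ = 1 := by rw [norm_neg, hw]; ring
    rw [map_neg] at h2
    have hpar := parallelogram_law_with_norm ℝ (Φ z) (Φ.linear w)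
    have h2' : ‖Φ z - Φ.linear w‖ ≤ 1 := by
      have : Φ z - Φ.linear w = -Φ.linear w + Φ z := by abel
      rw [this]; exact h2
    have h1' : ‖Φ z + Φ.linear w‖ ≤ 1 := by
      have : Φ z + Φ.linear w = Φ.linear w + Φ z := by abel
      rw [this]; exact h1
    have hnn : (0:ℝ) ≤ ‖Φ z + Φ.linear w‖ := norm_nonneg _
    have hnn2 : (0:ℝ) ≤ ‖Φ z - Φ.linear w‖ := norm_nonneg _
    have hLwpos : 0 < ‖Φ.linear w‖ := norm_pos_iff.mpr hLw
    nlinarith [hpar, h1', h2', hnn, hnn2, hLwpos]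
  -- iterates map closed ball into closed ball, open ball into open ball
  have iter_le : ∀ k : ℕ, ∀ z : EuclideanSpace ℝ (Fin n), ‖z‖ ≤ 1 → ‖(⇑Φ)^[k] z‖ ≤ 1 := by
    intro k
    induction k with
    | zero => intro z hz; simpa using hz
    | succ k ih =>
      intro z hz
      rw [Function.iterate_succ_apply]
      exact ih _ (hpos' z hz)
  have iter_lt : ∀ k : ℕ, ∀ z : EuclideanSpace ℝ (Fin n), ‖z‖ < 1 → ‖(⇑Φ)^[k] z‖ < 1 := by
    intro k
    induction k with
    | zero => intro z hz; simpa using hz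
    | succ k ih =>
      intro z hz
      rw [Function.iterate_succ_apply]
      exact ih _ (key z hz)
  -- part (i)
  have part1 : ∀ k : ℕ, A (k + 1) ⊆ A k := by
    intro k x hx
    rw [hA] at hx
    rw [hA]
    obtain ⟨hxS, y, hyS, hyx⟩ := hx
    rw [mem_sphere_zero_iff_norm] at hxS hyS
    rw [Function.iterate_succ_apply] at hyx
    refine ⟨mem_sphere_zero_iff_norm.mpr hxS, Φ y, ?_, hyx⟩
    rw [mem_sphere_zero_iff_norm]
    by_contra hne
    have hlt : ‖Φ y‖ < 1 := lt_of_le_of_ne (hpos' y hyS.le) hne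
    have := iter_lt k _ hlt
    rw [hyx, hxS] at this
    exact lt_irrefl 1 this
  refine ⟨part1, ?_⟩
  -- one-step propagation
  have step : ∀ j : ℕ, A (j + 1) = A j → A (j + 2) = A (j + 1) := by
    intro j hEq
    apply Subset.antisymm (part1 (j + 1))
    intro x hx
    have hx' := hx
    rw [hA] at hx'
    obtain ⟨hxS, y, hyS, hyx⟩ := hx'
    rw [mem_sphere_zero_iff_norm] at hxS hyS
    rw [Function.iterate_succ_apply'] at hyx
    set w : EuclideanSpace ℝ (Fin n) := (⇑Φ)^[j] y with hw_def
    have hwle : ‖w‖ ≤ 1 := iter_le j y hyS.le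
    have hwS : ‖w‖ = 1 := by
      by_contra hne
      have hlt : ‖w‖ < 1 := lt_of_le_of_ne hwle hne
      have := key w hlt
      rw [hyx, hxS] at this
      exact lt_irrefl 1 this
    have hwA : w ∈ A j := by
      rw [hA]
      exact ⟨mem_sphere_zero_iff_norm.mpr hwS, y, mem_sphere_zero_iff_norm.mpr hyS, rfl⟩
    rw [← hEq, hA] at hwA
    obtain ⟨-, u, huS, huw⟩ := hwA
    rw [hA]
    refine ⟨mem_sphere_zero_iff_norm.mpr hxS, u, huS, ?_⟩
    have : (⇑Φ)^[j + 2] u = Φ ((⇑Φ)^[j + 1] u) := Function.iterate_succ_apply' _ _ _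
    rw [this, huw, hyx]
  -- part (ii)
  intro k hk l hl
  obtain ⟨m, rfl⟩ := Nat.exists_eq_add_of_le hl
  suffices h : ∀ m : ℕ, A (k + m) = A k ∧ A (k + m + 1) = A (k + m) from (h m).1
  intro m
  induction m with
  | zero => exact ⟨by rw [Nat.add_zero], by rw [Nat.add_zero]; exact hk⟩
  | succ m ih =>
    have h2 := step (k + m) ih.2
    refine ⟨?_, ?_⟩
    · show A (k + m + 1) = A k
      rw [ih.2, ih.1]
    · show A (k + m + 1 + 1) = A (k + m + 1)
      exact h2
end

section
/- Let n ≥ 1, let 0 < α < β < π/2, and set λ = cos β / cos α and μ = tan α / tan β. Define Ψ : ℝ^n → ℝ^n by Ψ(x_1,…,x_n) = (λx_1, …, λx_{n-1}, λμ x_n + √((1−λ²)(1−μ²))). Then: (a) Ψ is an affine bijection with Ψ(B_n) ⊆ B_n; (b) if x ∈ E_{n,α} then Ψ(x) ∈ E_{n,β}; (c) if x, y ∈ E_{n,α} then ‖Ψ(x) − Ψ(y)‖ = λ‖x − y‖; (d) if x ∈ B_n and Ψ(x) ∈ S^{n-1}, then x ∈ E_{n,α}. -/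
open Metric Set Real

/-- The circle of latitude `θ` on the unit sphere of `ℝ^{n+1}`. -/
def latitudeCircle (n : ℕ) (θ : ℝ) : Set (EuclideanSpace ℝ (Fin (n + 1))) :=
  {x | x ∈ sphere (0 : EuclideanSpace ℝ (Fin (n + 1))) 1 ∧ x (Fin.last n) = Real.sin θ}

/-!
`Ψ` is the affine map `x ↦ (λx', λμ xₙ + c)` with `c = √((1 - λ²)(1 - μ²))`. The relations
`λ cos α = cos β` and `λ sin α = μ sin β` force `λμ c = λ²(1 - μ²) sin α` and
`c² = 1 - λ² - λ²(1 - μ²) sin² α`, which turn the norm of the image into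
`‖Ψ x‖² = 1 - λ²(1 - ‖x‖²) - λ²(1 - μ²)(xₙ - sin α)²`.
On the ball both subtracted terms are nonnegative, and they vanish together exactly on `E_α`:
this gives the ball inclusion and (d), and (b) because `λμ sin α + c = sin β`. Points of `E_α`
share their last coordinate, so `Ψ x - Ψ y = λ (x - y)` there, which is (c).
-/

theorem EuclideanSpace.norm_sq_eq_sum_castSucc_add_sq_last {n : ℕ}
    (x : EuclideanSpace ℝ (Fin (n + 1))) :
    ‖x‖ ^ 2 = ∑ i : Fin n, x i.castSucc ^ 2 + x (Fin.last n) ^ 2 := by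
  rw [EuclideanSpace.norm_sq_eq, Fin.sum_univ_castSucc]
  simp

noncomputable def latitudeMap (n : ℕ) (a b c : ℝ) :
    EuclideanSpace ℝ (Fin (n + 1)) →ᵃ[ℝ] EuclideanSpace ℝ (Fin (n + 1)) :=
  (Matrix.toEuclideanLin
      (Matrix.diagonal fun i => if i = Fin.last n then b else a)).toAffineMap +
    AffineMap.const ℝ _ (EuclideanSpace.single (Fin.last n) c)

namespace latitudeMap

variable {n : ℕ} {a b c : ℝ}

theorem apply (x : EuclideanSpace ℝ (Fin (n + 1))) (i : Fin (n + 1)) :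
    latitudeMap n a b c x i = if i = Fin.last n then b * x (Fin.last n) + c else a * x i := by
  simp only [latitudeMap, AffineMap.coe_add, LinearMap.coe_toAffineMap, AffineMap.coe_const,
    Pi.add_apply, Matrix.toLpLin_apply, Function.const_apply, PiLp.add_apply,
    Matrix.mulVec_diagonal, ite_mul, PiLp.single_apply]
  split_ifs with h
  · subst h; simp
  · simp

theorem apply_last (x : EuclideanSpace ℝ (Fin (n + 1))) :
    latitudeMap n a b c x (Fin.last n) = b * x (Fin.last n) + c := by
  simp [apply]

theorem comp_apply {a' b' c' : ℝ} (x : EuclideanSpace ℝ (Fin (n + 1))) :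
    latitudeMap n a' b' c' (latitudeMap n a b c x) =
      latitudeMap n (a' * a) (b' * b) (b' * c + c') x := by
  ext i
  simp only [apply]
  split_ifs <;> ring

theorem one_one_zero_apply (x : EuclideanSpace ℝ (Fin (n + 1))) : latitudeMap n 1 1 0 x = x := by
  ext i
  simp only [apply]
  split_ifs with h
  · subst h; ring
  · ring

theorem bijective (ha : a ≠ 0) (hb : b ≠ 0) : Function.Bijective (latitudeMap n a b c) := by
  refine Function.bijective_iff_has_inverse.2
    ⟨latitudeMap n a⁻¹ b⁻¹ (-(c / b)), fun x => ?_, fun x => ?_⟩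
  · rw [comp_apply, inv_mul_cancel₀ ha, inv_mul_cancel₀ hb, inv_mul_eq_div, add_neg_cancel,
      one_one_zero_apply]
  · rw [comp_apply, mul_inv_cancel₀ ha, mul_inv_cancel₀ hb, mul_neg, mul_div_cancel₀ _ hb,
      neg_add_cancel, one_one_zero_apply]

theorem norm_sq (x : EuclideanSpace ℝ (Fin (n + 1))) :
    ‖latitudeMap n a b c x‖ ^ 2 =
      a ^ 2 * (‖x‖ ^ 2 - x (Fin.last n) ^ 2) + (b * x (Fin.last n) + c) ^ 2 := by
  simp only [EuclideanSpace.norm_sq_eq_sum_castSucc_add_sq_last, apply_last, add_sub_cancel_right,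
    Finset.mul_sum]
  congr 1
  refine Finset.sum_congr rfl fun i _ => ?_
  rw [apply, if_neg (Fin.castSucc_lt_last i).ne, mul_pow]

theorem norm_sub_of_last_eq {x y : EuclideanSpace ℝ (Fin (n + 1))}
    (h : x (Fin.last n) = y (Fin.last n)) :
    ‖latitudeMap n a b c x - latitudeMap n a b c y‖ = |a| * ‖x - y‖ := by
  have hsmul : latitudeMap n a b c x - latitudeMap n a b c y = a • (x - y) := by
    ext i
    simp only [PiLp.sub_apply, PiLp.smul_apply, smul_eq_mul, apply]
    split_ifs with hi
    · rw [hi, h]; ring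
    · ring
  rw [hsmul, norm_smul, Real.norm_eq_abs]

section Shift

variable {θ : ℝ} (hbc : b * c = (a ^ 2 - b ^ 2) * sin θ)
  (hc : c ^ 2 = 1 - a ^ 2 - (a ^ 2 - b ^ 2) * sin θ ^ 2)
include hbc hc

theorem norm_sq_of_shift (x : EuclideanSpace ℝ (Fin (n + 1))) :
    ‖latitudeMap n a b c x‖ ^ 2 =
      1 - a ^ 2 * (1 - ‖x‖ ^ 2) - (a ^ 2 - b ^ 2) * (x (Fin.last n) - sin θ) ^ 2 := by
  rw [norm_sq]
  linear_combination hc + 2 * x (Fin.last n) * hbc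

theorem mem_closedBall (hba : b ^ 2 ≤ a ^ 2) {x : EuclideanSpace ℝ (Fin (n + 1))}
    (hx : x ∈ closedBall 0 1) : latitudeMap n a b c x ∈ closedBall 0 1 := by
  rw [mem_closedBall_zero_iff] at hx ⊢
  have hx2 : ‖x‖ ^ 2 ≤ 1 := pow_le_one₀ (norm_nonneg x) hx
  refine (sq_le_one_iff₀ (norm_nonneg _)).1 ?_
  rw [norm_sq_of_shift hbc hc]
  have h₁ : 0 ≤ a ^ 2 * (1 - ‖x‖ ^ 2) := mul_nonneg (sq_nonneg a) (sub_nonneg.2 hx2)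
  have h₂ : 0 ≤ (a ^ 2 - b ^ 2) * (x (Fin.last n) - sin θ) ^ 2 :=
    mul_nonneg (sub_nonneg.2 hba) (sq_nonneg _)
  linarith

theorem mem_sphere {x : EuclideanSpace ℝ (Fin (n + 1))} (hx : x ∈ latitudeCircle n θ) :
    latitudeMap n a b c x ∈ sphere 0 1 := by
  obtain ⟨hx, hlast⟩ := hx
  rw [mem_sphere_zero_iff_norm] at hx ⊢
  refine (pow_eq_one_iff_of_nonneg (norm_nonneg _) two_ne_zero).1 ?_
  rw [norm_sq_of_shift hbc hc, hx, hlast]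
  ring

theorem mem_latitudeCircle_of_mem_sphere (ha : a ≠ 0) (hba : b ^ 2 < a ^ 2)
    {x : EuclideanSpace ℝ (Fin (n + 1))} (hx : x ∈ closedBall 0 1)
    (hxΨ : latitudeMap n a b c x ∈ sphere 0 1) : x ∈ latitudeCircle n θ := by
  rw [mem_closedBall_zero_iff] at hx
  rw [mem_sphere_zero_iff_norm] at hxΨ
  have hsum : a ^ 2 * (1 - ‖x‖ ^ 2) + (a ^ 2 - b ^ 2) * (x (Fin.last n) - sin θ) ^ 2 = 0 := by
    linarith [norm_sq_of_shift hbc hc x, congrArg (· ^ 2) hxΨ]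
  obtain ⟨hnorm, hlast⟩ := (add_eq_zero_iff_of_nonneg
    (mul_nonneg (sq_nonneg a) (sub_nonneg.2 (pow_le_one₀ (norm_nonneg x) hx)))
    (mul_nonneg (sub_nonneg.2 hba.le) (sq_nonneg _))).1 hsum
  have hnorm' : ‖x‖ ^ 2 = 1 :=
    (sub_eq_zero.1 ((mul_eq_zero.1 hnorm).resolve_left (pow_ne_zero 2 ha))).symm
  have hlast' : x (Fin.last n) = sin θ :=
    sub_eq_zero.1 (pow_eq_zero_iff two_ne_zero |>.1
      ((mul_eq_zero.1 hlast).resolve_left (sub_pos.2 hba).ne'))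
  exact ⟨mem_sphere_zero_iff_norm.2
    ((pow_eq_one_iff_of_nonneg (norm_nonneg _) two_ne_zero).1 hnorm'), hlast'⟩

end Shift

end latitudeMap

noncomputable def latitudeShift (l m : ℝ) : ℝ := √((1 - l ^ 2) * (1 - m ^ 2))

theorem latitudeShift_sq {l m : ℝ} (hl : l ∈ Icc (0 : ℝ) 1) (hm : m ∈ Icc (0 : ℝ) 1) :
    latitudeShift l m ^ 2 = (1 - l ^ 2) * (1 - m ^ 2) :=
  sq_sqrt (mul_nonneg (by nlinarith [hl.1, hl.2]) (by nlinarith [hm.1, hm.2]))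

section LatitudeShift

variable {l m α β : ℝ} (hcos : l * cos α = cos β) (hsin : l * sin α = m * sin β)
include hcos hsin

theorem sq_mul_one_sub_sq_eq : m ^ 2 * (1 - l ^ 2) = l ^ 2 * (1 - m ^ 2) * sin α ^ 2 := by
  linear_combination (-(l * sin α + m * sin β)) * hsin - m ^ 2 * (l * cos α + cos β) * hcos +
    m ^ 2 * l ^ 2 * sin_sq_add_cos_sq α - m ^ 2 * sin_sq_add_cos_sq β

theorem latitudeShift_sq_eq_sub_sin_sq (hl : l ∈ Icc (0 : ℝ) 1) (hm : m ∈ Icc (0 : ℝ) 1) :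
    latitudeShift l m ^ 2 = 1 - l ^ 2 - (l ^ 2 - (l * m) ^ 2) * sin α ^ 2 := by
  rw [latitudeShift_sq hl hm]
  linear_combination -sq_mul_one_sub_sq_eq hcos hsin

theorem mul_latitudeShift (hl : l ∈ Icc (0 : ℝ) 1) (hm : m ∈ Icc (0 : ℝ) 1) (hα : 0 ≤ sin α) :
    l * m * latitudeShift l m = (l ^ 2 - (l * m) ^ 2) * sin α := by
  suffices m * latitudeShift l m = l * (1 - m ^ 2) * sin α by linear_combination l * this
  have hc : 0 ≤ latitudeShift l m := sqrt_nonneg _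
  have hm2 : 0 ≤ 1 - m ^ 2 := by nlinarith [hm.1, hm.2]
  refine (sq_eq_sq₀ (mul_nonneg hm.1 hc) (mul_nonneg (mul_nonneg hl.1 hm2) hα)).1 ?_
  rw [mul_pow, latitudeShift_sq hl hm]
  linear_combination (1 - m ^ 2) * sq_mul_one_sub_sq_eq hcos hsin

theorem mul_sin_add_latitudeShift (hl : l ∈ Ioc (0 : ℝ) 1) (hm : m ∈ Ioc (0 : ℝ) 1)
    (hα : 0 ≤ sin α) : l * m * sin α + latitudeShift l m = sin β := by
  have h := mul_latitudeShift hcos hsin (Ioc_subset_Icc_self hl) (Ioc_subset_Icc_self hm) hα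
  have hlm : l * m ≠ 0 := mul_ne_zero hl.1.ne' hm.1.ne'
  refine mul_left_cancel₀ hlm ?_
  linear_combination h + l * hsin

end LatitudeShift

theorem cos_div_cos_mem_Ioo {α β : ℝ} (hα : 0 ≤ α) (hαβ : α < β) (hβ : β < π / 2) :
    cos β / cos α ∈ Ioo 0 1 := by
  have hcα : 0 < cos α := cos_pos_of_mem_Ioo ⟨by linarith, by linarith⟩
  have hcβ : 0 < cos β := cos_pos_of_mem_Ioo ⟨by linarith, hβ⟩
  exact ⟨div_pos hcβ hcα,
    (div_lt_one hcα).2 (cos_lt_cos_of_nonneg_of_le_pi hα (by linarith) hαβ)⟩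

theorem tan_div_tan_mem_Ioo {α β : ℝ} (hα : 0 < α) (hαβ : α < β) (hβ : β < π / 2) :
    tan α / tan β ∈ Ioo 0 1 := by
  have htα : 0 < tan α := tan_pos_of_pos_of_lt_pi_div_two hα (by linarith)
  have htαβ : tan α < tan β := tan_lt_tan_of_nonneg_of_lt_pi_div_two hα.le hβ hαβ
  exact ⟨div_pos htα (htα.trans htαβ), (div_lt_one (htα.trans htαβ)).2 htαβ⟩

theorem cos_div_cos_mul_sin {α β : ℝ} (hα : cos α ≠ 0) (hβ : sin β ≠ 0) :
    cos β / cos α * sin α = tan α / tan β * sin β := by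
  rw [tan_eq_sin_div_cos, tan_eq_sin_div_cos]
  by_cases hcβ : cos β = 0
  · simp [hcβ]
  · field_simp

/-- Lemma on the map sending the latitude-`α` circle to the latitude-`β` circle:
with `λ = cos β / cos α` and `μ = tan α / tan β`, the map
`Ψ(x_1,…,x_{n+1}) = (λx_1, …, λx_n, λμ x_{n+1} + √((1−λ²)(1−μ²)))` is
(a) an affine bijection preserving the closed unit ball;
(b) sends `E_{α}` to `E_{β}`; (c) scales distances on `E_{α}` by `λ`;
(d) points of the ball sent to the sphere lie on `E_{α}`. -/
theorem latitude_map_properties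
    (n : ℕ) (α β : ℝ) (hα : 0 < α) (hαβ : α < β) (hβ : β < π / 2)
    (Ψ : EuclideanSpace ℝ (Fin (n + 1)) → EuclideanSpace ℝ (Fin (n + 1)))
    (hΨ : ∀ x : EuclideanSpace ℝ (Fin (n + 1)), ∀ i : Fin (n + 1),
      Ψ x i = if i = Fin.last n then
          (Real.cos β / Real.cos α) * (Real.tan α / Real.tan β) * x (Fin.last n) +
            Real.sqrt ((1 - (Real.cos β / Real.cos α) ^ 2) *
              (1 - (Real.tan α / Real.tan β) ^ 2))
        else (Real.cos β / Real.cos α) * x i) :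
    ((∃ A : EuclideanSpace ℝ (Fin (n + 1)) →ᵃ[ℝ] EuclideanSpace ℝ (Fin (n + 1)),
        ⇑A = Ψ) ∧ Function.Bijective Ψ ∧
      (∀ x ∈ closedBall (0 : EuclideanSpace ℝ (Fin (n + 1))) 1, Ψ x ∈ closedBall 0 1)) ∧
    (∀ x ∈ latitudeCircle n α, Ψ x ∈ latitudeCircle n β) ∧
    (∀ x ∈ latitudeCircle n α, ∀ y ∈ latitudeCircle n α,
      ‖Ψ x - Ψ y‖ = (Real.cos β / Real.cos α) * ‖x - y‖) ∧
    (∀ x ∈ closedBall (0 : EuclideanSpace ℝ (Fin (n + 1))) 1,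
      Ψ x ∈ sphere (0 : EuclideanSpace ℝ (Fin (n + 1))) 1 → x ∈ latitudeCircle n α) := by
  set l := cos β / cos α
  set m := tan α / tan β
  have hcosα : 0 < cos α := cos_pos_of_mem_Ioo ⟨by linarith, by linarith⟩
  have hsinβ : 0 < sin β := sin_pos_of_pos_of_lt_pi (by linarith) (by linarith)
  have hsinα : 0 ≤ sin α := sin_nonneg_of_nonneg_of_le_pi hα.le (by linarith)
  obtain ⟨hl₀, hl₁⟩ : l ∈ Ioo 0 1 := cos_div_cos_mem_Ioo hα.le hαβ hβ
  obtain ⟨hm₀, hm₁⟩ : m ∈ Ioo 0 1 := tan_div_tan_mem_Ioo hα hαβ hβ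
  have hcos : l * cos α = cos β := div_mul_cancel₀ _ hcosα.ne'
  have hsin : l * sin α = m * sin β := cos_div_cos_mul_sin hcosα.ne' hsinβ.ne'
  have hΨ_eq : Ψ = latitudeMap n l (l * m) (latitudeShift l m) := by
    funext x; ext i; rw [hΨ, latitudeMap.apply]; rfl
  subst hΨ_eq
  have hbc := mul_latitudeShift hcos hsin ⟨hl₀.le, hl₁.le⟩ ⟨hm₀.le, hm₁.le⟩ hsinα
  have hc := latitudeShift_sq_eq_sub_sin_sq hcos hsin ⟨hl₀.le, hl₁.le⟩ ⟨hm₀.le, hm₁.le⟩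
  have hlm : (l * m) ^ 2 < l ^ 2 := by
    rw [mul_pow]; exact mul_lt_of_lt_one_right (by positivity) (pow_lt_one₀ hm₀.le hm₁ two_ne_zero)
  refine ⟨⟨⟨_, rfl⟩, latitudeMap.bijective hl₀.ne' (mul_pos hl₀ hm₀).ne',
      fun x hx => latitudeMap.mem_closedBall hbc hc hlm.le hx⟩,
    fun x hx => ⟨latitudeMap.mem_sphere hbc hc hx, ?_⟩, fun x hx y hy => ?_,
    fun x hx hΨx => latitudeMap.mem_latitudeCircle_of_mem_sphere hbc hc hl₀.ne' hlm hx hΨx⟩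
  · rw [latitudeMap.apply_last, hx.2,
      mul_sin_add_latitudeShift hcos hsin ⟨hl₀, hl₁.le⟩ ⟨hm₀, hm₁.le⟩ hsinα]
  · rw [latitudeMap.norm_sub_of_last_eq (hx.2.trans hy.2.symm), abs_of_pos hl₀]
end

section
/- There exists a ℂ-linear map Φ : M_2(ℂ) → M_2(ℂ) mapping positive semidefinite matrices to positive semidefinite matrices such that Φ^4 maps every nonzero positive semidefinite 2×2 matrix to a positive definite matrix, but Φ^3 does not (i.e., Φ is primitive with primitivity index γ(M_2^+, Φ) = 4). -/
/-!
In the Pauli coordinates `X = t + x σ₁ + y σ₂ + z σ₃`, in which `X` is positive semidefinite iff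
`t ≥ 0` and `x² + y² + z² ≤ t²`, the map `phi` fixes `t` and sends `(x, y, z)` to a rotation of
`(3x/5, 3y/5, 4t/5)`. Hence `det (phi X) = 9/25 (det X + z²)`: `phi` is positive, and for
`X ≥ 0` the image `phi X` is singular only if `X` is singular and `z = 0`. For `X ≥ 0`, `X ≠ 0`
the `z`-coordinates of `phi² X` and `phi³ X` are multiples of `t + x` and `41t - 9x`, which cannot
both vanish since `t > 0`, so `phi⁴ X` is positive definite. The rank-one matrix with coordinates
`(1, -1, 0, 0)` keeps `z = 0` for three steps, and indeed `phi³` maps it to the singular matrix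
with coordinates `(625, 337, 384, 360) / 625`.
-/

open Matrix Complex
open scoped ComplexOrder

namespace Matrix.IsHermitian

variable {𝕜 : Type*} [RCLike 𝕜] {A : Matrix (Fin 2) (Fin 2) 𝕜}

theorem posSemidef_fin_two_iff (hA : A.IsHermitian) :
    A.PosSemidef ↔ 0 ≤ A.trace ∧ 0 ≤ A.det := by
  rw [hA.posSemidef_iff_eigenvalues_nonneg, hA.trace_eq_sum_eigenvalues,
    hA.det_eq_prod_eigenvalues, Pi.le_def, Fin.forall_fin_two, Fin.sum_univ_two,
    Fin.prod_univ_two, ← RCLike.ofReal_add, ← RCLike.ofReal_mul, RCLike.ofReal_nonneg,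
    RCLike.ofReal_nonneg, Pi.zero_apply, Pi.zero_apply]
  refine ⟨fun ⟨ha, hb⟩ => ⟨by positivity, by positivity⟩, fun ⟨hs, hp⟩ => ?_⟩
  constructor <;> nlinarith

theorem posDef_fin_two_iff (hA : A.IsHermitian) :
    A.PosDef ↔ 0 < A.trace ∧ 0 < A.det := by
  rw [hA.posDef_iff_eigenvalues_pos, hA.trace_eq_sum_eigenvalues,
    hA.det_eq_prod_eigenvalues, Fin.forall_fin_two, Fin.sum_univ_two,
    Fin.prod_univ_two, ← RCLike.ofReal_add, ← RCLike.ofReal_mul, RCLike.ofReal_pos,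
    RCLike.ofReal_pos]
  refine ⟨fun ⟨ha, hb⟩ => ⟨by positivity, by positivity⟩, fun ⟨hs, hp⟩ => ?_⟩
  constructor <;> nlinarith

end Matrix.IsHermitian

/-- `pauli t x y z = t • 1 + x • σ₁ + y • σ₂ + z • σ₃`. -/
def pauli (t x y z : ℂ) : Matrix (Fin 2) (Fin 2) ℂ :=
  !![t + z, x - I * y; x + I * y, t - z]

theorem pauli_zero_zero_ne_one_one_iff {t x y z : ℂ} :
    pauli t x y z 0 0 ≠ pauli t x y z 1 1 ↔ z ≠ 0 := by
  simp [pauli, sub_eq_add_neg, self_eq_neg]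

section RealCoordinates

variable (t x y z : ℝ)

theorem trace_pauli : (pauli t x y z).trace = (2 * t : ℝ) := by
  simp [pauli, trace_fin_two]
  ring

theorem det_pauli : (pauli t x y z).det = (t ^ 2 - x ^ 2 - y ^ 2 - z ^ 2 : ℝ) := by
  simp [pauli, det_fin_two]
  ring_nf
  simp [I_sq]
  ring

theorem isHermitian_pauli : (pauli t x y z).IsHermitian := by
  ext i j
  fin_cases i <;> fin_cases j <;> simp [pauli, Complex.ext_iff]

theorem pauli_posSemidef_iff :
    (pauli t x y z).PosSemidef ↔ 0 ≤ t ∧ x ^ 2 + y ^ 2 + z ^ 2 ≤ t ^ 2 := by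
  rw [(isHermitian_pauli t x y z).posSemidef_fin_two_iff, trace_pauli, det_pauli,
    zero_le_real, zero_le_real]
  constructor <;> rintro ⟨h1, h2⟩ <;> constructor <;> linarith

theorem pauli_posDef_iff :
    (pauli t x y z).PosDef ↔ 0 < t ∧ x ^ 2 + y ^ 2 + z ^ 2 < t ^ 2 := by
  rw [(isHermitian_pauli t x y z).posDef_fin_two_iff, trace_pauli, det_pauli,
    zero_lt_real, zero_lt_real]
  constructor <;> rintro ⟨h1, h2⟩ <;> constructor <;> linarith

end RealCoordinates

theorem Matrix.IsHermitian.exists_eq_pauli {X : Matrix (Fin 2) (Fin 2) ℂ} (hX : X.IsHermitian) :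
    ∃ t x y z : ℝ, X = pauli t x y z := by
  refine ⟨((X 0 0).re + (X 1 1).re) / 2, (X 1 0).re, (X 1 0).im,
    ((X 0 0).re - (X 1 1).re) / 2, ?_⟩
  have h00 : (X 0 0).im = 0 := by
    simpa using congrArg Complex.im (hX.coe_re_apply_self 0).symm
  have h11 : (X 1 1).im = 0 := by
    simpa using congrArg Complex.im (hX.coe_re_apply_self 1).symm
  have h01 : X 0 1 = star (X 1 0) := (hX.apply 0 1).symm
  ext i j
  fin_cases i <;> fin_cases j <;> simp [pauli, Complex.ext_iff, h00, h11, h01] <;> ring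

noncomputable def phi : Module.End ℂ (Matrix (Fin 2) (Fin 2) ℂ) where
  toFun X :=
    let t := (X 0 0 + X 1 1) / 2
    let x := (X 0 1 + X 1 0) / 2
    let y := I * (X 0 1 - X 1 0) / 2
    pauli t ((16 * t - 9 * x) / 25) (12 * (t + x) / 25) (3 * y / 5)
  map_add' X Y := by
    ext i j
    fin_cases i <;> fin_cases j <;> simp [pauli] <;> ring
  map_smul' c X := by
    ext i j
    fin_cases i <;> fin_cases j <;> simp [pauli] <;> ring

theorem phi_pauli (t x y z : ℝ) :
    phi (pauli t x y z) =
      pauli t ((16 * t - 9 * x) / 25 : ℝ) (12 * (t + x) / 25 : ℝ) (3 * y / 5 : ℝ) := by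
  ext i j
  fin_cases i <;> fin_cases j <;> simp [phi, pauli] <;> ring_nf <;> simp [I_sq]

theorem posSemidef_phi {X : Matrix (Fin 2) (Fin 2) ℂ} (hX : X.PosSemidef) :
    (phi X).PosSemidef := by
  obtain ⟨t, x, y, z, rfl⟩ := hX.isHermitian.exists_eq_pauli
  rw [pauli_posSemidef_iff] at hX
  rw [phi_pauli, pauli_posSemidef_iff]
  exact ⟨hX.1, by nlinarith⟩

theorem posDef_phi_of_posSemidef {X : Matrix (Fin 2) (Fin 2) ℂ} (hX : X.PosSemidef)
    (h : X.PosDef ∨ X 0 0 ≠ X 1 1) : (phi X).PosDef := by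
  obtain ⟨t, x, y, z, rfl⟩ := hX.isHermitian.exists_eq_pauli
  rw [pauli_posSemidef_iff] at hX
  rw [pauli_posDef_iff, pauli_zero_zero_ne_one_one_iff, ofReal_ne_zero] at h
  rw [phi_pauli, pauli_posDef_iff]
  have det_phi :
      t ^ 2 - (((16 * t - 9 * x) / 25) ^ 2 + (12 * (t + x) / 25) ^ 2 + (3 * y / 5) ^ 2) =
        9 / 25 * (t ^ 2 - x ^ 2 - y ^ 2 - z ^ 2 + z ^ 2) := by
    ring
  rcases h with ⟨ht, hr⟩ | hz
  · exact ⟨ht, by nlinarith⟩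
  · have : 0 < z ^ 2 := by positivity
    exact ⟨by nlinarith, by nlinarith⟩

theorem posDef_phi_pow_four {X : Matrix (Fin 2) (Fin 2) ℂ} (hX : X.PosSemidef) (hX0 : X ≠ 0) :
    ((phi ^ 4) X).PosDef := by
  have hW := posSemidef_phi (posSemidef_phi hX)
  obtain ⟨t, x, y, z, rfl⟩ := hX.isHermitian.exists_eq_pauli
  have ht : 0 < t := by
    refine lt_of_le_of_ne ((pauli_posSemidef_iff t x y z).mp hX).1 fun h => hX0 ?_
    rw [← hX.trace_eq_zero_iff, trace_pauli, ← h]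
    simp
  simp only [Module.End.pow_apply, Function.iterate_succ_apply', Function.iterate_zero_apply]
  rw [phi_pauli, phi_pauli] at hW ⊢
  obtain h | h : t + x ≠ 0 ∨ 41 * t - 9 * x ≠ 0 := by
    by_contra! h
    linarith
  · refine posDef_phi_of_posSemidef (posSemidef_phi hW) (Or.inl ?_)
    refine posDef_phi_of_posSemidef hW (Or.inr ?_)
    rw [pauli_zero_zero_ne_one_one_iff, ofReal_ne_zero]
    contrapose! h
    linarith
  · refine posDef_phi_of_posSemidef (posSemidef_phi hW) (Or.inr ?_)
    rw [phi_pauli, pauli_zero_zero_ne_one_one_iff, ofReal_ne_zero]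
    contrapose! h
    linarith

theorem phi_pow_three_pauli_one_neg_one :
    (phi ^ 3) (pauli (1 : ℝ) (-1 : ℝ) (0 : ℝ) (0 : ℝ)) =
      pauli (1 : ℝ) (337 / 625 : ℝ) (384 / 625 : ℝ) (72 / 125 : ℝ) := by
  simp only [Module.End.pow_apply, Function.iterate_succ_apply', Function.iterate_zero_apply]
  rw [phi_pauli, phi_pauli, phi_pauli]
  congr 1 <;> norm_num

/-- There is a positive linear map on `M_2(ℂ)` which is primitive with
primitivity index exactly `4`: `Φ^4` is strictly positive but `Φ^3` is not. -/
theorem exists_m2_primitive_index_eq_four :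
    ∃ Φ : Module.End ℂ (Matrix (Fin 2) (Fin 2) ℂ),
      (∀ X : Matrix (Fin 2) (Fin 2) ℂ, X.PosSemidef → (Φ X).PosSemidef) ∧
      (∀ X : Matrix (Fin 2) (Fin 2) ℂ, X.PosSemidef → X ≠ 0 → ((Φ ^ 4) X).PosDef) ∧
      ¬ (∀ X : Matrix (Fin 2) (Fin 2) ℂ, X.PosSemidef → X ≠ 0 → ((Φ ^ 3) X).PosDef) := by
  refine ⟨phi, fun _ => posSemidef_phi, fun _ => posDef_phi_pow_four, fun h => ?_⟩
  have hX₀ := (pauli_posSemidef_iff 1 (-1) 0 0).mpr (by norm_num)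
  have hX₀ne : pauli (1 : ℝ) (-1 : ℝ) (0 : ℝ) (0 : ℝ) ≠ 0 := fun h0 => by
    simpa [pauli] using congrFun (congrFun h0 0) 0
  have hsing := h _ hX₀ hX₀ne
  rw [phi_pow_three_pauli_one_neg_one, pauli_posDef_iff] at hsing
  norm_num at hsing
end

section
/- Let Φ : M_2(ℂ) → M_2(ℂ) be a completely positive map, i.e., there exist finitely many matrices A_1, …, A_m ∈ M_2(ℂ) with Φ(X) = Σ_{i=1}^m A_i X A_i* for all X. Suppose there exists an integer k ≥ 1 such that Φ^k maps every nonzero positive semidefinite 2×2 matrix to a positive definite matrix (i.e., Φ is primitive). Then Φ^3 maps every nonzero positive semidefinite 2×2 matrix to a positive definite matrix. -/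
/-
If `Φ³ X` is singular for some `X ⪰ 0`, `X ≠ 0`, then so are `X`, `Φ X` and `Φ² X`, since
primitivity makes `Φ` preserve positive definiteness. Hence `Φʲ X = uⱼ uⱼ*` for `j ≤ 3`, and every
Kraus operator maps the line through `uⱼ` into the line through `uⱼ₊₁`. In dimension two this
extends to an infinite chain of lines respected by all `Aᵢ`: if two of `u₀, u₁, u₂` are parallel the
chain repeats periodically, and otherwise all `Aᵢ` are multiples of one matrix `M`, which carries
the chain `Mʲ u₀`. Along such a chain `Φⁿ X` stays rank one for every `n`, contradicting `Φᵏ X ≻ 0`.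
-/

open Matrix
open scoped ComplexOrder

namespace KrausMap

def MapsToLine {R n ι : Type*} [Semiring R] [Fintype n] (A : ι → Matrix n n R) (x y : n → R) :
    Prop :=
  ∀ i, ∃ c : R, A i *ᵥ x = c • y

section Kraus

variable {𝕜 : Type*} [RCLike 𝕜] {n ι : Type*} [Fintype n] [Fintype ι]

lemma posSemidef_kraus_sum (A : ι → Matrix n n 𝕜) {X : Matrix n n 𝕜} (hX : X.PosSemidef) :
    (∑ i, A i * X * (A i)ᴴ).PosSemidef :=
  posSemidef_sum _ fun i _ => hX.mul_mul_conjTranspose_same (A i)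

lemma dotProduct_kraus_sum_mulVec (A : ι → Matrix n n 𝕜) (Z : Matrix n n 𝕜) (y : n → 𝕜) :
    star y ⬝ᵥ ((∑ i, A i * Z * (A i)ᴴ) *ᵥ y) =
      ∑ i, star ((A i)ᴴ *ᵥ y) ⬝ᵥ (Z *ᵥ ((A i)ᴴ *ᵥ y)) := by
  simp only [sum_mulVec, dotProduct_sum, ← mulVec_mulVec, dotProduct_mulVec, star_mulVec,
    conjTranspose_conjTranspose]

lemma posDef_kraus_sum (A : ι → Matrix n n 𝕜) {Y Z : Matrix n n 𝕜} (hY : Y.PosDef)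
    (hZ : (∑ i, A i * Z * (A i)ᴴ).PosDef) : (∑ i, A i * Y * (A i)ᴴ).PosDef := by
  refine PosDef.of_dotProduct_mulVec_pos (posSemidef_kraus_sum A hY.posSemidef).isHermitian
    fun y hy => ?_
  refine ((posSemidef_kraus_sum A hY.posSemidef).dotProduct_mulVec_nonneg y).lt_of_ne' ?_
  intro h0
  rw [dotProduct_kraus_sum_mulVec, Fintype.sum_eq_zero_iff_of_nonneg
    fun i => hY.posSemidef.dotProduct_mulVec_nonneg _] at h0
  have hker : ∀ i, (A i)ᴴ *ᵥ y = 0 := fun i => by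
    by_contra hi
    exact (hY.dotProduct_mulVec_pos hi).ne' (congrFun h0 i)
  have := hZ.dotProduct_mulVec_pos hy
  simp [dotProduct_kraus_sum_mulVec, hker] at this

lemma kraus_sum_vecMulVec (A : ι → Matrix n n 𝕜) (w : n → 𝕜) :
    ∑ i, A i * vecMulVec w (star w) * (A i)ᴴ = ∑ i, vecMulVec (A i *ᵥ w) (star (A i *ᵥ w)) := by
  simp only [mul_vecMulVec, vecMulVec_mul, star_mulVec]

lemma not_posDef_smul_vecMulVec [Nontrivial n] [DecidableEq n] (c : 𝕜) (u : n → 𝕜) :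
    ¬ (c • vecMulVec u (star u)).PosDef := fun h => by
  simpa [det_smul, det_vecMulVec] using h.det_pos

end Kraus

section Iterate

variable {𝕜 : Type*} [RCLike 𝕜] {n ι : Type*} [Fintype n] [Fintype ι]
  {Φ : Module.End 𝕜 (Matrix n n 𝕜)} {A : ι → Matrix n n 𝕜}

lemma MapsToLine.exists_kraus_sum_eq_smul {x y : n → 𝕜} (h : MapsToLine A x y) :
    ∃ c : 𝕜, ∑ i, A i * vecMulVec x (star x) * (A i)ᴴ = c • vecMulVec y (star y) := by
  choose c hc using h
  refine ⟨∑ i, star (c i) * c i, ?_⟩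
  simp only [kraus_sum_vecMulVec, hc, star_smul, smul_vecMulVec, vecMulVec_smul,
    smul_smul, Finset.sum_smul]

lemma posSemidef_pow_apply (hΦ : ∀ X, Φ X = ∑ i, A i * X * (A i)ᴴ) {X : Matrix n n 𝕜}
    (hX : X.PosSemidef) (N : ℕ) : ((Φ ^ N) X).PosSemidef := by
  induction N with
  | zero => simpa using hX
  | succ N ih => rw [pow_succ', Module.End.mul_apply, hΦ]; exact posSemidef_kraus_sum A ih

lemma posDef_pow_apply (hΦ : ∀ X, Φ X = ∑ i, A i * X * (A i)ᴴ) {Y Z : Matrix n n 𝕜}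
    (hZ : (Φ Z).PosDef) (hY : Y.PosDef) (N : ℕ) : ((Φ ^ N) Y).PosDef := by
  rw [hΦ] at hZ
  induction N with
  | zero => simpa using hY
  | succ N ih => rw [pow_succ', Module.End.mul_apply, hΦ]; exact posDef_kraus_sum A ih hZ

lemma pow_apply_vecMulVec_eq_smul (hΦ : ∀ X, Φ X = ∑ i, A i * X * (A i)ᴴ) {v : ℕ → n → 𝕜}
    (hv : ∀ j, MapsToLine A (v j) (v (j + 1))) (N : ℕ) :
    ∃ c : 𝕜, (Φ ^ N) (vecMulVec (v 0) (star (v 0))) = c • vecMulVec (v N) (star (v N)) := by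
  induction N with
  | zero => exact ⟨1, by simp⟩
  | succ N ih =>
    obtain ⟨c, hc⟩ := ih
    obtain ⟨d, hd⟩ := (hv N).exists_kraus_sum_eq_smul
    refine ⟨c * d, ?_⟩
    rw [pow_succ', Module.End.mul_apply, hc, map_smul, hΦ, hd, smul_smul]

end Iterate

section Wedge

variable {K : Type*} [Field K]

def wedge (x y : Fin 2 → K) : K := x 0 * y 1 - x 1 * y 0

lemma wedge_self (x : Fin 2 → K) : wedge x x = 0 := by
  rw [wedge]; ring

lemma wedge_smul_add_smul (x y z : Fin 2 → K) (α β : K) :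
    wedge x (α • y + β • z) = α * wedge x y + β * wedge x z := by
  simp only [wedge, Pi.add_apply, Pi.smul_apply, smul_eq_mul]; ring

lemma exists_eq_smul_of_wedge_eq_zero {x y : Fin 2 → K} (hx : x ≠ 0) (h : wedge x y = 0) :
    ∃ c : K, y = c • x := by
  rw [wedge] at h
  rcases Fin.exists_fin_two.mp (Function.ne_iff.mp hx) with h0 | h1
  · refine ⟨y 0 / x 0, funext fun q => ?_⟩
    fin_cases q <;> simp only [Fin.zero_eta, Fin.mk_one, Pi.smul_apply, smul_eq_mul] <;>
      field_simp [show x 0 ≠ 0 from h0]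
    linear_combination h
  · refine ⟨y 1 / x 1, funext fun q => ?_⟩
    fin_cases q <;> simp only [Fin.zero_eta, Fin.mk_one, Pi.smul_apply, smul_eq_mul] <;>
      field_simp [show x 1 ≠ 0 from h1]
    linear_combination -h

lemma exists_eq_smul_add_smul_of_wedge_ne_zero {x y : Fin 2 → K} (h : wedge x y ≠ 0)
    (z : Fin 2 → K) : ∃ α β : K, z = α • x + β • y := by
  refine ⟨(z 0 * y 1 - z 1 * y 0) / wedge x y, (x 0 * z 1 - x 1 * z 0) / wedge x y,
    funext <| Fin.forall_fin_two.mpr ⟨?_, ?_⟩⟩ <;>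
    simp only [Pi.add_apply, Pi.smul_apply, smul_eq_mul] <;> field_simp <;> simp only [wedge] <;>
    ring

lemma eq_and_eq_of_smul_add_smul_eq {x y : Fin 2 → K} (h : wedge x y ≠ 0) {α β γ δ : K}
    (he : α • x + β • y = γ • x + δ • y) : α = γ ∧ β = δ := by
  have e0 : α * x 0 + β * y 0 = γ * x 0 + δ * y 0 := congrFun he 0
  have e1 : α * x 1 + β * y 1 = γ * x 1 + δ * y 1 := congrFun he 1
  unfold wedge at h
  refine ⟨sub_eq_zero.mp <| (mul_eq_zero.mp ?_).resolve_right h,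
    sub_eq_zero.mp <| (mul_eq_zero.mp ?_).resolve_right h⟩
  · linear_combination y 1 * e0 - y 0 * e1
  · linear_combination x 0 * e1 - x 1 * e0

lemma eq_of_mulVec_eq_of_wedge_ne_zero {B C : Matrix (Fin 2) (Fin 2) K} {x y : Fin 2 → K}
    (h : wedge x y ≠ 0) (hx : B *ᵥ x = C *ᵥ x) (hy : B *ᵥ y = C *ᵥ y) : B = C := by
  ext p q
  have ex := congrFun hx p
  have ey := congrFun hy p
  simp only [mulVec, dotProduct, Fin.sum_univ_two] at ex ey
  refine (mul_left_inj' h).mp ?_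
  fin_cases q <;> simp only [wedge, Fin.zero_eta, Fin.mk_one]
  · linear_combination y 1 * ex - x 1 * ey
  · linear_combination x 0 * ey - y 0 * ex

end Wedge

section Chains

variable {K : Type*} [Field K] {ι : Type*}

lemma MapsToLine.of_eq_smul {n : Type*} [Fintype n] {A : ι → Matrix n n K} {x y z : n → K}
    (h : MapsToLine A x y) {c : K} (hy : y = c • z) : MapsToLine A x z := fun i => by
  obtain ⟨d, hd⟩ := h i
  exact ⟨d * c, by rw [hd, hy, smul_smul]⟩

/-- Each `A i` is determined by its action on the basis `u₀, u₁`, and expanding `u₂` in this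
basis shows that this action depends on `i` only through the scalar `r i` with
`A i *ᵥ u₂ = r i • u₃`. -/
lemma exists_forall_eq_smul_of_wedge_ne_zero {A : ι → Matrix (Fin 2) (Fin 2) K}
    {u₀ u₁ u₂ u₃ : Fin 2 → K} (h01 : wedge u₀ u₁ ≠ 0) (h02 : wedge u₀ u₂ ≠ 0)
    (h12 : wedge u₁ u₂ ≠ 0) (hA₀ : MapsToLine A u₀ u₁) (hA₁ : MapsToLine A u₁ u₂)
    (hA₂ : MapsToLine A u₂ u₃) : ∃ M, ∀ i, ∃ a : K, A i = a • M := by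
  choose p hp using hA₀
  choose q hq using hA₁
  choose r hr using hA₂
  obtain ⟨α, β, hu₂⟩ := exists_eq_smul_add_smul_of_wedge_ne_zero h01 u₂
  obtain ⟨s, t, hu₃⟩ := exists_eq_smul_add_smul_of_wedge_ne_zero h12 u₃
  have hα : α ≠ 0 := by
    rintro rfl
    exact h12 (by rw [hu₂, wedge_smul_add_smul, wedge_self]; ring)
  have hβ : β ≠ 0 := by
    rintro rfl
    exact h02 (by rw [hu₂, wedge_smul_add_smul, wedge_self]; ring)
  have hcoef : ∀ i, p i = r i * (s / α) ∧ q i = r i * (t / β) := fun i => by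
    have h : (α * p i) • u₁ + (β * q i) • u₂ = (r i * s) • u₁ + (r i * t) • u₂ := by
      calc _ = A i *ᵥ (α • u₀ + β • u₁) := by
            rw [mulVec_add, mulVec_smul, mulVec_smul, hp, hq, smul_smul, smul_smul]
        _ = _ := by rw [← hu₂, hr, hu₃, smul_add, smul_smul, smul_smul]
    obtain ⟨h₁, h₂⟩ := eq_and_eq_of_smul_add_smul_eq h12 h
    exact ⟨by field_simp; linear_combination h₁, by field_simp; linear_combination h₂⟩
  by_cases hr0 : ∃ j, r j ≠ 0
  · obtain ⟨j, hj⟩ := hr0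
    refine ⟨A j, fun i => ⟨r i / r j, eq_of_mulVec_eq_of_wedge_ne_zero h01 ?_ ?_⟩⟩
    · rw [smul_mulVec, hp, hp, smul_smul, (hcoef i).1, (hcoef j).1]
      field_simp
    · rw [smul_mulVec, hq, hq, smul_smul, (hcoef i).2, (hcoef j).2]
      field_simp
  · push Not at hr0
    refine ⟨0, fun i => ⟨0, eq_of_mulVec_eq_of_wedge_ne_zero h01 ?_ ?_⟩⟩ <;>
      simp [hp, hq, hcoef, hr0]

lemma exists_mapsToLine_seq_of_eq_smul {n : Type*} [Fintype n] {A : ι → Matrix n n K}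
    {u : ℕ → n → K} {a b : ℕ} (hab : a < b) (hu : ∀ j < b, MapsToLine A (u j) (u (j + 1)))
    {c : K} (hba : u b = c • u a) :
    ∃ v : ℕ → n → K, v 0 = u a ∧ ∀ j, MapsToLine A (v j) (v (j + 1)) := by
  refine ⟨fun j => u (a + j % (b - a)), by simp, fun j => ?_⟩
  have hj : j % (b - a) < b - a := Nat.mod_lt j (by omega)
  have hstep := hu (a + j % (b - a)) (by omega)
  simp only [← Nat.mod_add_mod j (b - a) 1]
  rcases (show j % (b - a) + 1 ≤ b - a by omega).lt_or_eq with h | h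
  · rwa [Nat.mod_eq_of_lt h, ← add_assoc]
  · rw [h, Nat.mod_self, add_zero]
    exact hstep.of_eq_smul (by rw [show a + j % (b - a) + 1 = b by omega, hba])

lemma mapsToLine_pow_mulVec {n : Type*} [Fintype n] [DecidableEq n] {A : ι → Matrix n n K}
    {M : Matrix n n K} (hM : ∀ i, ∃ a : K, A i = a • M) (x : n → K) (j : ℕ) :
    MapsToLine A ((M ^ j) *ᵥ x) ((M ^ (j + 1)) *ᵥ x) := fun i => by
  obtain ⟨a, ha⟩ := hM i
  exact ⟨a, by rw [ha, smul_mulVec, mulVec_mulVec, ← pow_succ']⟩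

lemma exists_mapsToLine_seq_of_three {A : ι → Matrix (Fin 2) (Fin 2) K} {u : ℕ → Fin 2 → K}
    (hu : ∀ j < 3, MapsToLine A (u j) (u (j + 1))) :
    ∃ a ≤ 1, ∃ v : ℕ → Fin 2 → K, v 0 = u a ∧ ∀ j, MapsToLine A (v j) (v (j + 1)) := by
  by_cases hper : ∃ a b, a < b ∧ b ≤ 2 ∧ ∃ c : K, u b = c • u a
  · obtain ⟨a, b, hab, hb, c, hc⟩ := hper
    exact ⟨a, by omega, exists_mapsToLine_seq_of_eq_smul hab (fun j hj => hu j (by omega)) hc⟩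
  push Not at hper
  by_cases h0 : u 0 = 0
  · exact ⟨0, zero_le_one, fun _ => 0, h0.symm, fun _ _ => ⟨0, by simp⟩⟩
  have hne : ∀ a ≤ 2, u a ≠ 0 := fun a ha hua => by
    rcases Nat.eq_zero_or_pos a with rfl | hpos
    · exact h0 hua
    · exact hper (a - 1) a (by omega) ha 0 (by rw [zero_smul, hua])
  have hw : ∀ a b, a < b → b ≤ 2 → wedge (u a) (u b) ≠ 0 := fun a b hab hb h => by
    obtain ⟨c, hc⟩ := exists_eq_smul_of_wedge_eq_zero (hne a (by omega)) h
    exact hper a b hab hb c hc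
  obtain ⟨M, hM⟩ := exists_forall_eq_smul_of_wedge_ne_zero (hw 0 1 (by omega) (by omega))
    (hw 0 2 (by omega) le_rfl) (hw 1 2 (by omega) le_rfl) (hu 0 (by omega)) (hu 1 (by omega))
    (hu 2 (by omega))
  exact ⟨0, zero_le_one, fun j => (M ^ j) *ᵥ u 0, by simp, mapsToLine_pow_mulVec hM (u 0)⟩

end Chains

section TwoByTwo

variable {𝕜 : Type*} [RCLike 𝕜]

lemma dotProduct_eq_zero_of_vecMulVec_eq_sum {n ι : Type*} [Fintype n] [Fintype ι]
    {w y : n → 𝕜} {z : ι → n → 𝕜}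
    (h : vecMulVec w (star w) = ∑ i, vecMulVec (z i) (star (z i))) (hy : y ⬝ᵥ w = 0) (i : ι) :
    y ⬝ᵥ z i = 0 := by
  have hform : ∀ v : n → 𝕜, y ⬝ᵥ (vecMulVec v (star v) *ᵥ star y) = (y ⬝ᵥ v) * star (y ⬝ᵥ v) :=
    fun v => by
      rw [vecMulVec_mulVec, op_smul_eq_smul, dotProduct_smul, star_dotProduct_star, smul_eq_mul,
        mul_comm]
  have hsum := congrArg (fun M => y ⬝ᵥ (M *ᵥ star y)) h
  simp only [sum_mulVec, dotProduct_sum, hform, hy, zero_mul] at hsum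
  have := (Fintype.sum_eq_zero_iff_of_nonneg fun j => mul_star_self_nonneg (y ⬝ᵥ z j)).mp
    hsum.symm
  simpa [RCLike.mul_conj] using congrFun this i

lemma exists_eq_smul_of_vecMulVec_eq_sum {ι : Type*} [Fintype ι] {w : Fin 2 → 𝕜}
    {z : ι → Fin 2 → 𝕜} (h : vecMulVec w (star w) = ∑ i, vecMulVec (z i) (star (z i)))
    (i : ι) : ∃ c : 𝕜, z i = c • w := by
  by_cases hw : w = 0
  · refine ⟨0, ?_⟩
    rw [zero_smul, ← dotProduct_star_self_eq_zero]
    exact dotProduct_eq_zero_of_vecMulVec_eq_sum h (by simp [hw]) i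
  · have hperp : ∀ v, ![-w 1, w 0] ⬝ᵥ v = wedge w v := fun v => by
      simp [dotProduct, wedge]
      ring
    refine exists_eq_smul_of_wedge_eq_zero hw ?_
    rw [← hperp]
    exact dotProduct_eq_zero_of_vecMulVec_eq_sum h (by rw [hperp, wedge_self]) i

lemma smul_eq_vecMulVec_of_det_eq_zero {X : Matrix (Fin 2) (Fin 2) 𝕜} (hX : X.IsHermitian)
    (hdet : X.det = 0) (i : Fin 2) :
    X i i • X = vecMulVec (fun p => X p i) (star fun p => X p i) := by
  rw [det_fin_two] at hdet
  ext p q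
  simp only [Matrix.smul_apply, smul_eq_mul, vecMulVec_apply, Pi.star_apply, hX.apply]
  fin_cases i <;> fin_cases p <;> fin_cases q <;>
    simp only [Fin.zero_eta, Fin.mk_one] <;> grind

lemma exists_eq_vecMulVec_of_not_posDef {X : Matrix (Fin 2) (Fin 2) 𝕜} (hX : X.PosSemidef)
    (hX' : ¬ X.PosDef) : ∃ u : Fin 2 → 𝕜, X = vecMulVec u (star u) := by
  have hdet : X.det = 0 := by_contra fun h => hX' (hX.posDef_iff_det_ne_zero.mpr h)
  by_cases hX0 : X = 0
  · exact ⟨0, by simp [hX0]⟩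
  obtain ⟨i, hi⟩ : ∃ i, X i i ≠ 0 := by
    by_contra! h
    exact hX0 (hX.trace_eq_zero_iff.mp (by simp [trace, h]))
  obtain ⟨r, hr, hri⟩ := RCLike.pos_iff_exists_ofReal.mp (hX.diag_nonneg.lt_of_ne' hi)
  refine ⟨((√r)⁻¹ : ℝ) • fun p => X p i, ?_⟩
  rw [star_smul, smul_vecMulVec, vecMulVec_smul, ← smul_eq_vecMulVec_of_det_eq_zero hX.1 hdet i,
    ← hri, ← RCLike.real_smul_eq_coe_smul, smul_smul, smul_smul, star_trivial, ← mul_inv,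
    Real.mul_self_sqrt hr.le, inv_mul_cancel₀ hr.ne', one_smul]

lemma mapsToLine_of_kraus_sum_eq {ι : Type*} [Fintype ι] {A : ι → Matrix (Fin 2) (Fin 2) 𝕜}
    {x y : Fin 2 → 𝕜} (h : ∑ i, A i * vecMulVec x (star x) * (A i)ᴴ = vecMulVec y (star y)) :
    MapsToLine A x y :=
  exists_eq_smul_of_vecMulVec_eq_sum (by rw [← h, kraus_sum_vecMulVec])

end TwoByTwo

end KrausMap

open KrausMap

/-- A primitive completely positive map on `M_2(ℂ)` (given by a Kraus
representation `Φ(X) = Σ_i A_i X A_i*`) has primitivity index at most `3`. -/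
theorem cp_primitivity_index_le_three
    (Φ : Module.End ℂ (Matrix (Fin 2) (Fin 2) ℂ))
    (m : ℕ) (A : Fin m → Matrix (Fin 2) (Fin 2) ℂ)
    (hΦ : ∀ X : Matrix (Fin 2) (Fin 2) ℂ, Φ X = ∑ i, A i * X * (A i)ᴴ)
    (hprim : ∃ k : ℕ, 1 ≤ k ∧
      ∀ X : Matrix (Fin 2) (Fin 2) ℂ, X.PosSemidef → X ≠ 0 → ((Φ ^ k) X).PosDef) :
    ∀ X : Matrix (Fin 2) (Fin 2) ℂ, X.PosSemidef → X ≠ 0 → ((Φ ^ 3) X).PosDef := by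
  intro X hX hX0
  obtain ⟨k, hk1, hk⟩ := hprim
  have hΦ1 : (Φ ((Φ ^ (k - 1)) 1)).PosDef := by
    rw [← Module.End.mul_apply, ← pow_succ', Nat.sub_add_cancel hk1]
    exact hk 1 PosSemidef.one one_ne_zero
  have hmono : ∀ {j N : ℕ}, j ≤ N → ((Φ ^ j) X).PosDef → ((Φ ^ N) X).PosDef := fun hjN hj => by
    rw [← Nat.sub_add_cancel hjN, pow_add, Module.End.mul_apply]
    exact posDef_pow_apply hΦ hΦ1 hj _
  by_contra h3
  have hrank : ∀ j ≤ 3, ∃ u, (Φ ^ j) X = vecMulVec u (star u) := fun j hj =>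
    exists_eq_vecMulVec_of_not_posDef (posSemidef_pow_apply hΦ hX j) fun h => h3 (hmono hj h)
  choose! u hu using hrank
  have hchain : ∀ j < 3, MapsToLine A (u j) (u (j + 1)) := fun j hj =>
    mapsToLine_of_kraus_sum_eq (by
      rw [← hΦ, ← hu j hj.le, ← hu (j + 1) hj, pow_succ', Module.End.mul_apply])
  obtain ⟨a, ha, v, hv0, hv⟩ := exists_mapsToLine_seq_of_three hchain
  obtain ⟨c, hc⟩ := pow_apply_vecMulVec_eq_smul hΦ hv (k - a)
  refine not_posDef_smul_vecMulVec c (v (k - a)) ?_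
  rw [← hc, hv0, ← hu a (by omega), ← Module.End.mul_apply, ← pow_add,
    Nat.sub_add_cancel (by omega)]
  exact hk X hX hX0
end

section
/- There exist finitely many matrices A_1, …, A_m ∈ M_2(ℂ) with Σ_{i=1}^m A_i* A_i = I (so that Φ(X) = Σ_{i=1}^m A_i X A_i* is a quantum channel) such that Φ^3 maps every nonzero positive semidefinite 2×2 matrix to a positive definite matrix, but Φ^2 does not (i.e., Φ is primitive with primitivity index equal to 3). -/
/-!
With Kraus operators `E₀₁` and `v e₀ᵀ`, where `v = (3/5, 4/5)`, the channel is
`Φ X = X₁₁ e₀e₀* + X₀₀ vv*`. It maps into the matrices `α e₀e₀* + β vv*`, acting on the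
coefficients by `(α, β) ↦ (16β/25, α + 9β/25)`; since `e₀` and `v` are independent, such a matrix
is positive definite iff `α, β > 0`. After three steps both coefficients are positive combinations
of `X₀₀, X₁₁ ≥ 0`, which do not both vanish, whereas `Φ² (e₁e₁*) = vv*` is singular.
-/

open Matrix
open scoped ComplexOrder

def krausMap {R n ι : Type*} [CommSemiring R] [Star R] [Fintype n] [DecidableEq n] [Fintype ι]
    (A : ι → Matrix n n R) : Module.End R (Matrix n n R) :=
  ∑ i, LinearMap.mulLeft R (A i) ∘ₗ LinearMap.mulRight R (A i)ᴴ

theorem krausMap_apply {R n ι : Type*} [CommSemiring R] [Star R] [Fintype n] [DecidableEq n]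
    [Fintype ι] (A : ι → Matrix n n R) (X : Matrix n n R) :
    krausMap A X = ∑ i, A i * X * (A i)ᴴ := by
  simp [krausMap, LinearMap.sum_apply, mul_assoc]

theorem Matrix.PosSemidef.sum_mul_diag_pos {𝕜 n : Type*} [RCLike 𝕜] [Fintype n]
    {X : Matrix n n 𝕜} (hX : X.PosSemidef) (hX0 : X ≠ 0) {w : n → 𝕜} (hw : ∀ i, 0 < w i) :
    0 < ∑ i, w i * X i i := by
  obtain ⟨i, hi⟩ : ∃ i, X i i ≠ 0 := by
    by_contra! h
    exact hX0 (hX.trace_eq_zero_iff.1 (Finset.sum_eq_zero fun i _ => h i))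
  exact Finset.sum_pos' (fun j _ => mul_nonneg (hw j).le hX.diag_nonneg)
    ⟨i, Finset.mem_univ _, mul_pos (hw i) (hX.diag_nonneg.lt_of_ne' hi)⟩

noncomputable def qubitKraus : Fin 2 → Matrix (Fin 2) (Fin 2) ℂ :=
  ![!![0, 1; 0, 0], !![3/5, 0; 4/5, 0]]

noncomputable def qubitChannel : Module.End ℂ (Matrix (Fin 2) (Fin 2) ℂ) := krausMap qubitKraus

noncomputable def qubitFrame : Matrix (Fin 2) (Fin 2) ℂ := !![1, 0; 3/5, 4/5]

/-- `α e₀e₀* + β vv*`, the rows of `qubitFrame` being `e₀` and `v`. -/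
noncomputable def qubitImage (α β : ℂ) : Matrix (Fin 2) (Fin 2) ℂ :=
  qubitFrameᴴ * diagonal ![α, β] * qubitFrame

theorem sum_conjTranspose_mul_qubitKraus : ∑ i, (qubitKraus i)ᴴ * qubitKraus i = 1 := by
  ext i j
  fin_cases i <;> fin_cases j <;>
    norm_num [qubitKraus, Fin.sum_univ_two, mul_apply, Complex.conj_ofNat]

theorem qubitChannel_apply (X : Matrix (Fin 2) (Fin 2) ℂ) :
    qubitChannel X = qubitImage (X 1 1) (X 0 0) := by
  ext i j
  fin_cases i <;> fin_cases j <;>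
    simp [qubitChannel, krausMap_apply, qubitKraus, qubitImage, qubitFrame, Fin.sum_univ_two,
      mul_apply, vecMul, dotProduct, Complex.conj_ofNat] <;> ring

theorem qubitChannel_qubitImage (α β : ℂ) :
    qubitChannel (qubitImage α β) = qubitImage (16/25 * β) (α + 9/25 * β) := by
  rw [qubitChannel_apply]
  congr 1 <;>
    simp [qubitImage, qubitFrame, mul_apply, Fin.sum_univ_two, Complex.conj_ofNat] <;> ring

theorem qubitChannel_pow_two_apply (X : Matrix (Fin 2) (Fin 2) ℂ) :
    (qubitChannel ^ 2) X = qubitImage (16/25 * X 0 0) (X 1 1 + 9/25 * X 0 0) := by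
  rw [sq, Module.End.mul_apply, qubitChannel_apply X, qubitChannel_qubitImage]

theorem qubitChannel_pow_three_apply (X : Matrix (Fin 2) (Fin 2) ℂ) :
    (qubitChannel ^ 3) X =
      qubitImage (144/625 * X 0 0 + 16/25 * X 1 1) (481/625 * X 0 0 + 9/25 * X 1 1) := by
  rw [pow_succ', Module.End.mul_apply, qubitChannel_pow_two_apply, qubitChannel_qubitImage]
  congr 1 <;> ring

theorem det_qubitImage (α β : ℂ) : (qubitImage α β).det = 16/25 * α * β := by
  simp [qubitImage, qubitFrame, det_fin_two_of]
  ring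

theorem posDef_qubitImage {α β : ℂ} (hα : 0 < α) (hβ : 0 < β) : (qubitImage α β).PosDef := by
  refine PosDef.conjTranspose_mul_mul_same ?_ (mulVec_injective_iff_isUnit.2 ?_)
  · simp [Fin.forall_fin_two, hα, hβ]
  · rw [isUnit_iff_isUnit_det]
    simp [qubitFrame, det_fin_two_of]

theorem not_posDef_qubitImage_zero_left (β : ℂ) : ¬ (qubitImage 0 β).PosDef := fun h =>
  h.det_pos.ne' (by simp [det_qubitImage])

/-- There is a quantum channel on `M_2(ℂ)`, i.e. a map
`Φ(X) = Σ_i A_i X A_i*` with `Σ_i A_i* A_i = 1`, which is primitive with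
primitivity index exactly `3`: `Φ^3` is strictly positive but `Φ^2` is not. -/
theorem exists_qubit_channel_index_eq_three :
    ∃ m : ℕ, ∃ A : Fin m → Matrix (Fin 2) (Fin 2) ℂ,
      (∑ i, (A i)ᴴ * A i = 1) ∧
      ∃ Φ : Module.End ℂ (Matrix (Fin 2) (Fin 2) ℂ),
        (∀ X : Matrix (Fin 2) (Fin 2) ℂ, Φ X = ∑ i, A i * X * (A i)ᴴ) ∧
        (∀ X : Matrix (Fin 2) (Fin 2) ℂ, X.PosSemidef → X ≠ 0 → ((Φ ^ 3) X).PosDef) ∧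
        ¬ (∀ X : Matrix (Fin 2) (Fin 2) ℂ, X.PosSemidef → X ≠ 0 → ((Φ ^ 2) X).PosDef) := by
  refine ⟨2, qubitKraus, sum_conjTranspose_mul_qubitKraus, qubitChannel, krausMap_apply _,
    fun X hX hX0 => ?_, fun h => ?_⟩
  · have hpos : ∀ p q : ℂ, 0 < p → 0 < q → 0 < p * X 0 0 + q * X 1 1 := fun p q hp hq => by
      simpa [Fin.sum_univ_two] using
        hX.sum_mul_diag_pos hX0 (w := ![p, q]) (Fin.forall_fin_two.2 ⟨hp, hq⟩)
    rw [qubitChannel_pow_three_apply]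
    exact posDef_qubitImage (hpos _ _ (by norm_num) (by norm_num))
      (hpos _ _ (by norm_num) (by norm_num))
  · have hE : (diagonal ![0, 1] : Matrix (Fin 2) (Fin 2) ℂ).PosSemidef := by
      simp [Fin.forall_fin_two]
    have hE0 : (diagonal ![0, 1] : Matrix (Fin 2) (Fin 2) ℂ) ≠ 0 := fun h0 => by
      simpa using congr_fun₂ h0 1 1
    have hΦE : (qubitChannel ^ 2) (diagonal ![0, 1]) = qubitImage 0 1 := by
      simp [qubitChannel_pow_two_apply]
    exact not_posDef_qubitImage_zero_left 1 (hΦE ▸ h _ hE hE0)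
end
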